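/- arXiv:1206.0755 — 3 statements merged into one kernel-verified Lean document; each statement's English description precedes it below -/
import Mathlib

section
/- Let G be a simple graph on a finite vertex set V and let H = Σ_{Q ∈ 𝒞} h_Q be a sum, over the set 𝒞 of cliques Q of G, of Hermitian matrices h_Q each supported on Q, with [h_Q, h_{Q'}] = 0 for all cliques Q, Q'. Then ρ = exp(H) / Tr(exp(H)) is a positive definite density matrix and (ρ, G) is a quantum Markov network. -/
open Matrix
open scoped ComplexOrder

noncomputable section
set_option linter.unusedSectionVars false
set_option maxHeartbeats 1000000

/-- Operators on the multipartite system with sites `V` and local dimensions `d`. -/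
abbrev Op (V : Type) (d : V → ℕ) : Type :=
  Matrix ((v : V) → Fin (d v)) ((v : V) → Fin (d v)) ℂ

/-- `M` is supported on the set of sites `S`: it vanishes on pairs of configurations that
differ outside `S`, and its entries depend only on the restrictions of the configurations
to `S` (it acts as the identity outside `S`). -/
def SupportedOn {V : Type} (d : V → ℕ) (S : Finset V) (M : Op V d) : Prop :=
  (∀ x y, (∃ v, v ∉ S ∧ x v ≠ y v) → M x y = 0) ∧
  (∀ x y x' y', (∀ v ∈ S, x v = x' v) → (∀ v ∈ S, y v = y' v) →
    (∀ v, v ∉ S → x v = y v) → (∀ v, v ∉ S → x' v = y' v) → M x y = M x' y')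

/-- Combine a configuration on the complement of `T` with a configuration on `T`. -/
def mergeConfig {V : Type} [DecidableEq V] (d : V → ℕ) (T : Finset V)
    (x : (v : {v : V // v ∉ T}) → Fin (d v.1)) (z : (v : {v : V // v ∈ T}) → Fin (d v.1)) :
    (v : V) → Fin (d v) :=
  fun v => if h : v ∈ T then z ⟨v, h⟩ else x ⟨v, h⟩

/-- Partial trace over the sites in `T`. -/
def ptrace {V : Type} [Fintype V] [DecidableEq V] (d : V → ℕ) (T : Finset V) (M : Op V d) :
    Matrix ((v : {v : V // v ∉ T}) → Fin (d v.1)) ((v : {v : V // v ∉ T}) → Fin (d v.1)) ℂ :=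
  fun x y => ∑ z : (v : {v : V // v ∈ T}) → Fin (d v.1),
    M (mergeConfig d T x z) (mergeConfig d T y z)

/-- Von Neumann entropy `S(σ) = −Σ_i λ_i log λ_i` (junk value `0` if `σ` is not Hermitian). -/
def vnEntropy {n : Type} [Fintype n] [DecidableEq n] (σ : Matrix n n ℂ) : ℝ :=
  if hσ : σ.IsHermitian then -∑ i, hσ.eigenvalues i * Real.log (hσ.eigenvalues i) else 0

/-- The reduced state `ρ_X` on the sites in `X`. -/
def marg {V : Type} [Fintype V] [DecidableEq V] (d : V → ℕ) (ρ : Op V d) (X : Finset V) :=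
  ptrace d Xᶜ ρ

/-- Conditional mutual information `I(A:C|B) = S(ρ_{AB}) + S(ρ_{BC}) − S(ρ_{ABC}) − S(ρ_B)`. -/
def cmi {V : Type} [Fintype V] [DecidableEq V] (d : V → ℕ) (ρ : Op V d)
    (A B C : Finset V) : ℝ :=
  vnEntropy (marg d ρ (A ∪ B)) + vnEntropy (marg d ρ (B ∪ C))
    - vnEntropy (marg d ρ (A ∪ B ∪ C)) - vnEntropy (marg d ρ B)

/-- `B` shields `A` from `C` in the graph `G`: every walk from `A` to `C` meets `B`. -/
def Shields {V : Type} (G : SimpleGraph V) (A B C : Finset V) : Prop :=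
  ∀ a ∈ A, ∀ c ∈ C, ∀ w : G.Walk a c, ∃ b ∈ B, b ∈ w.support

/-- `(ρ, G)` is a quantum Markov network: `I(A:C|B) = 0` whenever `B` shields `A` from `C`. -/
def IsMarkovNetwork {V : Type} [Fintype V] [DecidableEq V] (d : V → ℕ)
    (G : SimpleGraph V) (ρ : Op V d) : Prop :=
  ∀ A B C : Finset V, Disjoint A B → Disjoint A C → Disjoint B C →
    Shields G A B C → cmi d ρ A B C = 0

/-- A clique of `G`: a nonempty set of vertices, any two distinct ones adjacent. -/
def IsCliqueF {V : Type} (G : SimpleGraph V) (Q : Finset V) : Prop :=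
  Q.Nonempty ∧ G.IsClique (Q : Set V)

/-- `K` is a genuine operator on `X`: supported on `X` with all nontrivial partial traces
over subsets of `X` vanishing. -/
def Genuine {V : Type} [Fintype V] [DecidableEq V] (d : V → ℕ) (X : Finset V)
    (K : Op V d) : Prop :=
  SupportedOn d X K ∧ ∀ Y : Finset V, Y.Nonempty → Y ⊆ X → ptrace d Y K = 0

/-- `K` is the cumulant decomposition of `H`: each `K X` is genuine on `X` and they sum to `H`. -/
def IsCumulantDecomp {V : Type} [Fintype V] [DecidableEq V] (d : V → ℕ)
    (H : Op V d) (K : Finset V → Op V d) : Prop :=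
  (∀ X : Finset V, Genuine d X (K X)) ∧ H = ∑ X : Finset V, K X

/-- `G` contains no triangle. -/
def TriangleFree {V : Type} (G : SimpleGraph V) : Prop :=
  ∀ a b c : V, G.Adj a b → G.Adj a c → G.Adj b c → False

namespace QMN
variable {V : Type} [Fintype V] [DecidableEq V] {d : V → ℕ}
abbrev Cfg (d : V → ℕ) := (v : V) → Fin (d v)
abbrev CfgO (d : V → ℕ) (T : Finset V) := (v : {v : V // v ∉ T}) → Fin (d v.1)
abbrev CfgI (d : V → ℕ) (T : Finset V) := (v : {v : V // v ∈ T}) → Fin (d v.1)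
def resO (T : Finset V) (a : Cfg d) : CfgO d T := fun v => a v.1
def resI (T : Finset V) (a : Cfg d) : CfgI d T := fun v => a v.1
@[simp] lemma resO_merge (T : Finset V) (x : CfgO d T) (z : CfgI d T) :
    resO T (mergeConfig d T x z) = x := by
  funext v; simp [resO, mergeConfig, v.2]
@[simp] lemma resI_merge (T : Finset V) (x : CfgO d T) (z : CfgI d T) :
    resI T (mergeConfig d T x z) = z := by
  funext v; simp [resI, mergeConfig, v.2]
@[simp] lemma merge_res (T : Finset V) (a : Cfg d) :
    mergeConfig d T (resO T a) (resI T a) = a := by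
  funext v; by_cases h : v ∈ T <;> simp [mergeConfig, resO, resI, h]
lemma mergeConfig_mem {T : Finset V} (x : CfgO d T) (z : CfgI d T) {v : V} (h : v ∈ T) :
    mergeConfig d T x z v = z ⟨v, h⟩ := by simp [mergeConfig, h]
lemma mergeConfig_not_mem {T : Finset V} (x : CfgO d T) (z : CfgI d T) {v : V} (h : v ∉ T) :
    mergeConfig d T x z v = x ⟨v, h⟩ := by simp [mergeConfig, h]
def splitCfg (d : V → ℕ) (T : Finset V) : Cfg d ≃ CfgO d T × CfgI d T where
  toFun a := (resO T a, resI T a)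
  invFun p := mergeConfig d T p.1 p.2
  left_inv a := merge_res T a
  right_inv p := by simp
lemma sum_cfg_split (T : Finset V) (f : Cfg d → ℂ) :
    ∑ a : Cfg d, f a = ∑ x : CfgO d T, ∑ z : CfgI d T, f (mergeConfig d T x z) := by
  rw [← Equiv.sum_comp (splitCfg d T).symm f, Fintype.sum_prod_type]
  rfl

/-- `N ⊗ 1` : lift a matrix on the sites outside `T` to the full space. -/
def liftM (T : Finset V) (N : Matrix (CfgO d T) (CfgO d T) ℂ) : Op V d :=
  fun a b => if ∀ v ∈ T, a v = b v then N (resO T a) (resO T b) else 0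

lemma guard_merge_left {T : Finset V} (a : Cfg d) (x : CfgO d T) (z : CfgI d T) :
    (∀ v ∈ T, a v = mergeConfig d T x z v) ↔ resI T a = z := by
  constructor
  · intro h; funext v; rw [resI]; rw [h v.1 v.2, mergeConfig_mem]
  · intro h v hv; rw [mergeConfig_mem _ _ hv, ← h]; rfl

lemma guard_merge_right {T : Finset V} (b : Cfg d) (x : CfgO d T) (z : CfgI d T) :
    (∀ v ∈ T, mergeConfig d T x z v = b v) ↔ z = resI T b := by
  rw [show (z = resI T b) ↔ (resI T b = z) from eq_comm, ← guard_merge_left b x z]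
  exact ⟨fun h v hv => (h v hv).symm, fun h v hv => (h v hv).symm⟩

lemma liftM_apply_right {T : Finset V} (N : Matrix (CfgO d T) (CfgO d T) ℂ)
    (a : Cfg d) (x : CfgO d T) (z : CfgI d T) :
    liftM T N a (mergeConfig d T x z) = if resI T a = z then N (resO T a) x else 0 := by
  rw [liftM]
  by_cases h : resI T a = z
  · rw [if_pos ((guard_merge_left a x z).2 h), if_pos h, resO_merge]
  · rw [if_neg (fun hh => h ((guard_merge_left a x z).1 hh)), if_neg h]

lemma liftM_apply_left {T : Finset V} (N : Matrix (CfgO d T) (CfgO d T) ℂ)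
    (b : Cfg d) (x : CfgO d T) (z : CfgI d T) :
    liftM T N (mergeConfig d T x z) b = if z = resI T b then N x (resO T b) else 0 := by
  rw [liftM]
  by_cases h : z = resI T b
  · rw [if_pos ((guard_merge_right b x z).2 h), if_pos h, resO_merge]
  · rw [if_neg (fun hh => h ((guard_merge_right b x z).1 hh)), if_neg h]

lemma liftM_apply_merge {T : Finset V} (N : Matrix (CfgO d T) (CfgO d T) ℂ)
    (x y : CfgO d T) (z u : CfgI d T) :
    liftM T N (mergeConfig d T x z) (mergeConfig d T y u) = if z = u then N x y else 0 := by
  rw [liftM_apply_left, resI_merge, resO_merge]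

lemma liftM_one (T : Finset V) : liftM T (1 : Matrix (CfgO d T) (CfgO d T) ℂ) = 1 := by
  ext a b
  rw [liftM]
  by_cases h : a = b
  · subst h; rw [if_pos (fun _ _ => rfl), Matrix.one_apply_eq, Matrix.one_apply_eq]
  · by_cases h2 : ∀ v ∈ T, a v = b v
    · rw [if_pos h2, Matrix.one_apply_ne h, Matrix.one_apply_ne]
      intro he
      exact h (funext fun v => by
        by_cases hv : v ∈ T
        · exact h2 v hv
        · exact congrFun he ⟨v, hv⟩)
    · rw [if_neg h2, Matrix.one_apply_ne h]

lemma liftM_mul (T : Finset V) (M N : Matrix (CfgO d T) (CfgO d T) ℂ) :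
    liftM T (M * N) = liftM T M * liftM T N := by
  ext a b
  rw [Matrix.mul_apply, sum_cfg_split T (f := fun w => liftM T M a w * liftM T N w b)]
  have : ∀ (x : CfgO d T) (z : CfgI d T),
      liftM T M a (mergeConfig d T x z) * liftM T N (mergeConfig d T x z) b
      = if z = resI T a then
          (if resI T a = resI T b then M (resO T a) x * N x (resO T b) else 0) else 0 := by
    intro x z
    rw [liftM_apply_right, liftM_apply_left]
    by_cases h1 : resI T a = z
    · subst h1
      by_cases h2 : resI T a = resI T b <;> simp [h2]
    · rw [if_neg h1, zero_mul, if_neg (fun hh => h1 hh.symm)]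
  simp_rw [this, Finset.sum_ite_eq' Finset.univ (resI T a), Finset.mem_univ, if_true]
  by_cases h : resI T a = resI T b
  · have h' : ∀ v ∈ T, a v = b v := fun v hv => congrFun h ⟨v, hv⟩
    rw [liftM, if_pos h', Matrix.mul_apply]
    simp [h]
  · have h' : ¬ ∀ v ∈ T, a v = b v := fun hh => h (funext fun v => hh v.1 v.2)
    rw [liftM, if_neg h']
    simp [h]

lemma liftM_add (T : Finset V) (M N : Matrix (CfgO d T) (CfgO d T) ℂ) :
    liftM T (M + N) = liftM T M + liftM T N := by
  ext a b
  simp only [liftM, Matrix.add_apply]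
  split <;> simp

lemma liftM_smul (T : Finset V) (c : ℂ) (N : Matrix (CfgO d T) (CfgO d T) ℂ) :
    liftM T (c • N) = c • liftM T N := by
  ext a b
  simp only [liftM, Matrix.smul_apply]
  split <;> simp

lemma liftM_sub (T : Finset V) (M N : Matrix (CfgO d T) (CfgO d T) ℂ) :
    liftM T (M - N) = liftM T M - liftM T N := by
  ext a b
  simp only [liftM, Matrix.sub_apply]
  split <;> simp

lemma liftM_conjTranspose (T : Finset V) (N : Matrix (CfgO d T) (CfgO d T) ℂ) :
    liftM T (Nᴴ) = (liftM T N)ᴴ := by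
  ext a b
  show _ = (starRingEnd ℂ) (liftM T N b a)
  by_cases h : ∀ v ∈ T, a v = b v
  · rw [liftM, liftM, if_pos h, if_pos (fun v hv => (h v hv).symm)]
    rfl
  · rw [liftM, liftM, if_neg h, if_neg (fun hh => h (fun v hv => (hh v hv).symm)), map_zero]

/-- liftM as an algebra homomorphism. -/
def liftAlgHom (T : Finset V) : Matrix (CfgO d T) (CfgO d T) ℂ →ₐ[ℂ] Op V d where
  toFun := liftM T
  map_one' := liftM_one T
  map_mul' := liftM_mul T
  map_zero' := by ext a b; simp [liftM]
  map_add' := liftM_add T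
  commutes' := fun c => by
    show liftM T _ = _
    rw [Algebra.algebraMap_eq_smul_one, Algebra.algebraMap_eq_smul_one, liftM_smul, liftM_one]

lemma liftM_continuous (T : Finset V) :
    Continuous (fun N : Matrix (CfgO d T) (CfgO d T) ℂ => liftM T N) := by
  let L : Matrix (CfgO d T) (CfgO d T) ℂ →ₗ[ℂ] Op V d :=
    { toFun := liftM T, map_add' := liftM_add T, map_smul' := liftM_smul T }
  exact L.continuous_of_finiteDimensional

lemma liftM_exp (T : Finset V) (N : Matrix (CfgO d T) (CfgO d T) ℂ) :
    liftM T (NormedSpace.exp N) = NormedSpace.exp (liftM T N) := by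
  letI : SeminormedRing (Op V d) := Matrix.linftyOpSemiNormedRing
  letI : NormedRing (Op V d) := Matrix.linftyOpNormedRing
  letI : NormedAlgebra ℂ (Op V d) := Matrix.linftyOpNormedAlgebra
  letI : SeminormedRing (Matrix (CfgO d T) (CfgO d T) ℂ) := Matrix.linftyOpSemiNormedRing
  letI : NormedRing (Matrix (CfgO d T) (CfgO d T) ℂ) := Matrix.linftyOpNormedRing
  letI : NormedAlgebra ℂ (Matrix (CfgO d T) (CfgO d T) ℂ) := Matrix.linftyOpNormedAlgebra
  exact NormedSpace.map_exp_of_mem_ball (𝕂 := ℂ)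
    (liftAlgHom T : Matrix (CfgO d T) (CfgO d T) ℂ →ₐ[ℂ] Op V d)
    (liftM_continuous T) N (by rw [NormedSpace.expSeries_radius_eq_top ℂ]; exact edist_lt_top _ _)


lemma entry_congr {S : Finset V} {M : Op V d} (hM : SupportedOn d S M)
    {a b a' b' : Cfg d} (ha : ∀ v ∈ S, a v = a' v) (hb : ∀ v ∈ S, b v = b' v)
    (hout : ∀ v ∉ S, (a v = b v ↔ a' v = b' v)) : M a b = M a' b' := by
  by_cases h : ∀ v ∉ S, a v = b v
  · exact hM.2 a b a' b' ha hb h (fun v hv => (hout v hv).1 (h v hv))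
  · push_neg at h
    obtain ⟨v, hv, hne⟩ := h
    rw [hM.1 a b ⟨v, hv, hne⟩, hM.1 a' b' ⟨v, hv, fun he => hne ((hout v hv).2 he)⟩]

lemma SupportedOn.mono {S S' : Finset V} (hSS : S ⊆ S') {M : Op V d}
    (hM : SupportedOn d S M) : SupportedOn d S' M := by
  constructor
  · intro x y ⟨v, hv, hne⟩
    exact hM.1 x y ⟨v, fun h => hv (hSS h), hne⟩
  · intro x y x' y' hx hy hxy hxy'
    refine entry_congr hM (fun v hv => hx v (hSS hv)) (fun v hv => hy v (hSS hv)) ?_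
    intro v hv
    by_cases h' : v ∈ S'
    · constructor
      · intro h; rw [← hx v h', ← hy v h', h]
      · intro h; rw [hx v h', hy v h', h]
    · exact iff_of_true (hxy v h') (hxy' v h')

lemma supportedOn_zero (S : Finset V) : SupportedOn d S (0 : Op V d) :=
  ⟨fun _ _ _ => rfl, fun _ _ _ _ _ _ _ _ => rfl⟩

lemma supportedOn_one (S : Finset V) : SupportedOn d S (1 : Op V d) := by
  constructor
  · intro x y ⟨v, _, hne⟩
    exact Matrix.one_apply_ne (fun h => hne (congrFun h v))
  · intro x y x' y' hx hy hxy hxy'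
    by_cases h : x = y
    · subst h
      have : x' = y' := by
        funext v
        by_cases hv : v ∈ S
        · rw [← hx v hv, hy v hv]
        · exact hxy' v hv
      rw [this, Matrix.one_apply_eq, Matrix.one_apply_eq]
    · have h' : x' ≠ y' := by
        intro he; apply h; funext v
        by_cases hv : v ∈ S
        · rw [hx v hv, hy v hv, he]
        · exact hxy v hv
      rw [Matrix.one_apply_ne h, Matrix.one_apply_ne h']

lemma supportedOn_add {S : Finset V} {M N : Op V d} (hM : SupportedOn d S M)
    (hN : SupportedOn d S N) : SupportedOn d S (M + N) := by
  constructor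
  · intro x y h
    show M x y + N x y = 0
    rw [hM.1 x y h, hN.1 x y h, add_zero]
  · intro x y x' y' hx hy hxy hxy'
    show M x y + N x y = M x' y' + N x' y'
    rw [hM.2 x y x' y' hx hy hxy hxy', hN.2 x y x' y' hx hy hxy hxy']

lemma supportedOn_smul {S : Finset V} {M : Op V d} (c : ℂ) (hM : SupportedOn d S M) :
    SupportedOn d S (c • M) := by
  constructor
  · intro x y h
    show c • M x y = 0
    rw [hM.1 x y h, smul_zero]
  · intro x y x' y' hx hy hxy hxy'
    show c • M x y = c • M x' y'
    rw [hM.2 x y x' y' hx hy hxy hxy']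

open Classical in
lemma supportedOn_mul {S : Finset V} {M N : Op V d} (hM : SupportedOn d S M)
    (hN : SupportedOn d S N) : SupportedOn d S (M * N) := by
  constructor
  · intro x y ⟨v, hv, hne⟩
    rw [Matrix.mul_apply]
    refine Finset.sum_eq_zero fun w _ => ?_
    by_cases hw : x v = w v
    · rw [hN.1 w y ⟨v, hv, fun h => hne (hw.trans h)⟩, mul_zero]
    · rw [hM.1 x w ⟨v, hv, hw⟩, zero_mul]
  · intro x y x' y' hx hy hxy hxy'
    rw [Matrix.mul_apply, Matrix.mul_apply]
    have e1 : ∑ w : Cfg d, M x w * N w y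
        = ∑ w ∈ Finset.univ.filter (fun w : Cfg d => ∀ v ∉ S, w v = x v), M x w * N w y := by
      refine (Finset.sum_filter_of_ne ?_).symm
      intro w _ hne v hv
      by_contra hwv
      exact hne (by rw [hM.1 x w ⟨v, hv, fun h => hwv h.symm⟩, zero_mul])
    have e2 : ∑ w : Cfg d, M x' w * N w y'
        = ∑ w ∈ Finset.univ.filter (fun w : Cfg d => ∀ v ∉ S, w v = x' v), M x' w * N w y' := by
      refine (Finset.sum_filter_of_ne ?_).symm
      intro w _ hne v hv
      by_contra hwv
      exact hne (by rw [hM.1 x' w ⟨v, hv, fun h => hwv h.symm⟩, zero_mul])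
    rw [e1, e2]
    refine Finset.sum_nbij' (fun w => fun v => if v ∈ S then w v else x' v)
      (fun w => fun v => if v ∈ S then w v else x v) ?_ ?_ ?_ ?_ ?_
    · intro w hw
      simp only [Finset.mem_filter, Finset.mem_univ, true_and] at *
      intro v hv; simp [if_neg hv]
    · intro w hw
      simp only [Finset.mem_filter, Finset.mem_univ, true_and] at *
      intro v hv; simp [if_neg hv]
    · intro w hw
      simp only [Finset.mem_filter, Finset.mem_univ, true_and] at hw
      funext v
      by_cases hv : v ∈ S
      · simp [hv]
      · simp [if_neg hv, hw v hv]
    · intro w hw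
      simp only [Finset.mem_filter, Finset.mem_univ, true_and] at hw
      funext v
      by_cases hv : v ∈ S
      · simp [hv]
      · simp [if_neg hv, hw v hv]
    · intro w hw
      simp only [Finset.mem_filter, Finset.mem_univ, true_and] at hw
      congr 1
      · refine entry_congr hM hx (fun v hv => by simp [if_pos hv]) ?_
        intro v hv
        exact iff_of_true (hw v hv).symm (by simp [if_neg hv])
      · refine entry_congr hN (fun v hv => by simp [if_pos hv]) hy ?_
        intro v hv
        refine iff_of_true ((hw v hv).trans (hxy v hv)) (by simp [if_neg hv, hxy' v hv])

lemma supportedOn_star {S : Finset V} {M : Op V d} (hM : SupportedOn d S M) :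
    SupportedOn d S (Mᴴ) := by
  constructor
  · intro x y ⟨v, hv, hne⟩
    show (starRingEnd ℂ) (M y x) = 0
    rw [hM.1 y x ⟨v, hv, fun h => hne h.symm⟩, map_zero]
  · intro x y x' y' hx hy hxy hxy'
    show (starRingEnd ℂ) (M y x) = (starRingEnd ℂ) (M y' x')
    rw [hM.2 y x y' x' hy hx (fun v hv => (hxy v hv).symm) (fun v hv => (hxy' v hv).symm)]

def suppAlg (d : V → ℕ) (S : Finset V) : Subalgebra ℂ (Op V d) where
  carrier := {M | SupportedOn d S M}
  mul_mem' := supportedOn_mul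
  add_mem' := supportedOn_add
  one_mem' := supportedOn_one S
  zero_mem' := supportedOn_zero S
  algebraMap_mem' := fun c => by
    have : (algebraMap ℂ (Op V d)) c = c • (1 : Op V d) := Algebra.algebraMap_eq_smul_one c
    rw [Set.mem_setOf_eq, this]
    exact supportedOn_smul c (supportedOn_one S)

lemma isClosed_suppAlg (S : Finset V) : IsClosed {M : Op V d | SupportedOn d S M} := by
  have hc : ∀ (x y : Cfg d), Continuous (fun M : Op V d => M x y) := fun x y =>
    (continuous_apply y).comp (continuous_apply x)
  have : {M : Op V d | SupportedOn d S M} =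
      (⋂ (x : Cfg d) (y : Cfg d) (_ : ∃ v, v ∉ S ∧ x v ≠ y v), {M : Op V d | M x y = 0}) ∩
      (⋂ (x : Cfg d) (y : Cfg d) (x' : Cfg d) (y' : Cfg d)
        (_ : (∀ v ∈ S, x v = x' v) ∧ (∀ v ∈ S, y v = y' v) ∧ (∀ v, v ∉ S → x v = y v) ∧
          (∀ v, v ∉ S → x' v = y' v)), {M : Op V d | M x y = M x' y'}) := by
    ext M
    simp only [Set.mem_setOf_eq, Set.mem_inter_iff, Set.mem_iInter, SupportedOn]
    constructor
    · rintro ⟨h1, h2⟩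
      exact ⟨fun x y h => h1 x y h, fun x y x' y' ⟨a, b, c, e⟩ => h2 x y x' y' a b c e⟩
    · rintro ⟨h1, h2⟩
      exact ⟨fun x y h => h1 x y h, fun x y x' y' a b c e => h2 x y x' y' ⟨a, b, c, e⟩⟩
  rw [this]
  refine IsClosed.inter ?_ ?_
  · exact isClosed_iInter fun x => isClosed_iInter fun y => isClosed_iInter fun _ =>
      isClosed_eq (hc x y) continuous_const
  · exact isClosed_iInter fun x => isClosed_iInter fun y => isClosed_iInter fun x' =>
      isClosed_iInter fun y' => isClosed_iInter fun _ => isClosed_eq (hc x y) (hc x' y')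

lemma supportedOn_pow {S : Finset V} {M : Op V d} (hM : SupportedOn d S M) (n : ℕ) :
    SupportedOn d S (M ^ n) := by
  induction n with
  | zero => simpa [pow_zero] using supportedOn_one S
  | succ n ih => rw [pow_succ]; exact supportedOn_mul ih hM

lemma supportedOn_exp {S : Finset V} {M : Op V d} (hM : SupportedOn d S M) :
    SupportedOn d S (NormedSpace.exp M) := by
  letI : SeminormedRing (Op V d) := Matrix.linftyOpSemiNormedRing
  letI : NormedRing (Op V d) := Matrix.linftyOpNormedRing
  letI : NormedAlgebra ℂ (Op V d) := Matrix.linftyOpNormedAlgebra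
  have hs : Summable (fun n : ℕ => ((n.factorial : ℂ))⁻¹ • M ^ n) :=
    NormedSpace.expSeries_summable' (𝕂 := ℂ) M
  have ht := hs.hasSum.tendsto_sum_nat
  rw [NormedSpace.exp_eq_tsum ℂ]
  refine (isClosed_suppAlg S).mem_of_tendsto ht ?_
  refine Filter.Eventually.of_forall fun n => ?_
  have : ∀ m : ℕ, SupportedOn d S (((m.factorial : ℂ))⁻¹ • M ^ m) := fun m =>
    supportedOn_smul _ (supportedOn_pow hM m)
  induction n with
  | zero => simpa using supportedOn_zero S
  | succ n ih =>
    rw [Finset.sum_range_succ]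
    exact supportedOn_add ih (this n)

lemma supportedOn_sum {S : Finset V} {ι : Type*} (s : Finset ι) {f : ι → Op V d}
    (hf : ∀ i ∈ s, SupportedOn d S (f i)) : SupportedOn d S (∑ i ∈ s, f i) := by
  classical
  induction s using Finset.induction_on with
  | empty => simpa using supportedOn_zero S
  | insert _ _ hne ih =>
    rw [Finset.sum_insert hne]
    exact supportedOn_add (hf _ (Finset.mem_insert_self _ _))
      (ih fun i hi => hf i (Finset.mem_insert_of_mem hi))


end QMN
section P4
open QMN
variable {V : Type} [Fintype V] [DecidableEq V] {d : V → ℕ}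
namespace QMN

lemma sum_indicator_cfgI (T : Finset V) (z₀ : CfgI d T) (f : Cfg d → ℂ) :
    ∑ w : Cfg d, (if resI T w = z₀ then f w else 0)
      = ∑ a : CfgO d T, f (mergeConfig d T a z₀) := by
  rw [sum_cfg_split T (f := fun w => if resI T w = z₀ then f w else 0)]
  refine Finset.sum_congr rfl fun a _ => ?_
  simp_rw [resI_merge]
  rw [Finset.sum_ite_eq' Finset.univ z₀ (fun u => f (mergeConfig d T a u))]
  simp


lemma sum_rot {α β γ : Type*} [Fintype α] [Fintype β] [Fintype γ] (f : α → β → γ → ℂ) :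
    ∑ a, ∑ b, ∑ c, f a b c = ∑ c, ∑ a, ∑ b, f a b c := by
  have h1 : ∑ a, ∑ b, ∑ c, f a b c = ∑ a, ∑ c, ∑ b, f a b c :=
    Finset.sum_congr rfl fun a _ => Finset.sum_comm
  rw [h1, Finset.sum_comm]

lemma liftM_apply' {T : Finset V} (N : Matrix (CfgO d T) (CfgO d T) ℂ) (a b : Cfg d) :
    liftM T N a b = if resI T a = resI T b then N (resO T a) (resO T b) else 0 := by
  rw [liftM]
  congr 1
  rw [eq_iff_iff]
  constructor
  · intro h; funext v; exact h v.1 v.2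
  · intro h v hv; exact congrFun h ⟨v, hv⟩

lemma ptrace_smul (T : Finset V) (c : ℂ) (M : Op V d) :
    ptrace d T (c • M) = c • ptrace d T M := by
  ext x y
  show (∑ z, (c • M) _ _) = c • (∑ z, M _ _)
  rw [Finset.smul_sum]
  rfl

lemma ptrace_conjTranspose (T : Finset V) (M : Op V d) :
    ptrace d T (Mᴴ) = (ptrace d T M)ᴴ := by
  ext x y
  show (∑ z, (Mᴴ) _ _) = (starRingEnd ℂ) (∑ z, M _ _)
  rw [map_sum]
  rfl

lemma ptrace_isHermitian (T : Finset V) {M : Op V d} (h : M.IsHermitian) :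
    (ptrace d T M).IsHermitian := by
  show _ = _
  rw [← ptrace_conjTranspose, h.eq]

lemma liftM_isHermitian (T : Finset V) {N : Matrix (CfgO d T) (CfgO d T) ℂ}
    (h : N.IsHermitian) : (liftM T N).IsHermitian := by
  show _ = _
  rw [← liftM_conjTranspose, h.eq]

lemma dot_expand {n : Type} [Fintype n] (M : Matrix n n ℂ) (x : n → ℂ) :
    dotProduct (star x) (M *ᵥ x) = ∑ a, ∑ b, (starRingEnd ℂ) (x a) * (M a b * x b) := by
  simp [dotProduct, Matrix.mulVec, Finset.mul_sum]

lemma ptrace_posDef (hd : ∀ v, 1 ≤ d v) (T : Finset V) {M : Op V d} (hM : M.PosDef) :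
    (ptrace d T M).PosDef := by
  classical
  refine Matrix.PosDef.of_dotProduct_mulVec_pos (ptrace_isHermitian T hM.1) ?_
  intro x hx
  set vz : CfgI d T → Cfg d → ℂ :=
    fun z w => if resI T w = z then x (resO T w) else 0 with hvz
  have key : ∀ z : CfgI d T, dotProduct (star (vz z)) (M *ᵥ (vz z)) =
      ∑ a : CfgO d T, ∑ b : CfgO d T, (starRingEnd ℂ) (x a) *
        (M (mergeConfig d T a z) (mergeConfig d T b z) * x b) := by
    intro z
    rw [dot_expand]
    have h1 : ∀ w : Cfg d, ∑ b : Cfg d, (starRingEnd ℂ) (vz z w) * (M w b * vz z b)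
        = if resI T w = z then
            ((starRingEnd ℂ) (x (resO T w)) *
              ∑ b : CfgO d T, M w (mergeConfig d T b z) * x b) else 0 := by
      intro w
      by_cases h : resI T w = z
      · rw [if_pos h]
        have : ∀ b : Cfg d, (starRingEnd ℂ) (vz z w) * (M w b * vz z b)
            = (starRingEnd ℂ) (x (resO T w)) *
              (if resI T b = z then M w b * x (resO T b) else 0) := by
          intro b
          simp only [hvz, if_pos h]
          by_cases hb : resI T b = z <;> simp [hb, mul_comm]
        simp_rw [this]
        rw [← Finset.mul_sum, sum_indicator_cfgI T z (f := fun b => M w b * x (resO T b))]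
        simp_rw [resO_merge]
      · rw [if_neg h]
        refine Finset.sum_eq_zero fun b _ => ?_
        simp [hvz, if_neg h]
    simp_rw [h1]
    rw [sum_indicator_cfgI T z]
    refine Finset.sum_congr rfl fun a _ => ?_
    rw [resO_merge, Finset.mul_sum]
  have expand : dotProduct (star x) ((ptrace d T M) *ᵥ x)
      = ∑ z : CfgI d T, dotProduct (star (vz z)) (M *ᵥ (vz z)) := by
    simp_rw [key]
    rw [dot_expand]
    have h2 : ∀ (a b : CfgO d T), (starRingEnd ℂ) (x a) * (ptrace d T M a b * x b)
        = ∑ z : CfgI d T, (starRingEnd ℂ) (x a) *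
            (M (mergeConfig d T a z) (mergeConfig d T b z) * x b) := by
      intro a b
      show (starRingEnd ℂ) (x a) * ((∑ z, M _ _) * x b) = _
      rw [Finset.sum_mul, Finset.mul_sum]
    simp_rw [h2]
    exact sum_rot _
  rw [expand]
  have nonneg : ∀ z ∈ Finset.univ, (0:ℂ) ≤ dotProduct (star (vz z)) (M *ᵥ (vz z)) :=
    fun z _ => hM.posSemidef.dotProduct_mulVec_nonneg (vz z)
  obtain ⟨a, ha⟩ : ∃ a, x a ≠ 0 := by
    by_contra h
    push_neg at h
    exact hx (funext h)
  set z₀ : CfgI d T := fun v => ⟨0, hd v.1⟩ with hz₀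
  have hvz0 : vz z₀ ≠ 0 := by
    intro h
    apply ha
    have := congrFun h (mergeConfig d T a z₀)
    simpa [hvz] using this
  refine Finset.sum_pos' nonneg ⟨z₀, Finset.mem_univ _, hM.dotProduct_mulVec_pos hvz0⟩

lemma liftM_posDef (T : Finset V) {N : Matrix (CfgO d T) (CfgO d T) ℂ} (hN : N.PosDef) :
    (liftM T N).PosDef := by
  classical
  refine Matrix.PosDef.of_dotProduct_mulVec_pos (liftM_isHermitian T hN.1) ?_
  intro ξ hξ
  set sl : CfgI d T → CfgO d T → ℂ := fun z a => ξ (mergeConfig d T a z) with hsl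
  have expand : dotProduct (star ξ) ((liftM T N) *ᵥ ξ)
      = ∑ z : CfgI d T, dotProduct (star (sl z)) (N *ᵥ (sl z)) := by
    rw [dot_expand]
    rw [sum_cfg_split T (f := fun w => ∑ b : Cfg d, (starRingEnd ℂ) (ξ w) * (liftM T N w b * ξ b))]
    rw [Finset.sum_comm]
    refine Finset.sum_congr rfl fun z _ => ?_
    rw [dot_expand]
    refine Finset.sum_congr rfl fun a _ => ?_
    have h1 : ∀ b : Cfg d, (starRingEnd ℂ) (ξ (mergeConfig d T a z)) *
        (liftM T N (mergeConfig d T a z) b * ξ b)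
        = if resI T b = z then (starRingEnd ℂ) (sl z a) * (N a (resO T b) * ξ b) else 0 := by
      intro b
      rw [liftM_apply', resI_merge, resO_merge]
      by_cases hb : resI T b = z
      · rw [if_pos hb, if_pos hb.symm]
      · rw [if_neg hb, if_neg (fun h => hb h.symm), zero_mul, mul_zero]
    simp_rw [h1]
    rw [sum_indicator_cfgI T z (f := fun b => (starRingEnd ℂ) (sl z a) * (N a (resO T b) * ξ b))]
    simp_rw [resO_merge]
    rfl
  rw [expand]
  have nonneg : ∀ z ∈ Finset.univ, (0:ℂ) ≤ dotProduct (star (sl z)) (N *ᵥ (sl z)) :=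
    fun z _ => hN.posSemidef.dotProduct_mulVec_nonneg (sl z)
  obtain ⟨w, hw⟩ : ∃ w, ξ w ≠ 0 := by
    by_contra h
    push_neg at h
    exact hξ (funext h)
  have hsl0 : sl (resI T w) ≠ 0 := by
    intro h
    apply hw
    have := congrFun h (resO T w)
    simpa [hsl] using this
  exact Finset.sum_pos' nonneg ⟨resI T w, Finset.mem_univ _, hN.dotProduct_mulVec_pos hsl0⟩

lemma trace_ptrace_mul (T : Finset V) (ρ : Op V d) (N : Matrix (CfgO d T) (CfgO d T) ℂ) :
    (ptrace d T ρ * N).trace = (ρ * liftM T N).trace := by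
  classical
  rw [Matrix.trace, Matrix.trace]
  simp only [Matrix.diag_apply, Matrix.mul_apply]
  -- RHS
  have hR : ∀ a : Cfg d, ∑ b : Cfg d, ρ a b * liftM T N b a
      = ∑ y : CfgO d T, ρ a (mergeConfig d T y (resI T a)) * N y (resO T a) := by
    intro a
    have h1 : ∀ b : Cfg d, ρ a b * liftM T N b a
        = if resI T b = resI T a then ρ a b * N (resO T b) (resO T a) else 0 := by
      intro b
      rw [liftM_apply']
      split <;> simp
    simp_rw [h1]
    rw [sum_indicator_cfgI T (resI T a) (f := fun b => ρ a b * N (resO T b) (resO T a))]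
    simp_rw [resO_merge]
  simp_rw [hR]
  rw [sum_cfg_split T (f := fun a => ∑ y : CfgO d T,
    ρ a (mergeConfig d T y (resI T a)) * N y (resO T a))]
  simp_rw [resI_merge, resO_merge]
  refine Finset.sum_congr rfl fun x _ => ?_
  rw [Finset.sum_comm]
  refine Finset.sum_congr rfl fun y _ => ?_
  show (∑ z, ρ _ _) * N y x = _
  rw [Finset.sum_mul]

lemma trace_ptrace (T : Finset V) (ρ : Op V d) : (ptrace d T ρ).trace = ρ.trace := by
  have := trace_ptrace_mul T ρ 1
  rwa [mul_one, liftM_one, mul_one] at this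

end QMN
end P4
section P5
open QMN
variable {V : Type} [Fintype V] [DecidableEq V] {d : V → ℕ}
namespace QMN

/-- blockwise-swap trick : product of sums of functions with disjoint dependency. -/
lemma split_sum {J : Type} [Fintype J] [DecidableEq J] (π : J → Type) [∀ j, Fintype (π j)]
    [∀ j, DecidableEq (π j)] (P Q : Finset J) (hPQ : Disjoint P Q)
    (F G : ((j : J) → π j) → ℂ)
    (hF : ∀ z w, (∀ j ∈ P, z j = w j) → F z = F w)
    (hG : ∀ z w, (∀ j ∈ Q, z j = w j) → G z = G w) :
    (∑ z, F z) * (∑ z, G z) = (Fintype.card ((j : J) → π j)) • ∑ z, F z * G z := by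
  classical
  set c : ((j : J) → π j) → ((j : J) → π j) → ((j : J) → π j) :=
    fun z w j => if j ∈ P then z j else w j with hc
  set e : (((j : J) → π j) × ((j : J) → π j)) ≃ (((j : J) → π j) × ((j : J) → π j)) :=
    { toFun := fun p => (c p.1 p.2, c p.2 p.1)
      invFun := fun p => (c p.1 p.2, c p.2 p.1)
      left_inv := fun p => by
        ext j
        · show c (c p.1 p.2) (c p.2 p.1) j = p.1 j
          by_cases h : j ∈ P <;> simp [hc, h]
        · show c (c p.2 p.1) (c p.1 p.2) j = p.2 j
          by_cases h : j ∈ P <;> simp [hc, h]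
      right_inv := fun p => by
        ext j
        · show c (c p.1 p.2) (c p.2 p.1) j = p.1 j
          by_cases h : j ∈ P <;> simp [hc, h]
        · show c (c p.2 p.1) (c p.1 p.2) j = p.2 j
          by_cases h : j ∈ P <;> simp [hc, h] } with he
  have key : ∀ p : (((j : J) → π j) × ((j : J) → π j)),
      F (e p).1 * G (e p).1 = F p.1 * G p.2 := by
    intro p
    congr 1
    · refine hF _ _ fun j hj => ?_
      show (if j ∈ P then p.1 j else p.2 j) = p.1 j
      rw [if_pos hj]
    · refine hG _ _ fun j hj => ?_
      have hjP : j ∉ P := fun h => (Finset.disjoint_left.mp hPQ) h hj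
      show (if j ∈ P then p.1 j else p.2 j) = p.2 j
      rw [if_neg hjP]
  calc (∑ z, F z) * (∑ z, G z)
      = ∑ p : (((j : J) → π j) × ((j : J) → π j)), F p.1 * G p.2 := by
        rw [Fintype.sum_prod_type, Finset.sum_mul]
        exact Finset.sum_congr rfl fun z _ => Finset.mul_sum _ _ _
    _ = ∑ p : (((j : J) → π j) × ((j : J) → π j)), F (e p).1 * G (e p).1 := by
        exact (Finset.sum_congr rfl fun p _ => (key p)).symm
    _ = ∑ p : (((j : J) → π j) × ((j : J) → π j)), F p.1 * G p.1 :=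
        Equiv.sum_comp e (fun p => F p.1 * G p.1)
    _ = (Fintype.card ((j : J) → π j)) • ∑ z, F z * G z := by
        rw [Fintype.sum_prod_type, Finset.smul_sum]
        exact Finset.sum_congr rfl fun z _ => by
          simp [Finset.sum_const, Finset.card_univ]

/-- The key product lemma : partial trace is multiplicative (up to a dimension factor) on
operators whose supports do not overlap inside the traced region. -/
lemma ptrace_mul (T S1 S2 : Finset V) {M N : Op V d}
    (hM : SupportedOn d S1 M) (hN : SupportedOn d S2 N) (hdisj : S1 ∩ S2 ∩ T = ∅) :
    (Fintype.card (CfgI d T)) • ptrace d T (M * N) = ptrace d T M * ptrace d T N := by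
  classical
  ext x y
  have collapse : ∀ z : CfgI d T,
      (M * N) (mergeConfig d T x z) (mergeConfig d T y z)
      = ∑ w : CfgO d T, M (mergeConfig d T x z) (mergeConfig d T w z) *
          N (mergeConfig d T w z) (mergeConfig d T y z) := by
    intro z
    rw [Matrix.mul_apply]
    rw [sum_cfg_split T (f := fun a => M (mergeConfig d T x z) a * N a (mergeConfig d T y z))]
    refine Finset.sum_congr rfl fun w _ => ?_
    rw [Finset.sum_eq_single z]
    · intro u _ hu
      obtain ⟨j, hj⟩ : ∃ j, u j ≠ z j := by
        by_contra h
        push_neg at h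
        exact hu (funext h)
      by_cases hjS : j.1 ∈ S1
      · have hjS2 : j.1 ∉ S2 := by
          intro h2
          have : j.1 ∈ S1 ∩ S2 ∩ T := by
            simp [Finset.mem_inter, hjS, h2, j.2]
          rw [hdisj] at this
          exact absurd this (Finset.notMem_empty _)
        rw [hN.1 _ _ ⟨j.1, hjS2, by
          rw [mergeConfig_mem _ _ j.2, mergeConfig_mem _ _ j.2]
          exact fun h => hj h⟩, mul_zero]
      · rw [hM.1 _ _ ⟨j.1, hjS, by
          rw [mergeConfig_mem _ _ j.2, mergeConfig_mem _ _ j.2]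
          exact fun h => hj (h.symm)⟩, zero_mul]
    · intro h
      exact absurd (Finset.mem_univ z) h
  show (Fintype.card (CfgI d T)) • (∑ z, (M * N) _ _) = _
  simp_rw [collapse]
  rw [Matrix.mul_apply]
  have hR : ∀ w : CfgO d T, ptrace d T M x w * ptrace d T N w y
      = (Fintype.card (CfgI d T)) • ∑ z : CfgI d T,
          M (mergeConfig d T x z) (mergeConfig d T w z) *
            N (mergeConfig d T w z) (mergeConfig d T y z) := by
    intro w
    show (∑ z, M _ _) * (∑ z, N _ _) = _
    refine split_sum (fun j : {v : V // v ∈ T} => Fin (d j.1))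
      (Finset.univ.filter (fun j : {v : V // v ∈ T} => j.1 ∈ S1))
      (Finset.univ.filter (fun j : {v : V // v ∈ T} => j.1 ∈ S2)) ?_ _ _ ?_ ?_
    · rw [Finset.disjoint_left]
      intro j hj1 hj2
      simp only [Finset.mem_filter, Finset.mem_univ, true_and] at hj1 hj2
      have : j.1 ∈ S1 ∩ S2 ∩ T := by simp [Finset.mem_inter, hj1, hj2, j.2]
      rw [hdisj] at this
      exact absurd this (Finset.notMem_empty _)
    · intro z z' hz
      refine entry_congr hM ?_ ?_ ?_
      · intro v hv
        by_cases hvT : v ∈ T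
        · have h' := hz ⟨v, hvT⟩ (by simp [hv])
          simp [mergeConfig_mem _ _ hvT, h']
        · simp [mergeConfig_not_mem _ _ hvT]
      · intro v hv
        by_cases hvT : v ∈ T
        · have h' := hz ⟨v, hvT⟩ (by simp [hv])
          simp [mergeConfig_mem _ _ hvT, h']
        · simp [mergeConfig_not_mem _ _ hvT]
      · intro v hv
        by_cases hvT : v ∈ T
        · simp [mergeConfig_mem _ _ hvT]
        · simp [mergeConfig_not_mem _ _ hvT]
    · intro z z' hz
      refine entry_congr hN ?_ ?_ ?_
      · intro v hv
        by_cases hvT : v ∈ T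
        · have h' := hz ⟨v, hvT⟩ (by simp [hv])
          simp [mergeConfig_mem _ _ hvT, h']
        · simp [mergeConfig_not_mem _ _ hvT]
      · intro v hv
        by_cases hvT : v ∈ T
        · have h' := hz ⟨v, hvT⟩ (by simp [hv])
          simp [mergeConfig_mem _ _ hvT, h']
        · simp [mergeConfig_not_mem _ _ hvT]
      · intro v hv
        by_cases hvT : v ∈ T
        · simp [mergeConfig_mem _ _ hvT]
        · simp [mergeConfig_not_mem _ _ hvT]
  simp_rw [hR]
  rw [Finset.smul_sum]
  simp_rw [Finset.smul_sum]
  exact Finset.sum_comm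

end QMN
end P5
section P6
open QMN
variable {V : Type} [Fintype V] [DecidableEq V] {d : V → ℕ}
namespace QMN

def splitCfgI (T1 T2 : Finset V) (h : T1 ⊆ T2) :
    CfgI d T2 ≃ CfgI d T1 × CfgI d (T2 \ T1) where
  toFun z := (fun v => z ⟨v.1, h v.2⟩, fun v => z ⟨v.1, (Finset.mem_sdiff.mp v.2).1⟩)
  invFun p := fun v => if hv : v.1 ∈ T1 then p.1 ⟨v.1, hv⟩
    else p.2 ⟨v.1, Finset.mem_sdiff.mpr ⟨v.2, hv⟩⟩
  left_inv z := by
    funext v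
    by_cases hv : v.1 ∈ T1 <;> simp [hv]
  right_inv p := by
    refine Prod.ext ?_ ?_
    · funext v
      simp [v.2]
    · funext v
      simp [(Finset.mem_sdiff.mp v.2).2]

lemma card_cfgI (U : Finset V) : Fintype.card (CfgI d U) = ∏ v ∈ U, d v := by
  rw [Fintype.card_pi]
  simp_rw [Fintype.card_fin]
  exact Finset.prod_coe_sort U (fun v => d v)

lemma liftM_ptrace_mono (T1 T2 S : Finset V) (h12 : T1 ⊆ T2) {M : Op V d}
    (hM : SupportedOn d S M) (hS : (T2 \ T1) ∩ S = ∅) :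
    liftM T2 (ptrace d T2 M)
      = (Fintype.card (CfgI d (T2 \ T1))) • liftM T1 (ptrace d T1 M) := by
  classical
  have hnotS : ∀ v ∈ T2, v ∉ T1 → v ∉ S := by
    intro v hv2 hv1 hvS
    have : v ∈ (T2 \ T1) ∩ S := Finset.mem_inter.mpr ⟨Finset.mem_sdiff.mpr ⟨hv2, hv1⟩, hvS⟩
    rw [hS] at this
    exact absurd this (Finset.notMem_empty _)
  set e := splitCfgI (d := d) T1 T2 h12 with he
  ext a b
  show liftM T2 (ptrace d T2 M) a b
      = (Fintype.card (CfgI d (T2 \ T1))) • liftM T1 (ptrace d T1 M) a b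
  by_cases h2 : ∀ v ∈ T2, a v = b v
  · have h1 : ∀ v ∈ T1, a v = b v := fun v hv => h2 v (h12 hv)
    rw [liftM, liftM, if_pos h2, if_pos h1]
    show (∑ z : CfgI d T2, M _ _) = _ • (∑ u : CfgI d T1, M _ _)
    rw [← Equiv.sum_comp e.symm
      (fun z => M (mergeConfig d T2 (resO T2 a) z) (mergeConfig d T2 (resO T2 b) z)),
      Fintype.sum_prod_type]
    have key : ∀ (u : CfgI d T1) (s : CfgI d (T2 \ T1)),
        M (mergeConfig d T2 (resO T2 a) (e.symm (u, s)))
          (mergeConfig d T2 (resO T2 b) (e.symm (u, s)))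
        = M (mergeConfig d T1 (resO T1 a) u) (mergeConfig d T1 (resO T1 b) u) := by
      intro u s
      have hval : ∀ (c : Cfg d) (v : V) (hv : v ∈ T2),
          mergeConfig d T2 (resO T2 c) (e.symm (u, s)) v
          = if hv1 : v ∈ T1 then u ⟨v, hv1⟩
            else s ⟨v, Finset.mem_sdiff.mpr ⟨hv, hv1⟩⟩ := by
        intro c v hv
        rw [mergeConfig_mem _ _ hv]
        rfl
      have hval' : ∀ (c : Cfg d) (v : V) (hv : v ∉ T2),
          mergeConfig d T2 (resO T2 c) (e.symm (u, s)) v = c v := by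
        intro c v hv
        rw [mergeConfig_not_mem _ _ hv]
        rfl
      refine entry_congr hM ?_ ?_ ?_
      · intro v hvS
        by_cases hv1 : v ∈ T1
        · rw [hval a v (h12 hv1), dif_pos hv1, mergeConfig_mem _ _ hv1]
        · by_cases hv2 : v ∈ T2
          · exact absurd hvS (hnotS v hv2 hv1)
          · rw [hval' a v hv2, mergeConfig_not_mem _ _ hv1]
            rfl
      · intro v hvS
        by_cases hv1 : v ∈ T1
        · rw [hval b v (h12 hv1), dif_pos hv1, mergeConfig_mem _ _ hv1]
        · by_cases hv2 : v ∈ T2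
          · exact absurd hvS (hnotS v hv2 hv1)
          · rw [hval' b v hv2, mergeConfig_not_mem _ _ hv1]
            rfl
      · intro v hvS
        by_cases hv1 : v ∈ T1
        · rw [hval a v (h12 hv1), hval b v (h12 hv1), dif_pos hv1,
            mergeConfig_mem _ _ hv1, mergeConfig_mem _ _ hv1]
        · by_cases hv2 : v ∈ T2
          · rw [hval a v hv2, hval b v hv2, dif_neg hv1,
              mergeConfig_not_mem _ _ hv1, mergeConfig_not_mem _ _ hv1]
            exact iff_of_true rfl (h2 v hv2)
          · rw [hval' a v hv2, hval' b v hv2,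
              mergeConfig_not_mem _ _ hv1, mergeConfig_not_mem _ _ hv1]
            exact Iff.rfl
    simp_rw [key]
    rw [Finset.smul_sum]
    refine Finset.sum_congr rfl fun u _ => ?_
    rw [Finset.sum_const, Finset.card_univ]
  · rw [liftM, if_neg h2]
    by_cases h1 : ∀ v ∈ T1, a v = b v
    · push_neg at h2
      obtain ⟨v, hv2, hne⟩ := h2
      have hv1 : v ∉ T1 := fun h => hne (h1 v h)
      have hvS : v ∉ S := hnotS v hv2 hv1
      rw [liftM, if_pos h1]
      have : (∑ u : CfgI d T1, M (mergeConfig d T1 (resO T1 a) u)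
          (mergeConfig d T1 (resO T1 b) u)) = 0 := by
        refine Finset.sum_eq_zero fun u _ => ?_
        refine hM.1 _ _ ⟨v, hvS, ?_⟩
        rw [mergeConfig_not_mem _ _ hv1, mergeConfig_not_mem _ _ hv1]
        exact hne
      show (0:ℂ) = _ • (∑ u : CfgI d T1, M _ _)
      rw [this, smul_zero]
    · rw [liftM, if_neg h1, smul_zero]

end QMN
end P6
section P7
open Matrix
namespace QMN
variable {n : Type} [Fintype n] [DecidableEq n]

def vnEntropy' {n : Type} [Fintype n] [DecidableEq n] (σ : Matrix n n ℂ) : ℝ :=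
  if hσ : σ.IsHermitian then -∑ i, hσ.eigenvalues i * Real.log (hσ.eigenvalues i) else 0

/-- The matrix logarithm via the continuous functional calculus. -/
def mlog (σ : Matrix n n ℂ) : Matrix n n ℂ := cfc Real.log σ

/-- units element from the eigenvector unitary. -/
def eigU {A : Matrix n n ℂ} (hA : A.IsHermitian) : (Matrix n n ℂ)ˣ :=
  ⟨(hA.eigenvectorUnitary : Matrix n n ℂ), star (hA.eigenvectorUnitary : Matrix n n ℂ),
    (Unitary.mem_iff.mp hA.eigenvectorUnitary.2).2,
    (Unitary.mem_iff.mp hA.eigenvectorUnitary.2).1⟩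

lemma conj_mul {A : Matrix n n ℂ} (hA : A.IsHermitian) (P Q : Matrix n n ℂ) :
    ((hA.eigenvectorUnitary : Matrix n n ℂ) * P * star (hA.eigenvectorUnitary : Matrix n n ℂ))
      * ((hA.eigenvectorUnitary : Matrix n n ℂ) * Q *
        star (hA.eigenvectorUnitary : Matrix n n ℂ))
    = (hA.eigenvectorUnitary : Matrix n n ℂ) * (P * Q) *
        star (hA.eigenvectorUnitary : Matrix n n ℂ) := by
  have hU1 : star (hA.eigenvectorUnitary : Matrix n n ℂ) *
      (hA.eigenvectorUnitary : Matrix n n ℂ) = 1 :=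
    (Unitary.mem_iff.mp hA.eigenvectorUnitary.2).1
  have hcancel : ∀ X : Matrix n n ℂ, star (hA.eigenvectorUnitary : Matrix n n ℂ) *
      ((hA.eigenvectorUnitary : Matrix n n ℂ) * X) = X := fun X => by
    rw [← Matrix.mul_assoc, hU1, Matrix.one_mul]
  simp only [Matrix.mul_assoc]
  rw [hcancel]

lemma conj_diag_eq {A : Matrix n n ℂ} (hA : A.IsHermitian) :
    diagonal ((RCLike.ofReal : ℝ → ℂ) ∘ hA.eigenvalues)
      = star (hA.eigenvectorUnitary : Matrix n n ℂ) * A *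
        (hA.eigenvectorUnitary : Matrix n n ℂ) := by
  have hU1 : star (hA.eigenvectorUnitary : Matrix n n ℂ) *
      (hA.eigenvectorUnitary : Matrix n n ℂ) = 1 :=
    (Unitary.mem_iff.mp hA.eigenvectorUnitary.2).1
  have hcancel : ∀ X : Matrix n n ℂ, star (hA.eigenvectorUnitary : Matrix n n ℂ) *
      ((hA.eigenvectorUnitary : Matrix n n ℂ) * X) = X := fun X => by
    rw [← Matrix.mul_assoc, hU1, Matrix.one_mul]
  have h2 := congrArg (fun X => star (hA.eigenvectorUnitary : Matrix n n ℂ) * X *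
    (hA.eigenvectorUnitary : Matrix n n ℂ)) hA.spectral_theorem
  simp only [Unitary.conjStarAlgAut_apply] at h2
  rw [h2]
  simp only [Matrix.mul_assoc]
  rw [hcancel]
  rw [hU1, Matrix.mul_one]

lemma exp_unitary_conj_diag {A : Matrix n n ℂ} (hA : A.IsHermitian) (v : n → ℝ) :
    NormedSpace.exp ((hA.eigenvectorUnitary : Matrix n n ℂ) *
        diagonal ((RCLike.ofReal : ℝ → ℂ) ∘ v) * star (hA.eigenvectorUnitary : Matrix n n ℂ))
    = (hA.eigenvectorUnitary : Matrix n n ℂ) * diagonal ((RCLike.ofReal : ℝ → ℂ) ∘ Real.exp ∘ v) *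
        star (hA.eigenvectorUnitary : Matrix n n ℂ) := by
  have h := Matrix.exp_units_conj (eigU hA) (diagonal ((RCLike.ofReal : ℝ → ℂ) ∘ v))
  have hval : ((eigU hA : (Matrix n n ℂ)ˣ) : Matrix n n ℂ)
      = (hA.eigenvectorUnitary : Matrix n n ℂ) := rfl
  have hval' : (((eigU hA)⁻¹ : (Matrix n n ℂ)ˣ) : Matrix n n ℂ)
      = star (hA.eigenvectorUnitary : Matrix n n ℂ) := rfl
  rw [hval, hval'] at h
  rw [h, Matrix.exp_diagonal]
  have hdiag : NormedSpace.exp ((RCLike.ofReal : ℝ → ℂ) ∘ v : n → ℂ)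
      = ((RCLike.ofReal : ℝ → ℂ) ∘ Real.exp ∘ v : n → ℂ) := by
    rw [Pi.exp_def]
    funext i
    show NormedSpace.exp ((v i : ℂ)) = ((Real.exp (v i) : ℝ) : ℂ)
    rw [← Complex.exp_eq_exp_ℂ, Complex.ofReal_exp]
  rw [hdiag]

lemma exp_isHermitian_cfc {A : Matrix n n ℂ} (hA : A.IsHermitian) :
    NormedSpace.exp A = hA.cfc Real.exp := by
  conv_lhs => rw [hA.spectral_theorem, Unitary.conjStarAlgAut_apply]
  rw [exp_unitary_conj_diag hA hA.eigenvalues]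
  rfl

lemma mlog_eq_cfc {σ : Matrix n n ℂ} (hσ : σ.IsHermitian) : mlog σ = hσ.cfc Real.log :=
  hσ.cfc_eq Real.log

lemma mlog_isHermitian {σ : Matrix n n ℂ} (hσ : σ.IsHermitian) : (mlog σ).IsHermitian := by
  have h : IsSelfAdjoint (cfc Real.log σ) := cfc_predicate Real.log σ
  exact h

lemma mlog_exp {A : Matrix n n ℂ} (hA : A.IsHermitian) :
    mlog (NormedSpace.exp A) = A := by
  have hsa : IsSelfAdjoint A := hA
  have hexp : NormedSpace.exp A = cfc Real.exp A := by
    rw [exp_isHermitian_cfc hA, hA.cfc_eq]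
  rw [mlog, hexp, ← cfc_comp Real.log Real.exp A hsa
    (((Matrix.finite_real_spectrum (A := A)).image _).continuousOn _)
    ((Matrix.finite_real_spectrum (A := A)).continuousOn _)]
  rw [show Real.log ∘ Real.exp = id from funext Real.log_exp, cfc_id ℝ A hsa]

lemma exp_mlog {σ : Matrix n n ℂ} (hσ : σ.PosDef) :
    NormedSpace.exp (mlog σ) = σ := by
  rw [mlog_eq_cfc hσ.1]
  show NormedSpace.exp ((hσ.1.eigenvectorUnitary : Matrix n n ℂ) *
    diagonal ((RCLike.ofReal : ℝ → ℂ) ∘ Real.log ∘ hσ.1.eigenvalues) *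
    star (hσ.1.eigenvectorUnitary : Matrix n n ℂ)) = σ
  rw [show (RCLike.ofReal : ℝ → ℂ) ∘ Real.log ∘ hσ.1.eigenvalues
      = (RCLike.ofReal : ℝ → ℂ) ∘ (Real.log ∘ hσ.1.eigenvalues) from rfl]
  rw [exp_unitary_conj_diag hσ.1 (Real.log ∘ hσ.1.eigenvalues)]
  have : (RCLike.ofReal : ℝ → ℂ) ∘ Real.exp ∘ (Real.log ∘ hσ.1.eigenvalues)
      = (RCLike.ofReal : ℝ → ℂ) ∘ hσ.1.eigenvalues := by
    funext i
    show ((Real.exp (Real.log (hσ.1.eigenvalues i)) : ℝ) : ℂ) = _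
    rw [Real.exp_log (hσ.eigenvalues_pos i)]
    rfl
  rw [this]
  exact (hσ.1.spectral_theorem.trans (Unitary.conjStarAlgAut_apply _ _)).symm

lemma cfc_commute_of_commute {A B : Matrix n n ℂ} (hA : A.IsHermitian) (f : ℝ → ℝ)
    (hAB : A * B = B * A) : hA.cfc f * B = B * hA.cfc f := by
  set U : Matrix n n ℂ := (hA.eigenvectorUnitary : Matrix n n ℂ) with hU
  have hU1 : star U * U = 1 := (Unitary.mem_iff.mp hA.eigenvectorUnitary.2).1
  have hU2 : U * star U = 1 := (Unitary.mem_iff.mp hA.eigenvectorUnitary.2).2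
  set Y := star U * B * U with hY
  have hBY : B = U * Y * star U := by
    rw [hY]
    calc B = 1 * B * 1 := by rw [one_mul, mul_one]
      _ = (U * star U) * B * (U * star U) := by rw [hU2]
      _ = U * (star U * B * U) * star U := by simp only [Matrix.mul_assoc]
  have hDY : diagonal ((RCLike.ofReal : ℝ → ℂ) ∘ hA.eigenvalues) * Y
      = Y * diagonal ((RCLike.ofReal : ℝ → ℂ) ∘ hA.eigenvalues) := by
    rw [conj_diag_eq hA, hY]
    calc (star U * A * U) * (star U * B * U)
        = star U * (A * (U * star U) * B) * U := by simp only [Matrix.mul_assoc]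
      _ = star U * (A * B) * U := by rw [hU2]; simp only [Matrix.mul_one, Matrix.mul_assoc]
      _ = star U * (B * A) * U := by rw [hAB]
      _ = star U * (B * (U * star U) * A) * U := by
          rw [hU2]; simp only [Matrix.mul_one, Matrix.mul_assoc]
      _ = (star U * B * U) * (star U * A * U) := by simp only [Matrix.mul_assoc]
  have hentry : ∀ i j, (hA.eigenvalues i : ℂ) * Y i j = Y i j * (hA.eigenvalues j : ℂ) := by
    intro i j
    have h1 : (diagonal ((RCLike.ofReal : ℝ → ℂ) ∘ hA.eigenvalues) * Y) i j
        = (Y * diagonal ((RCLike.ofReal : ℝ → ℂ) ∘ hA.eigenvalues)) i j := by rw [hDY]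
    rwa [Matrix.diagonal_mul, Matrix.mul_diagonal] at h1
  have hDfY : diagonal ((RCLike.ofReal : ℝ → ℂ) ∘ f ∘ hA.eigenvalues) * Y
      = Y * diagonal ((RCLike.ofReal : ℝ → ℂ) ∘ f ∘ hA.eigenvalues) := by
    ext i j
    rw [Matrix.diagonal_mul, Matrix.mul_diagonal]
    by_cases he : hA.eigenvalues i = hA.eigenvalues j
    · show ((f (hA.eigenvalues i) : ℝ) : ℂ) * Y i j = Y i j * ((f (hA.eigenvalues j) : ℝ) : ℂ)
      rw [he, mul_comm]
    · have hz : Y i j = 0 := by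
        have h2 : ((hA.eigenvalues i : ℂ) - (hA.eigenvalues j : ℂ)) * Y i j = 0 := by
          have := hentry i j
          rw [sub_mul, this, mul_comm, sub_self]
        rcases mul_eq_zero.mp h2 with h3 | h3
        · exfalso
          apply he
          have := sub_eq_zero.mp h3
          exact_mod_cast this
        · exact h3
      rw [hz, zero_mul, mul_zero]
  show (U * diagonal ((RCLike.ofReal : ℝ → ℂ) ∘ f ∘ hA.eigenvalues) * star U) * B
      = B * (U * diagonal ((RCLike.ofReal : ℝ → ℂ) ∘ f ∘ hA.eigenvalues) * star U)
  rw [hBY]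
  rw [conj_mul hA, conj_mul hA, hDfY]

lemma mlog_commute {X Y : Matrix n n ℂ} (hX : X.IsHermitian) (hY : Y.IsHermitian)
    (hXY : X * Y = Y * X) : mlog X * mlog Y = mlog Y * mlog X := by
  rw [mlog_eq_cfc hX, mlog_eq_cfc hY]
  have h1 : hX.cfc Real.log * Y = Y * hX.cfc Real.log :=
    cfc_commute_of_commute hX Real.log hXY
  exact (cfc_commute_of_commute hY Real.log h1.symm).symm

lemma mlog_mul {X Y : Matrix n n ℂ} (hX : X.PosDef) (hY : Y.PosDef)
    (hXY : X * Y = Y * X) : mlog (X * Y) = mlog X + mlog Y := by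
  have hcomm : mlog X * mlog Y = mlog Y * mlog X := mlog_commute hX.1 hY.1 hXY
  have hherm : (mlog X + mlog Y).IsHermitian :=
    (mlog_isHermitian hX.1).add (mlog_isHermitian hY.1)
  have hexp : NormedSpace.exp (mlog X + mlog Y) = X * Y := by
    rw [Matrix.exp_add_of_commute _ _ hcomm, exp_mlog hX, exp_mlog hY]
  rw [← hexp, mlog_exp hherm]

lemma smul_one_isHermitian (r : ℝ) : (((r : ℂ)) • (1 : Matrix n n ℂ)).IsHermitian := by
  show _ = _
  rw [Matrix.conjTranspose_smul, Matrix.conjTranspose_one]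
  congr 1
  simp

lemma exp_real_smul_one (r : ℝ) :
    NormedSpace.exp (((r : ℂ)) • (1 : Matrix n n ℂ))
      = ((Real.exp r : ℝ) : ℂ) • (1 : Matrix n n ℂ) := by
  have hdiag : NormedSpace.exp ((fun _ => (r : ℂ)) : n → ℂ)
      = (fun _ => ((Real.exp r : ℝ) : ℂ)) := by
    rw [Pi.exp_def]
    funext i
    show NormedSpace.exp ((r : ℂ)) = ((Real.exp r : ℝ) : ℂ)
    rw [← Complex.exp_eq_exp_ℂ, Complex.ofReal_exp]
  rw [Matrix.smul_one_eq_diagonal, Matrix.exp_diagonal, hdiag, Matrix.smul_one_eq_diagonal]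

lemma mlog_smul {X : Matrix n n ℂ} (hX : X.PosDef) {c : ℝ} (hc : 0 < c) :
    mlog ((c : ℂ) • X) = ((Real.log c : ℝ) : ℂ) • (1 : Matrix n n ℂ) + mlog X := by
  have hherm : (((Real.log c : ℝ) : ℂ) • (1 : Matrix n n ℂ) + mlog X).IsHermitian :=
    (smul_one_isHermitian _).add (mlog_isHermitian hX.1)
  have hcomm : Commute (((Real.log c : ℝ) : ℂ) • (1 : Matrix n n ℂ)) (mlog X) := by
    show _ = _
    rw [Matrix.smul_mul, Matrix.mul_smul, Matrix.one_mul, Matrix.mul_one]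
  have hexp : NormedSpace.exp (((Real.log c : ℝ) : ℂ) • (1 : Matrix n n ℂ) + mlog X)
      = (c : ℂ) • X := by
    rw [Matrix.exp_add_of_commute _ _ hcomm, exp_real_smul_one, exp_mlog hX,
      Real.exp_log hc, Matrix.smul_mul, Matrix.one_mul]
  rw [← hexp, mlog_exp hherm]

end QMN
end P7
section P7B
open Matrix
namespace QMN
variable {n : Type} [Fintype n] [DecidableEq n]

lemma trace_conj {A : Matrix n n ℂ} (hA : A.IsHermitian) (P : Matrix n n ℂ) :
    ((hA.eigenvectorUnitary : Matrix n n ℂ) * P *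
      star (hA.eigenvectorUnitary : Matrix n n ℂ)).trace = P.trace := by
  rw [Matrix.trace_mul_cycle]
  rw [(Unitary.mem_iff.mp hA.eigenvectorUnitary.2).1, Matrix.one_mul]

lemma trace_mul_mlog {σ : Matrix n n ℂ} (hσ : σ.PosDef) :
    (σ * mlog σ).trace
      = ((∑ i, hσ.1.eigenvalues i * Real.log (hσ.1.eigenvalues i) : ℝ) : ℂ) := by
  have h1 : σ * mlog σ = (hσ.1.eigenvectorUnitary : Matrix n n ℂ) *
      (diagonal ((RCLike.ofReal : ℝ → ℂ) ∘ hσ.1.eigenvalues) *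
        diagonal ((RCLike.ofReal : ℝ → ℂ) ∘ Real.log ∘ hσ.1.eigenvalues)) *
      star (hσ.1.eigenvectorUnitary : Matrix n n ℂ) := by
    have h0 : mlog σ = (hσ.1.eigenvectorUnitary : Matrix n n ℂ) *
        diagonal ((RCLike.ofReal : ℝ → ℂ) ∘ Real.log ∘ hσ.1.eigenvalues) *
        star (hσ.1.eigenvectorUnitary : Matrix n n ℂ) := by
      rw [mlog_eq_cfc hσ.1]
      rfl
    rw [h0]
    have h2 := congrArg (fun X => X * ((hσ.1.eigenvectorUnitary : Matrix n n ℂ) *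
      diagonal ((RCLike.ofReal : ℝ → ℂ) ∘ Real.log ∘ hσ.1.eigenvalues) *
      star (hσ.1.eigenvectorUnitary : Matrix n n ℂ))) hσ.1.spectral_theorem
    simp only [Unitary.conjStarAlgAut_apply] at h2
    rw [h2, conj_mul hσ.1]
  rw [h1, trace_conj hσ.1, Matrix.diagonal_mul_diagonal, Matrix.trace_diagonal]
  push_cast
  rfl

lemma vnEntropy'_eq {σ : Matrix n n ℂ} (hσ : σ.PosDef) :
    vnEntropy' σ = -((σ * mlog σ).trace.re) := by
  rw [vnEntropy', dif_pos hσ.1, trace_mul_mlog hσ]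
  rw [Complex.ofReal_re]

lemma posDef_trace_pos {M : Matrix n n ℂ} (hM : M.PosDef) [Nonempty n] :
    0 < M.trace := by
  have hdiag : ∀ i, 0 < M i i := by
    intro i
    have h := hM.dotProduct_mulVec_pos (x := Pi.single i 1) (by
      intro h
      have := congrFun h i
      simp at this)
    have hd : dotProduct (star (Pi.single i 1)) (M *ᵥ Pi.single i 1) = M i i := by
      rw [dot_expand]
      rw [Finset.sum_eq_single i]
      · rw [Finset.sum_eq_single i]
        · simp
        · intro b _ hb
          simp [Pi.single_eq_of_ne hb]
        · intro h; exact absurd (Finset.mem_univ i) h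
      · intro a _ ha
        refine Finset.sum_eq_zero fun b _ => ?_
        simp [Pi.single_eq_of_ne ha]
      · intro h; exact absurd (Finset.mem_univ i) h
    rwa [hd] at h
  rw [Matrix.trace]
  exact Finset.sum_pos (fun i _ => hdiag i) Finset.univ_nonempty

lemma posDef_smul_real {M : Matrix n n ℂ} (hM : M.PosDef) {c : ℝ} (hc : 0 < c) :
    ((c : ℂ) • M).PosDef := by
  refine Matrix.PosDef.of_dotProduct_mulVec_pos ?_ ?_
  · show _ = _
    rw [Matrix.conjTranspose_smul, hM.1.eq]
    congr 1
    simp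
  · intro x hx
    have h := hM.dotProduct_mulVec_pos hx
    rw [Matrix.smul_mulVec, dotProduct_smul]
    have hc' : (0:ℂ) < (c:ℂ) := by exact_mod_cast hc
    exact smul_pos hc' h

end QMN
end P7B
section P8
open Matrix
namespace QMN
variable {n : Type} [Fintype n] [DecidableEq n]

lemma posDef_conjTranspose_mul_self_of_isUnit {B : Matrix n n ℂ} (hB : IsUnit B) :
    (Bᴴ * B).PosDef := by
  refine Matrix.PosDef.of_dotProduct_mulVec_pos ?_ ?_
  · show _ = _
    rw [Matrix.conjTranspose_mul, Matrix.conjTranspose_conjTranspose]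
  · intro x hx
    have hy : B *ᵥ x ≠ 0 := by
      intro h
      apply hx
      have := Matrix.mulVec_injective_iff_isUnit.mpr hB
      apply this
      rw [h, Matrix.mulVec_zero]
    have : dotProduct (star x) ((Bᴴ * B) *ᵥ x) = dotProduct (star (B *ᵥ x)) (B *ᵥ x) := by
      rw [← Matrix.mulVec_mulVec, Matrix.dotProduct_mulVec, ← Matrix.star_mulVec]
    rw [this]
    exact Matrix.dotProduct_star_self_pos_iff.mpr hy

lemma exp_posDef {A : Matrix n n ℂ} (hA : A.IsHermitian) :
    (NormedSpace.exp A).PosDef := by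
  have hhalf : (((1:ℝ)/2 : ℂ) • A).IsHermitian := by
    show _ = _
    rw [Matrix.conjTranspose_smul, hA.eq]
    congr 1
    simp
  have hsum : A = ((1:ℝ)/2 : ℂ) • A + ((1:ℝ)/2 : ℂ) • A := by
    rw [← add_smul]
    norm_num
  have hcomm : Commute (((1:ℝ)/2 : ℂ) • A) (((1:ℝ)/2 : ℂ) • A) := Commute.refl _
  have hBstar : (NormedSpace.exp (((1:ℝ)/2 : ℂ) • A))ᴴ
      = NormedSpace.exp (((1:ℝ)/2 : ℂ) • A) := hhalf.exp
  have hexp : NormedSpace.exp A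
      = (NormedSpace.exp (((1:ℝ)/2 : ℂ) • A))ᴴ * NormedSpace.exp (((1:ℝ)/2 : ℂ) • A) := by
    rw [hBstar]
    conv_lhs => rw [hsum]
    exact Matrix.exp_add_of_commute _ _ hcomm
  rw [hexp]
  exact posDef_conjTranspose_mul_self_of_isUnit (Matrix.isUnit_exp _)

end QMN
end P8

section P8B
open Matrix
namespace QMN
variable {V : Type} [Fintype V] [DecidableEq V] {d : V → ℕ}

lemma mlog_liftM (T : Finset V) {N : Matrix (CfgO d T) (CfgO d T) ℂ} (hN : N.PosDef) :
    liftM T (mlog N) = mlog (liftM T N) := by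
  have h2 : (liftM T (mlog N)).IsHermitian := liftM_isHermitian T (mlog_isHermitian hN.1)
  have h3 : NormedSpace.exp (liftM T (mlog N)) = liftM T N := by
    rw [← liftM_exp, exp_mlog hN]
  rw [← h3, mlog_exp h2]

end QMN
end P8B



section P9
open Matrix
namespace QMN
variable {V : Type} [Fintype V] [DecidableEq V] {d : V → ℕ}

lemma vnEntropy_eq {n : Type} [Fintype n] [DecidableEq n] {σ : Matrix n n ℂ}
    (hσ : σ.PosDef) : vnEntropy σ = -((σ * mlog σ).trace.re) := by
  rw [vnEntropy, dif_pos hσ.1, trace_mul_mlog hσ, Complex.ofReal_re]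

lemma posDef_nsmul {n : Type} [Fintype n] [DecidableEq n] {M : Matrix n n ℂ}
    (hM : M.PosDef) {k : ℕ} (hk : 0 < k) : (k • M).PosDef := by
  have h : (k • M) = ((k : ℝ) : ℂ) • M := by
    rw [show ((k:ℝ):ℂ) = (k:ℂ) by push_cast; rfl, Nat.cast_smul_eq_nsmul]
  rw [h]
  exact posDef_smul_real hM (by exact_mod_cast hk)

lemma nsmul_eq_real_smul {n : Type} [Fintype n] [DecidableEq n] (M : Matrix n n ℂ) (k : ℕ) :
    (k • M) = ((k : ℝ) : ℂ) • M := by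
  rw [show ((k:ℝ):ℂ) = (k:ℂ) by push_cast; rfl, Nat.cast_smul_eq_nsmul]

lemma mlog_nsmul {n : Type} [Fintype n] [DecidableEq n] {X : Matrix n n ℂ}
    (hX : X.PosDef) {k : ℕ} (hk : 0 < k) :
    mlog ((k : ℕ) • X) = ((Real.log k : ℝ) : ℂ) • (1 : Matrix n n ℂ) + mlog X := by
  rw [nsmul_eq_real_smul]
  exact mlog_smul hX (by exact_mod_cast hk)

lemma cmi_eq_zero_key (hd : ∀ v, 1 ≤ d v) (A B C : Finset V)
    (hAB : Disjoint A B) (hAC : Disjoint A C) (hBC : Disjoint B C)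
    (SL SR : Finset V) (EL ER : Op V d)
    (hELpd : EL.PosDef) (hERpd : ER.PosDef)
    (hELs : SupportedOn d SL EL) (hERs : SupportedOn d SR ER)
    (hSLR : SL ∩ SR ⊆ B) (hASR : Disjoint A SR) (hCSL : Disjoint C SL)
    (hcommE : EL * ER = ER * EL) (hprodpd : (EL * ER).PosDef) :
    cmi d (((EL * ER).trace)⁻¹ • (EL * ER)) A B C = 0 := by
  classical
  haveI : ∀ v : V, Nonempty (Fin (d v)) := fun v => ⟨⟨0, hd v⟩⟩
  set t : ℂ := (EL * ER).trace with ht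
  have htpos : 0 < t := posDef_trace_pos hprodpd
  have htre : 0 < t.re := (Complex.lt_def.mp htpos).1
  have htim : t.im = 0 := by
    have := (Complex.lt_def.mp htpos).2
    simpa using this.symm
  have hteq : t = ((t.re : ℝ) : ℂ) := by
    apply Complex.ext
    · simp
    · simp [htim]
  set ρ : Op V d := (t⁻¹ : ℂ) • (EL * ER) with hρ
  have hρpd : ρ.PosDef := by
    rw [hρ, hteq, ← Complex.ofReal_inv]
    exact posDef_smul_real hprodpd (by positivity)
  have hBA : ∀ {v}, v ∈ B → v ∉ A := fun hv hva => (Finset.disjoint_left.mp hAB) hva hv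
  have hAB' : ∀ {v}, v ∈ A → v ∉ B := fun hv hvb => (Finset.disjoint_left.mp hAB) hv hvb
  have hCA : ∀ {v}, v ∈ C → v ∉ A := fun hv hva => (Finset.disjoint_left.mp hAC) hva hv
  have hACd : ∀ {v}, v ∈ A → v ∉ C := fun hv hvc => (Finset.disjoint_left.mp hAC) hv hvc
  have hCB : ∀ {v}, v ∈ C → v ∉ B := fun hv hvb => (Finset.disjoint_left.mp hBC) hvb hv
  unfold cmi marg
  set TW : Finset V := (A ∪ B ∪ C)ᶜ with hTW
  set TAB : Finset V := (A ∪ B)ᶜ with hTAB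
  set TBC : Finset V := (B ∪ C)ᶜ with hTBC
  set TB : Finset V := Bᶜ with hTB
  -- subset relations
  have hsubAB : TW ⊆ TAB := Finset.compl_subset_compl.mpr Finset.subset_union_left
  have hsubBC : TW ⊆ TBC := Finset.compl_subset_compl.mpr (by
    intro v hv
    rcases Finset.mem_union.mp hv with h | h
    · exact Finset.mem_union.mpr (Or.inl (Finset.mem_union.mpr (Or.inr h)))
    · exact Finset.mem_union.mpr (Or.inr h))
  have hsubB_AB : TAB ⊆ TB := Finset.compl_subset_compl.mpr Finset.subset_union_right
  have hsubB_BC : TBC ⊆ TB := Finset.compl_subset_compl.mpr Finset.subset_union_left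
  -- sdiff identities
  have hdiffAB : TAB \ TW = C := by
    ext v
    simp only [hTAB, hTW, Finset.mem_sdiff, Finset.mem_compl, Finset.mem_union, not_or]
    constructor
    · rintro ⟨⟨h1, h2⟩, h3⟩
      by_contra hC'
      exact h3 ⟨⟨h1, h2⟩, hC'⟩
    · intro hv
      exact ⟨⟨hCA hv, hCB hv⟩, fun h => h.2 hv⟩
  have hdiffBC : TBC \ TW = A := by
    ext v
    simp only [hTBC, hTW, Finset.mem_sdiff, Finset.mem_compl, Finset.mem_union, not_or]
    constructor
    · rintro ⟨⟨h1, h2⟩, h3⟩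
      by_contra hA'
      exact h3 ⟨⟨hA', h1⟩, h2⟩
    · intro hv
      exact ⟨⟨hAB' hv, hACd hv⟩, fun h => h.1.1 hv⟩
  have hdiffB_BC : TB \ TBC = C := by
    ext v
    simp only [hTB, hTBC, Finset.mem_sdiff, Finset.mem_compl, Finset.mem_union, not_or]
    constructor
    · rintro ⟨h1, h3⟩
      by_contra hC'
      exact h3 ⟨h1, hC'⟩
    · intro hv
      exact ⟨hCB hv, fun h => h.2 hv⟩
  have hdiffB_AB : TB \ TAB = A := by
    ext v
    simp only [hTB, hTAB, Finset.mem_sdiff, Finset.mem_compl, Finset.mem_union, not_or]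
    constructor
    · rintro ⟨h1, h3⟩
      by_contra hA'
      exact h3 ⟨hA', h1⟩
    · intro hv
      exact ⟨hAB' hv, fun h => h.1 hv⟩
  -- union decompositions
  have hUAB : TAB = C ∪ TW := by
    ext v
    simp only [hTAB, hTW, Finset.mem_union, Finset.mem_compl, Finset.mem_union, not_or]
    constructor
    · rintro ⟨h1, h2⟩
      by_cases hv : v ∈ C
      · exact Or.inl hv
      · exact Or.inr ⟨⟨h1, h2⟩, hv⟩
    · rintro (hv | ⟨⟨h1, h2⟩, _⟩)
      · exact ⟨hCA hv, hCB hv⟩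
      · exact ⟨h1, h2⟩
  have hUBC : TBC = A ∪ TW := by
    ext v
    simp only [hTBC, hTW, Finset.mem_union, Finset.mem_compl, Finset.mem_union, not_or]
    constructor
    · rintro ⟨h1, h2⟩
      by_cases hv : v ∈ A
      · exact Or.inl hv
      · exact Or.inr ⟨⟨hv, h1⟩, h2⟩
    · rintro (hv | ⟨⟨_, h1⟩, h2⟩)
      · exact ⟨hAB' hv, hACd hv⟩
      · exact ⟨h1, h2⟩
  have hUB : TB = A ∪ (C ∪ TW) := by
    ext v
    simp only [hTB, hTW, Finset.mem_union, Finset.mem_compl, Finset.mem_union, not_or]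
    constructor
    · intro h1
      by_cases hvA : v ∈ A
      · exact Or.inl hvA
      · by_cases hvC : v ∈ C
        · exact Or.inr (Or.inl hvC)
        · exact Or.inr (Or.inr ⟨⟨hvA, h1⟩, hvC⟩)
    · rintro (hv | hv | ⟨⟨_, h1⟩, _⟩)
      · exact hAB' hv
      · exact hCB hv
      · exact h1
  -- disjointness of the pieces
  have hdCW : Disjoint C TW := Finset.disjoint_left.mpr (fun v hv hv' => by
    rw [hTW, Finset.mem_compl] at hv'
    exact hv' (Finset.mem_union.mpr (Or.inr hv)))
  have hdAW : Disjoint A TW := Finset.disjoint_left.mpr (fun v hv hv' => by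
    rw [hTW, Finset.mem_compl] at hv'
    exact hv' (Finset.mem_union.mpr (Or.inl (Finset.mem_union.mpr (Or.inl hv)))))
  have hdACW : Disjoint A (C ∪ TW) := by
    rw [Finset.disjoint_union_right]
    exact ⟨hAC, hdAW⟩
  -- support-intersection conditions
  have hTcond : ∀ T : Finset V, (∀ v ∈ B, v ∉ T) → SL ∩ SR ∩ T = ∅ := by
    intro T hT
    rw [Finset.eq_empty_iff_forall_notMem]
    intro v hv
    rw [Finset.mem_inter, Finset.mem_inter] at hv
    exact hT v (hSLR (Finset.mem_inter.mpr hv.1)) hv.2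
  have hTcondW : SL ∩ SR ∩ TW = ∅ := hTcond TW (fun v hv hv' => by
    rw [hTW, Finset.mem_compl] at hv'
    exact hv' (Finset.mem_union.mpr (Or.inl (Finset.mem_union.mpr (Or.inr hv)))))
  have hTcondAB : SL ∩ SR ∩ TAB = ∅ := hTcond TAB (fun v hv hv' => by
    rw [hTAB, Finset.mem_compl] at hv'
    exact hv' (Finset.mem_union.mpr (Or.inr hv)))
  have hTcondBC : SL ∩ SR ∩ TBC = ∅ := hTcond TBC (fun v hv hv' => by
    rw [hTBC, Finset.mem_compl] at hv'
    exact hv' (Finset.mem_union.mpr (Or.inl hv)))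
  have hTcondB : SL ∩ SR ∩ TB = ∅ := hTcond TB (fun v hv hv' => by
    rw [hTB, Finset.mem_compl] at hv'
    exact hv' hv)
  -- the main per-region decomposition
  have main_decomp : ∀ T : Finset V, SL ∩ SR ∩ T = ∅ →
      liftM T (mlog (ptrace d T ρ))
      = ((Real.log ((t.re * (Fintype.card (CfgI d T) : ℝ))⁻¹) : ℝ) : ℂ) • (1 : Op V d)
        + mlog (liftM T (ptrace d T EL)) + mlog (liftM T (ptrace d T ER)) := by
    intro T hT
    set κ : ℕ := Fintype.card (CfgI d T) with hκ
    have hκpos : 0 < κ := Fintype.card_pos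
    have hκR : (0:ℝ) < (κ:ℝ) := by exact_mod_cast hκpos
    have hPl := ptrace_mul T SL SR hELs hERs hT
    have hPl' := ptrace_mul T SR SL hERs hELs (by rwa [Finset.inter_comm SR SL])
    have hNLpd : (ptrace d T EL).PosDef := ptrace_posDef hd T hELpd
    have hNRpd : (ptrace d T ER).PosDef := ptrace_posDef hd T hERpd
    have hNNpd : (ptrace d T EL * ptrace d T ER).PosDef := by
      rw [← hPl]
      exact posDef_nsmul (ptrace_posDef hd T hprodpd) hκpos
    have hNNcomm : ptrace d T EL * ptrace d T ER = ptrace d T ER * ptrace d T EL := by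
      rw [← hPl, ← hPl', hcommE]
    have hptrprod : ptrace d T (EL * ER)
        = (((κ:ℝ) : ℂ))⁻¹ • (ptrace d T EL * ptrace d T ER) := by
      rw [← hPl, nsmul_eq_real_smul, smul_smul, inv_mul_cancel₀, one_smul]
      exact_mod_cast hκpos.ne'
    have hσeq : ptrace d T ρ
        = (((t.re * (κ:ℝ))⁻¹ : ℝ) : ℂ) • (ptrace d T EL * ptrace d T ER) := by
      rw [hρ, ptrace_smul, hptrprod, smul_smul, hteq]
      congr 1
      rw [mul_inv]
      push_cast
      rfl
    rw [hσeq, mlog_smul hNNpd (by positivity), mlog_mul hNLpd hNRpd hNNcomm,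
      liftM_add, liftM_add, liftM_smul, liftM_one, mlog_liftM T hNLpd, mlog_liftM T hNRpd]
    rw [add_assoc]
  -- L7 relations
  have hR1 : mlog (liftM TAB (ptrace d TAB EL))
      = ((Real.log (Fintype.card (CfgI d C)) : ℝ) : ℂ) • (1 : Op V d)
        + mlog (liftM TW (ptrace d TW EL)) := by
    have h := liftM_ptrace_mono TW TAB SL hsubAB hELs (by
      rw [hdiffAB]
      exact Finset.disjoint_iff_inter_eq_empty.mp hCSL)
    rw [hdiffAB] at h
    rw [h, mlog_nsmul (liftM_posDef TW (ptrace_posDef hd TW hELpd)) Fintype.card_pos]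
  have hR2 : mlog (liftM TB (ptrace d TB EL))
      = ((Real.log (Fintype.card (CfgI d C)) : ℝ) : ℂ) • (1 : Op V d)
        + mlog (liftM TBC (ptrace d TBC EL)) := by
    have h := liftM_ptrace_mono TBC TB SL hsubB_BC hELs (by
      rw [hdiffB_BC]
      exact Finset.disjoint_iff_inter_eq_empty.mp hCSL)
    rw [hdiffB_BC] at h
    rw [h, mlog_nsmul (liftM_posDef TBC (ptrace_posDef hd TBC hELpd)) Fintype.card_pos]
  have hR3 : mlog (liftM TBC (ptrace d TBC ER))
      = ((Real.log (Fintype.card (CfgI d A)) : ℝ) : ℂ) • (1 : Op V d)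
        + mlog (liftM TW (ptrace d TW ER)) := by
    have h := liftM_ptrace_mono TW TBC SR hsubBC hERs (by
      rw [hdiffBC]
      exact Finset.disjoint_iff_inter_eq_empty.mp hASR)
    rw [hdiffBC] at h
    rw [h, mlog_nsmul (liftM_posDef TW (ptrace_posDef hd TW hERpd)) Fintype.card_pos]
  have hR4 : mlog (liftM TB (ptrace d TB ER))
      = ((Real.log (Fintype.card (CfgI d A)) : ℝ) : ℂ) • (1 : Op V d)
        + mlog (liftM TAB (ptrace d TAB ER)) := by
    have h := liftM_ptrace_mono TAB TB SR hsubB_AB hERs (by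
      rw [hdiffB_AB]
      exact Finset.disjoint_iff_inter_eq_empty.mp hASR)
    rw [hdiffB_AB] at h
    rw [h, mlog_nsmul (liftM_posDef TAB (ptrace_posDef hd TAB hERpd)) Fintype.card_pos]
  -- the cardinality identity
  have hκprod : (Fintype.card (CfgI d TAB)) * (Fintype.card (CfgI d TBC))
      = (Fintype.card (CfgI d TW)) * (Fintype.card (CfgI d TB)) := by
    rw [card_cfgI, card_cfgI, card_cfgI, card_cfgI, hUAB, hUBC, hUB,
      Finset.prod_union hdCW, Finset.prod_union hdAW, Finset.prod_union hdACW,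
      Finset.prod_union hdCW]
    ring
  -- the scalar identity
  have hscal : Real.log ((t.re * (Fintype.card (CfgI d TAB) : ℝ))⁻¹)
        + Real.log ((t.re * (Fintype.card (CfgI d TBC) : ℝ))⁻¹)
      = Real.log ((t.re * (Fintype.card (CfgI d TW) : ℝ))⁻¹)
        + Real.log ((t.re * (Fintype.card (CfgI d TB) : ℝ))⁻¹) := by
    have hpos : ∀ T : Finset V, (0:ℝ) < (Fintype.card (CfgI d T) : ℝ) := by
      intro T
      exact_mod_cast (Fintype.card_pos : 0 < Fintype.card (CfgI d T))
    rw [Real.log_inv, Real.log_inv, Real.log_inv, Real.log_inv,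
      Real.log_mul (ne_of_gt htre) (ne_of_gt (hpos TAB)),
      Real.log_mul (ne_of_gt htre) (ne_of_gt (hpos TBC)),
      Real.log_mul (ne_of_gt htre) (ne_of_gt (hpos TW)),
      Real.log_mul (ne_of_gt htre) (ne_of_gt (hpos TB))]
    have : Real.log (Fintype.card (CfgI d TAB)) + Real.log (Fintype.card (CfgI d TBC))
        = Real.log (Fintype.card (CfgI d TW)) + Real.log (Fintype.card (CfgI d TB)) := by
      rw [← Real.log_mul (ne_of_gt (hpos TAB)) (ne_of_gt (hpos TBC)),
        ← Real.log_mul (ne_of_gt (hpos TW)) (ne_of_gt (hpos TB))]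
      congr 1
      rw [← Nat.cast_mul, ← Nat.cast_mul, hκprod]
    linarith
  -- the key operator identity
  have hkey : liftM TAB (mlog (ptrace d TAB ρ)) + liftM TBC (mlog (ptrace d TBC ρ))
      = liftM TW (mlog (ptrace d TW ρ)) + liftM TB (mlog (ptrace d TB ρ)) := by
    rw [main_decomp TAB hTcondAB, main_decomp TBC hTcondBC, main_decomp TW hTcondW,
      main_decomp TB hTcondB, hR1, hR2, hR3, hR4]
    match_scalars
    · have hC : ((Real.log ((t.re * (Fintype.card (CfgI d TAB) : ℝ))⁻¹) : ℝ) : ℂ)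
          + ((Real.log ((t.re * (Fintype.card (CfgI d TBC) : ℝ))⁻¹) : ℝ) : ℂ)
          = ((Real.log ((t.re * (Fintype.card (CfgI d TW) : ℝ))⁻¹) : ℝ) : ℂ)
            + ((Real.log ((t.re * (Fintype.card (CfgI d TB) : ℝ))⁻¹) : ℝ) : ℂ) := by
        exact_mod_cast hscal
      linear_combination hC
    · ring
    · ring
    · ring
    · ring
  -- conclude
  have hσABpd : (ptrace d TAB ρ).PosDef := ptrace_posDef hd TAB hρpd
  have hσBCpd : (ptrace d TBC ρ).PosDef := ptrace_posDef hd TBC hρpd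
  have hσWpd : (ptrace d TW ρ).PosDef := ptrace_posDef hd TW hρpd
  have hσBpd : (ptrace d TB ρ).PosDef := ptrace_posDef hd TB hρpd
  rw [vnEntropy_eq hσABpd, vnEntropy_eq hσBCpd, vnEntropy_eq hσWpd, vnEntropy_eq hσBpd]
  have e1 := trace_ptrace_mul TAB ρ (mlog (ptrace d TAB ρ))
  have e2 := trace_ptrace_mul TBC ρ (mlog (ptrace d TBC ρ))
  have e3 := trace_ptrace_mul TW ρ (mlog (ptrace d TW ρ))
  have e4 := trace_ptrace_mul TB ρ (mlog (ptrace d TB ρ))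
  have hsum : (ρ * liftM TAB (mlog (ptrace d TAB ρ))).trace
      + (ρ * liftM TBC (mlog (ptrace d TBC ρ))).trace
      = (ρ * liftM TW (mlog (ptrace d TW ρ))).trace
        + (ρ * liftM TB (mlog (ptrace d TB ρ))).trace := by
    rw [← Matrix.trace_add, ← Matrix.mul_add, hkey, Matrix.mul_add, Matrix.trace_add]
  rw [e1, e2, e3, e4]
  have := congrArg Complex.re hsum
  rw [Complex.add_re, Complex.add_re] at this
  linarith

end QMN
end P9



section P10
open Matrix
namespace QMN
variable {V : Type} [Fintype V] [DecidableEq V] {d : V → ℕ}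

lemma isHermitian_sum_of {ι : Type*} (s : Finset ι) (f : ι → Op V d)
    (hf : ∀ i ∈ s, (f i).IsHermitian) : (∑ i ∈ s, f i).IsHermitian := by
  show _ = _
  rw [Matrix.conjTranspose_sum]
  exact Finset.sum_congr rfl fun i hi => (hf i hi).eq

theorem commuting_gibbs_is_markov' (hd : ∀ v, 1 ≤ d v) (G : SimpleGraph V)
    (h : Finset V → Op V d)
    (hzero : ∀ Q : Finset V, ¬ IsCliqueF G Q → h Q = 0)
    (hherm : ∀ Q : Finset V, IsCliqueF G Q → (h Q).IsHermitian)
    (hsupp : ∀ Q : Finset V, IsCliqueF G Q → SupportedOn d Q (h Q))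
    (hcomm : ∀ Q Q' : Finset V, IsCliqueF G Q → IsCliqueF G Q' → h Q * h Q' = h Q' * h Q) :
    (((NormedSpace.exp (∑ Q : Finset V, h Q)).trace)⁻¹ •
        NormedSpace.exp (∑ Q : Finset V, h Q)).PosDef ∧
    (((NormedSpace.exp (∑ Q : Finset V, h Q)).trace)⁻¹ •
        NormedSpace.exp (∑ Q : Finset V, h Q)).trace = 1 ∧
    IsMarkovNetwork d G
      (((NormedSpace.exp (∑ Q : Finset V, h Q)).trace)⁻¹ •
        NormedSpace.exp (∑ Q : Finset V, h Q)) := by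
  classical
  haveI : ∀ v : V, Nonempty (Fin (d v)) := fun v => ⟨⟨0, hd v⟩⟩
  have hermOrZero : ∀ Q : Finset V, (h Q).IsHermitian := by
    intro Q
    by_cases hQ : IsCliqueF G Q
    · exact hherm Q hQ
    · rw [hzero Q hQ]
      exact Matrix.isHermitian_zero
  have hHherm : (∑ Q : Finset V, h Q).IsHermitian :=
    isHermitian_sum_of _ _ (fun Q _ => hermOrZero Q)
  have hEpd : (NormedSpace.exp (∑ Q : Finset V, h Q)).PosDef := exp_posDef hHherm
  set t : ℂ := (NormedSpace.exp (∑ Q : Finset V, h Q)).trace with ht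
  have htpos : 0 < t := posDef_trace_pos hEpd
  have htre : 0 < t.re := (Complex.lt_def.mp htpos).1
  have htim : t.im = 0 := by
    have := (Complex.lt_def.mp htpos).2
    simpa using this.symm
  have hteq : t = ((t.re : ℝ) : ℂ) := by
    apply Complex.ext
    · simp
    · simp [htim]
  refine ⟨?_, ?_, ?_⟩
  · rw [hteq, ← Complex.ofReal_inv]
    exact posDef_smul_real hEpd (by positivity)
  · rw [Matrix.trace_smul, ← ht, smul_eq_mul, inv_mul_cancel₀ (ne_of_gt htpos)]
  · intro A B C hAB hAC hBC hsh
    -- the set of vertices reachable from A avoiding B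
    set L : Finset V := Finset.univ.filter
      (fun v => ∃ a ∈ A, ∃ w : G.Walk a v, ∀ b ∈ w.support, b ∉ B) with hL
    have hAL : A ⊆ L := by
      intro a ha
      rw [hL, Finset.mem_filter]
      refine ⟨Finset.mem_univ _, a, ha, SimpleGraph.Walk.nil, ?_⟩
      intro b hb
      rw [SimpleGraph.Walk.support_nil, List.mem_singleton] at hb
      subst hb
      exact fun hbB => (Finset.disjoint_left.mp hAB) ha hbB
    have hCL : ∀ c ∈ C, c ∉ L := by
      intro c hc hcL
      rw [hL, Finset.mem_filter] at hcL
      obtain ⟨-, a, ha, w, hw⟩ := hcL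
      obtain ⟨b, hbB, hbs⟩ := hsh a ha c hc w
      exact hw b hbs hbB
    have hext : ∀ {v u : V}, v ∈ L → G.Adj v u → u ∉ B → u ∈ L := by
      intro v u hv hadj huB
      rw [hL, Finset.mem_filter] at hv ⊢
      obtain ⟨-, a, ha, w, hw⟩ := hv
      refine ⟨Finset.mem_univ _, a, ha, w.concat hadj, ?_⟩
      intro b hb
      rw [SimpleGraph.Walk.support_concat, List.mem_append] at hb
      rcases hb with hb | hb
      · exact hw b hb
      · rw [List.mem_singleton] at hb
        subst hb
        exact huB
    have hclique : ∀ Q : Finset V, IsCliqueF G Q → (Q ⊆ L ∪ B) ∨ (Q ⊆ Lᶜ) := by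
      intro Q hQ
      by_cases hex : ∃ q ∈ Q, q ∈ L
      · left
        obtain ⟨q, hqQ, hqL⟩ := hex
        intro p hp
        by_cases hpB : p ∈ B
        · exact Finset.mem_union.mpr (Or.inr hpB)
        · by_cases hpq : p = q
          · subst hpq
            exact Finset.mem_union.mpr (Or.inl hqL)
          · have hadj : G.Adj q p := hQ.2 (Finset.mem_coe.mpr hqQ) (Finset.mem_coe.mpr hp)
              (fun he => hpq he.symm)
            exact Finset.mem_union.mpr (Or.inl (hext hqL hadj hpB))
      · right
        push_neg at hex
        intro p hp
        exact Finset.mem_compl.mpr (hex p hp)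
    have hLB : ∀ v ∈ L, v ∉ B := by
      intro v hv
      rw [hL, Finset.mem_filter] at hv
      obtain ⟨-, a, ha, w, hw⟩ := hv
      exact hw v (SimpleGraph.Walk.end_mem_support w)
    -- decompose the Hamiltonian
    set HL : Op V d := ∑ Q ∈ Finset.univ.filter (fun Q : Finset V => Q ⊆ L ∪ B), h Q with hHL
    set HR : Op V d := ∑ Q ∈ Finset.univ.filter (fun Q : Finset V => ¬ Q ⊆ L ∪ B), h Q with hHR
    have hHsum : (∑ Q : Finset V, h Q) = HL + HR :=
      (Finset.sum_filter_add_sum_filter_not Finset.univ _ _).symm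
    have hcommQ : ∀ Q Q' : Finset V, h Q * h Q' = h Q' * h Q := by
      intro Q Q'
      by_cases hQ : IsCliqueF G Q
      · by_cases hQ' : IsCliqueF G Q'
        · exact hcomm Q Q' hQ hQ'
        · rw [hzero Q' hQ', mul_zero, zero_mul]
      · rw [hzero Q hQ, mul_zero, zero_mul]
    have hcommH : HL * HR = HR * HL := by
      rw [hHL, hHR, Finset.sum_mul_sum, Finset.sum_mul_sum, Finset.sum_comm]
      exact Finset.sum_congr rfl fun Q _ => Finset.sum_congr rfl fun Q' _ => hcommQ Q' Q
    have hHLherm : HL.IsHermitian := isHermitian_sum_of _ _ (fun Q _ => hermOrZero Q)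
    have hHRherm : HR.IsHermitian := isHermitian_sum_of _ _ (fun Q _ => hermOrZero Q)
    have hHLsupp : SupportedOn d (L ∪ B) HL := by
      refine supportedOn_sum _ ?_
      intro Q hQ
      rw [Finset.mem_filter] at hQ
      by_cases hcl : IsCliqueF G Q
      · exact SupportedOn.mono hQ.2 (hsupp Q hcl)
      · rw [hzero Q hcl]
        exact supportedOn_zero _
    have hHRsupp : SupportedOn d Lᶜ HR := by
      refine supportedOn_sum _ ?_
      intro Q hQ
      rw [Finset.mem_filter] at hQ
      by_cases hcl : IsCliqueF G Q
      · rcases hclique Q hcl with hc | hc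
        · exact absurd hc hQ.2
        · exact SupportedOn.mono hc (hsupp Q hcl)
      · rw [hzero Q hcl]
        exact supportedOn_zero _
    have hEL := exp_posDef hHLherm
    have hER := exp_posDef hHRherm
    have hprod : NormedSpace.exp (∑ Q : Finset V, h Q)
        = NormedSpace.exp HL * NormedSpace.exp HR := by
      rw [hHsum]
      exact Matrix.exp_add_of_commute _ _ hcommH
    have hcommE : NormedSpace.exp HL * NormedSpace.exp HR
        = NormedSpace.exp HR * NormedSpace.exp HL := by
      rw [← Matrix.exp_add_of_commute HL HR hcommH,
        ← Matrix.exp_add_of_commute HR HL hcommH.symm, add_comm]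
    have hprodpd : (NormedSpace.exp HL * NormedSpace.exp HR).PosDef := by
      rw [← hprod]
      exact hEpd
    have hfin := cmi_eq_zero_key hd A B C hAB hAC hBC (L ∪ B) (Lᶜ)
      (NormedSpace.exp HL) (NormedSpace.exp HR) hEL hER
      (supportedOn_exp hHLsupp) (supportedOn_exp hHRsupp)
      (by
        intro v hv
        rw [Finset.mem_inter, Finset.mem_union, Finset.mem_compl] at hv
        rcases hv.1 with h1 | h1
        · exact absurd h1 hv.2
        · exact h1)
      (Finset.disjoint_left.mpr (fun v hv hv' => (Finset.mem_compl.mp hv') (hAL hv)))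
      (Finset.disjoint_left.mpr (fun v hv hv' => by
        rcases Finset.mem_union.mp hv' with h1 | h1
        · exact hCL v hv h1
        · exact (Finset.disjoint_left.mp hBC) h1 hv))
      hcommE hprodpd
    rw [← hprod] at hfin
    exact hfin

end QMN
end P10

/-- the Gibbs state of a local commuting Hamiltonian on a graph is a positive
definite density matrix forming a quantum Markov network. -/
theorem commuting_gibbs_is_markov {V : Type} [Fintype V] [DecidableEq V]
    (d : V → ℕ) (hd : ∀ v, 1 ≤ d v) (G : SimpleGraph V) (h : Finset V → Op V d)
    (hzero : ∀ Q : Finset V, ¬ IsCliqueF G Q → h Q = 0)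
    (hherm : ∀ Q : Finset V, IsCliqueF G Q → (h Q).IsHermitian)
    (hsupp : ∀ Q : Finset V, IsCliqueF G Q → SupportedOn d Q (h Q))
    (hcomm : ∀ Q Q' : Finset V, IsCliqueF G Q → IsCliqueF G Q' → h Q * h Q' = h Q' * h Q) :
    (((NormedSpace.exp (∑ Q : Finset V, h Q)).trace)⁻¹ •
        NormedSpace.exp (∑ Q : Finset V, h Q)).PosDef ∧
    (((NormedSpace.exp (∑ Q : Finset V, h Q)).trace)⁻¹ •
        NormedSpace.exp (∑ Q : Finset V, h Q)).trace = 1 ∧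
    IsMarkovNetwork d G
      (((NormedSpace.exp (∑ Q : Finset V, h Q)).trace)⁻¹ •
        NormedSpace.exp (∑ Q : Finset V, h Q)) := by
  exact QMN.commuting_gibbs_is_markov' hd G h hzero hherm hsupp hcomm

end
end

section
/- Let A, B, C be pairwise disjoint subsets of the finite site set V. Let H_AB be an operator genuine on A ∪ B and H_BC an operator genuine on B ∪ C. Then the commutator [H_AB, H_BC] is a sum of operators genuine on sets of the form A ∪ B' ∪ C where B' ranges over nonempty subsets of B; equivalently, in the cumulant decomposition of [H_AB, H_BC], the cumulant K_X vanishes for every X ⊆ V that is not of the form A ∪ B' ∪ C with ∅ ≠ B' ⊆ B. In particular, if [H_AB, H_BC] ≠ 0 then Tr_Y [H_AB, H_BC] = 0 for every nonempty Y ⊆ A ∪ C and Tr_B [H_AB, H_BC] = 0. -/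
open Matrix
open scoped ComplexOrder

noncomputable section

/-! ### Auxiliary machinery for Statement 4 -/

section Aux4

variable {V : Type} [Fintype V] [DecidableEq V]

/-- Override the values of `x` on `T` by those of `z`. -/
def ovr (d : V → ℕ) (T : Finset V) (x z : (v : V) → Fin (d v)) : (v : V) → Fin (d v) :=
  fun v => if v ∈ T then z v else x v

@[simp] lemma ovr_mem {d : V → ℕ} {T : Finset V} {x z : (v : V) → Fin (d v)} {v : V}
    (h : v ∈ T) : ovr d T x z v = z v := by simp [ovr, h]

@[simp] lemma ovr_not_mem {d : V → ℕ} {T : Finset V} {x z : (v : V) → Fin (d v)} {v : V}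
    (h : v ∉ T) : ovr d T x z v = x v := by simp [ovr, h]

/-- Splitting a configuration into its parts inside and outside `T`. -/
def splitE (d : V → ℕ) (T : Finset V) :
    (((v : {v : V // v ∉ T}) → Fin (d v.1)) × ((v : {v : V // v ∈ T}) → Fin (d v.1))) ≃
      ((v : V) → Fin (d v)) where
  toFun p := mergeConfig d T p.1 p.2
  invFun x := (fun v => x v.1, fun v => x v.1)
  left_inv := by
    rintro ⟨p, u⟩
    simp only [Prod.mk.injEq]
    constructor
    · funext v; simp [mergeConfig, v.2]
    · funext v; simp [mergeConfig, v.2]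
  right_inv := by
    intro x; funext v; by_cases h : v ∈ T <;> simp [mergeConfig, h]

lemma sum_split (d : V → ℕ) (T : Finset V) (f : ((v : V) → Fin (d v)) → ℂ) :
    ∑ z, f z = ∑ p : (v : {v : V // v ∉ T}) → Fin (d v.1),
      ∑ u : (v : {v : V // v ∈ T}) → Fin (d v.1), f (mergeConfig d T p u) := by
  rw [← Equiv.sum_comp (splitE d T) f, Fintype.sum_prod_type]
  rfl

@[simp] lemma mergeConfig_mem {d : V → ℕ} {T : Finset V}
    {p : (v : {v : V // v ∉ T}) → Fin (d v.1)} {u : (v : {v : V // v ∈ T}) → Fin (d v.1)}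
    {v : V} (h : v ∈ T) : mergeConfig d T p u v = u ⟨v, h⟩ := by simp [mergeConfig, h]

@[simp] lemma mergeConfig_not_mem {d : V → ℕ} {T : Finset V}
    {p : (v : {v : V // v ∉ T}) → Fin (d v.1)} {u : (v : {v : V // v ∈ T}) → Fin (d v.1)}
    {v : V} (h : v ∉ T) : mergeConfig d T p u v = p ⟨v, h⟩ := by simp [mergeConfig, h]

set_option linter.unusedSectionVars false

/-- Key fibering lemma: if the two arguments copy `z` on `Y` and depend only on the
values of `z` off `Y` elsewhere (as does the weight `c`), then the sum vanishes as soon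
as the partial trace of `F` over `Y` vanishes. -/
lemma sum_fiber_zero {d : V → ℕ} (Y : Finset V) (F : Op V d) (h0 : ptrace d Y F = 0)
    (A1 A2 : ((v : V) → Fin (d v)) → ((v : V) → Fin (d v)))
    (c : ((v : V) → Fin (d v)) → ℂ)
    (h1 : ∀ z v, v ∈ Y → A1 z v = z v) (h2 : ∀ z v, v ∈ Y → A2 z v = z v)
    (hoff : ∀ z z', (∀ w, w ∉ Y → z w = z' w) →
      (∀ v, v ∉ Y → A1 z v = A1 z' v) ∧ (∀ v, v ∉ Y → A2 z v = A2 z' v) ∧ c z = c z') :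
    ∑ z, c z * F (A1 z) (A2 z) = 0 := by
  rw [sum_split d Y]
  apply Finset.sum_eq_zero
  intro p _
  rcases isEmpty_or_nonempty ((v : {v : V // v ∈ Y}) → Fin (d v.1)) with hE | hNE
  · rw [Finset.univ_eq_empty, Finset.sum_empty]
  · obtain ⟨u₀⟩ := hNE
    have hagree : ∀ u : (v : {v : V // v ∈ Y}) → Fin (d v.1),
        ∀ w, w ∉ Y → mergeConfig d Y p u w = mergeConfig d Y p u₀ w := by
      intro u w hw; rw [mergeConfig_not_mem hw, mergeConfig_not_mem hw]
    set x1 : (v : {v : V // v ∉ Y}) → Fin (d v.1) :=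
      fun v => A1 (mergeConfig d Y p u₀) v.1 with hx1
    set x2 : (v : {v : V // v ∉ Y}) → Fin (d v.1) :=
      fun v => A2 (mergeConfig d Y p u₀) v.1 with hx2
    have key : ∀ u, c (mergeConfig d Y p u) *
        F (A1 (mergeConfig d Y p u)) (A2 (mergeConfig d Y p u))
        = c (mergeConfig d Y p u₀) * F (mergeConfig d Y x1 u) (mergeConfig d Y x2 u) := by
      intro u
      obtain ⟨hA1, hA2, hc⟩ := hoff (mergeConfig d Y p u) (mergeConfig d Y p u₀) (hagree u)
      have e1 : A1 (mergeConfig d Y p u) = mergeConfig d Y x1 u := by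
        funext v; by_cases hv : v ∈ Y
        · rw [h1 _ v hv, mergeConfig_mem hv, mergeConfig_mem hv]
        · rw [hA1 v hv, mergeConfig_not_mem hv]
      have e2 : A2 (mergeConfig d Y p u) = mergeConfig d Y x2 u := by
        funext v; by_cases hv : v ∈ Y
        · rw [h2 _ v hv, mergeConfig_mem hv, mergeConfig_mem hv]
        · rw [hA2 v hv, mergeConfig_not_mem hv]
      rw [hc, e1, e2]
    calc ∑ u, c (mergeConfig d Y p u) *
          F (A1 (mergeConfig d Y p u)) (A2 (mergeConfig d Y p u))
        = ∑ u, c (mergeConfig d Y p u₀) * F (mergeConfig d Y x1 u) (mergeConfig d Y x2 u) :=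
          Finset.sum_congr rfl (fun u _ => key u)
      _ = c (mergeConfig d Y p u₀) * ∑ u, F (mergeConfig d Y x1 u) (mergeConfig d Y x2 u) := by
          rw [Finset.mul_sum]
      _ = c (mergeConfig d Y p u₀) * (ptrace d Y F x1 x2) := rfl
      _ = 0 := by rw [h0]; simp

/-- The "middle" configuration used to parametrize the matrix product of two supported
operators. -/
def midE (d : V → ℕ) (P E : Finset V) (α β : (v : V) → Fin (d v))
    (b : (v : {v : V // v ∈ E}) → Fin (d v.1)) : (v : V) → Fin (d v) :=
  fun v => if h : v ∈ E then b ⟨v, h⟩ else if v ∈ P then β v else α v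

@[simp] lemma midE_mem {d : V → ℕ} {P E : Finset V} {α β : (v : V) → Fin (d v)}
    {b : (v : {v : V // v ∈ E}) → Fin (d v.1)} {v : V} (h : v ∈ E) :
    midE d P E α β b v = b ⟨v, h⟩ := by simp [midE, h]

lemma midE_not_mem_mem {d : V → ℕ} {P E : Finset V} {α β : (v : V) → Fin (d v)}
    {b : (v : {v : V // v ∈ E}) → Fin (d v.1)} {v : V} (h : v ∉ E) (hP : v ∈ P) :
    midE d P E α β b v = β v := by simp [midE, h, hP]

lemma midE_not_mem_not_mem {d : V → ℕ} {P E : Finset V} {α β : (v : V) → Fin (d v)}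
    {b : (v : {v : V // v ∈ E}) → Fin (d v.1)} {v : V} (h : v ∉ E) (hP : v ∉ P) :
    midE d P E α β b v = α v := by simp [midE, h, hP]

/-- Normal form of the product of two supported operators. -/
lemma mul_apply_supported {d : V → ℕ} {P Q E : Finset V} {F G : Op V d}
    (hF : SupportedOn d P F) (hG : SupportedOn d Q G) (hE : P ∩ Q = E)
    (α β : (v : V) → Fin (d v)) :
    (F * G) α β = ∑ b : (v : {v : V // v ∈ E}) → Fin (d v.1),
      F α (midE d P E α β b) * G (midE d P E α β b) β := by
  have hnot : ∀ v, v ∉ E → v ∈ P → v ∉ Q := fun v hv h1 h2 =>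
    hv (hE ▸ Finset.mem_inter.mpr ⟨h1, h2⟩)
  rw [Matrix.mul_apply, sum_split d E, Finset.sum_comm]
  apply Finset.sum_congr rfl
  intro b _
  set p₀ : (v : {v : V // v ∉ E}) → Fin (d v.1) :=
    fun v => if v.1 ∈ P then β v.1 else α v.1 with hp₀
  have hmid : mergeConfig d E p₀ b = midE d P E α β b := by
    funext v; by_cases h : v ∈ E
    · rw [mergeConfig_mem h, midE_mem h]
    · rw [mergeConfig_not_mem h]
      by_cases hP : v ∈ P
      · rw [midE_not_mem_mem h hP]; simp [hp₀, hP]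
      · rw [midE_not_mem_not_mem h hP]; simp [hp₀, hP]
    
  rw [Fintype.sum_eq_single p₀ ?_, hmid]
  intro p hp
  obtain ⟨v, hv⟩ := Function.ne_iff.mp hp
  have hvmerge : mergeConfig d E p b v.1 = p v := by
    rw [mergeConfig_not_mem v.2]
  by_cases hvP : v.1 ∈ P
  · have hvQ : v.1 ∉ Q := hnot v.1 v.2 hvP
    have : G (mergeConfig d E p b) β = 0 := by
      apply hG.1
      exact ⟨v.1, hvQ, by rw [hvmerge]; simpa [hp₀, hvP] using hv⟩
    rw [this, mul_zero]
  · have : F α (mergeConfig d E p b) = 0 := by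
      apply hF.1
      refine ⟨v.1, hvP, ?_⟩
      rw [hvmerge]
      intro h; exact hv (by rw [← h]; simp [hp₀, hvP])
    rw [this, zero_mul]

lemma supportedOn_mono {d : V → ℕ} {Z X : Finset V} {M : Op V d}
    (h : SupportedOn d Z M) (hZX : Z ⊆ X) : SupportedOn d X M := by
  constructor
  · rintro x y ⟨v, hv, hne⟩; exact h.1 x y ⟨v, fun hvZ => hv (hZX hvZ), hne⟩
  · intro x y x' y' hx hy hxy hxy'
    by_cases hdis : ∀ v, v ∉ Z → x v = y v
    · apply h.2 x y x' y' (fun v hv => hx v (hZX hv)) (fun v hv => hy v (hZX hv)) hdis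
      intro v hv
      by_cases hvX : v ∈ X
      · rw [← hx v hvX, ← hy v hvX]; exact hdis v hv
      · exact hxy' v hvX
    · push_neg at hdis; obtain ⟨v, hvZ, hne⟩ := hdis
      have hvX : v ∈ X := by by_contra hvX; exact hne (hxy v hvX)
      have hne' : x' v ≠ y' v := by rw [← hx v hvX, ← hy v hvX]; exact hne
      rw [h.1 x y ⟨v, hvZ, hne⟩, h.1 x' y' ⟨v, hvZ, hne'⟩]

lemma supportedOn_sub {d : V → ℕ} {S : Finset V} {M N : Op V d}
    (hM : SupportedOn d S M) (hN : SupportedOn d S N) : SupportedOn d S (M - N) := by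
  constructor
  · intro x y h; simp [Matrix.sub_apply, hM.1 x y h, hN.1 x y h]
  · intro x y x' y' h1 h2 h3 h4
    simp [Matrix.sub_apply, hM.2 x y x' y' h1 h2 h3 h4, hN.2 x y x' y' h1 h2 h3 h4]

lemma supportedOn_mul {d : V → ℕ} {P Q : Finset V} {F G : Op V d}
    (hF : SupportedOn d P F) (hG : SupportedOn d Q G) :
    SupportedOn d (P ∪ Q) (F * G) := by
  constructor
  · rintro x y ⟨v, hv, hne⟩
    rw [mul_apply_supported hF hG rfl]
    apply Finset.sum_eq_zero; intro b _
    have hvP : v ∉ P := fun h => hv (Finset.mem_union_left _ h)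
    have hvQ : v ∉ Q := fun h => hv (Finset.mem_union_right _ h)
    have hvE : v ∉ P ∩ Q := fun h => hvP (Finset.mem_inter.mp h).1
    have : G (midE d P (P ∩ Q) x y b) y = 0 := by
      apply hG.1
      exact ⟨v, hvQ, by rw [midE_not_mem_not_mem hvE hvP]; exact hne⟩
    rw [this, mul_zero]
  · intro x y x' y' hx hy hxy hxy'
    rw [mul_apply_supported hF hG rfl, mul_apply_supported hF hG rfl]
    apply Finset.sum_congr rfl; intro b _
    have e1 : F x (midE d P (P ∩ Q) x y b) = F x' (midE d P (P ∩ Q) x' y' b) := by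
      apply hF.2
      · intro v hv; exact hx v (Finset.mem_union_left _ hv)
      · intro v hv; by_cases hE : v ∈ P ∩ Q
        · rw [midE_mem hE, midE_mem hE]
        · rw [midE_not_mem_mem hE hv, midE_not_mem_mem hE hv]
          exact hy v (Finset.mem_union_left _ hv)
      · intro v hv
        have hE : v ∉ P ∩ Q := fun h => hv (Finset.mem_inter.mp h).1
        rw [midE_not_mem_not_mem hE hv]
      · intro v hv
        have hE : v ∉ P ∩ Q := fun h => hv (Finset.mem_inter.mp h).1
        rw [midE_not_mem_not_mem hE hv]
    have e2 : G (midE d P (P ∩ Q) x y b) y = G (midE d P (P ∩ Q) x' y' b) y' := by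
      apply hG.2
      · intro v hv; by_cases hE : v ∈ P ∩ Q
        · rw [midE_mem hE, midE_mem hE]
        · by_cases hvP : v ∈ P
          · rw [midE_not_mem_mem hE hvP, midE_not_mem_mem hE hvP]
            exact hy v (Finset.mem_union_right _ hv)
          · rw [midE_not_mem_not_mem hE hvP, midE_not_mem_not_mem hE hvP]
            exact hx v (Finset.mem_union_right _ hv)
      · intro v hv; exact hy v (Finset.mem_union_right _ hv)
      · intro v hv
        have hE : v ∉ P ∩ Q := fun h => hv (Finset.mem_inter.mp h).2
        by_cases hvP : v ∈ P
        · rw [midE_not_mem_mem hE hvP]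
        · rw [midE_not_mem_not_mem hE hvP]
          exact hxy v (fun h => (Finset.mem_union.mp h).elim hvP hv)
      · intro v hv
        have hE : v ∉ P ∩ Q := fun h => hv (Finset.mem_inter.mp h).2
        by_cases hvP : v ∈ P
        · rw [midE_not_mem_mem hE hvP]
        · rw [midE_not_mem_not_mem hE hvP]
          exact hxy' v (fun h => (Finset.mem_union.mp h).elim hvP hv)
    rw [e1, e2]

/-- The conditional-expectation-like compression onto operators supported on `Z`. -/
def Pm (d : V → ℕ) (Z : Finset V) (M : Op V d) : Op V d :=
  fun x y => if ∀ v, v ∉ Z → x v = y v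
    then (∏ v, (d v : ℂ))⁻¹ * ∑ z, M (ovr d Zᶜ x z) (ovr d Zᶜ y z) else 0

lemma prod_d_ne_zero {d : V → ℕ} (hd : ∀ v, 1 ≤ d v) : (∏ v, (d v : ℂ)) ≠ 0 :=
  Finset.prod_ne_zero_iff.mpr fun v _ =>
    Nat.cast_ne_zero.mpr (Nat.one_le_iff_ne_zero.mp (hd v))

lemma Pm_eq_self {d : V → ℕ} (hd : ∀ v, 1 ≤ d v) {Z : Finset V} {M : Op V d}
    (h : SupportedOn d Z M) : Pm d Z M = M := by
  funext x y
  simp only [Pm]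
  by_cases hc : ∀ v, v ∉ Z → x v = y v
  · rw [if_pos hc]
    have hterm : ∀ z, M (ovr d Zᶜ x z) (ovr d Zᶜ y z) = M x y := by
      intro z
      apply h.2
      · intro v hv; exact ovr_not_mem (by simp [hv])
      · intro v hv; exact ovr_not_mem (by simp [hv])
      · intro v hv
        have hvc : v ∈ Zᶜ := Finset.mem_compl.mpr hv
        rw [ovr_mem hvc, ovr_mem hvc]
      · exact hc
    rw [Finset.sum_congr rfl (fun z _ => hterm z), Finset.sum_const, Finset.card_univ]
    have hcard : ((Fintype.card ((v : V) → Fin (d v)) : ℕ) : ℂ) = ∏ v, (d v : ℂ) := by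
      rw [Fintype.card_pi]
      push_cast
      simp
    rw [nsmul_eq_mul, hcard, ← mul_assoc, inv_mul_cancel₀ (prod_d_ne_zero hd), one_mul]
  · rw [if_neg hc]
    push_neg at hc; obtain ⟨v, hv, hne⟩ := hc
    exact (h.1 x y ⟨v, hv, hne⟩).symm

lemma Pm_eq_zero_of_genuine {d : V → ℕ} {W Z : Finset V} {K : Op V d}
    (h : Genuine d W K) (hWZ : ¬ W ⊆ Z) : Pm d Z K = 0 := by
  funext x y
  simp only [Pm, Matrix.zero_apply]
  by_cases hc : ∀ v, v ∉ Z → x v = y v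
  · rw [if_pos hc]
    obtain ⟨a, haW, haZ⟩ := Finset.not_subset.mp hWZ
    have hY : a ∈ W \ Z := Finset.mem_sdiff.mpr ⟨haW, haZ⟩
    have hsum := sum_fiber_zero (W \ Z) K
      (h.2 (W \ Z) ⟨a, hY⟩ (Finset.sdiff_subset))
      (fun z => ovr d Zᶜ x z) (fun z => ovr d Zᶜ y z) (fun _ => 1)
      (fun z v hv => ovr_mem (Finset.mem_compl.mpr (Finset.mem_sdiff.mp hv).2))
      (fun z v hv => ovr_mem (Finset.mem_compl.mpr (Finset.mem_sdiff.mp hv).2))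
      (by
        intro z z' hzz'
        refine ⟨?_, ?_, rfl⟩ <;>
        · intro v hv
          by_cases hvc : v ∈ Zᶜ
          · rw [ovr_mem hvc, ovr_mem hvc, hzz' v hv]
          · rw [ovr_not_mem hvc, ovr_not_mem hvc])
    simp only [one_mul] at hsum
    rw [hsum, mul_zero]
  · rw [if_neg hc]

lemma Pm_sum {d : V → ℕ} {Z : Finset V} {ι : Type*} (s : Finset ι) (f : ι → Op V d) :
    Pm d Z (∑ i ∈ s, f i) = ∑ i ∈ s, Pm d Z (f i) := by
  funext x y
  rw [Matrix.sum_apply]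
  simp only [Pm]
  by_cases hc : ∀ v, v ∉ Z → x v = y v
  · simp only [if_pos hc]
    rw [← Finset.mul_sum]
    congr 1
    rw [Finset.sum_comm]
    apply Finset.sum_congr rfl; intro z _
    rw [Matrix.sum_apply]
  · simp only [if_neg hc, Finset.sum_const_zero]

lemma Pm_eq_zero_of_sum {d : V → ℕ} {Z : Finset V} {M : Op V d}
    (h : ∀ x y, ∑ z, M (ovr d Zᶜ x z) (ovr d Zᶜ y z) = 0) : Pm d Z M = 0 := by
  funext x y
  simp only [Pm, Matrix.zero_apply]
  by_cases hc : ∀ v, v ∉ Z → x v = y v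
  · rw [if_pos hc, h x y, mul_zero]
  · rw [if_neg hc]

lemma Pm_erase {d : V → ℕ} {S X : Finset V} {M : Op V d} (hM : SupportedOn d S M)
    {w : V} (hwX : w ∈ X) (hwS : w ∉ S) : Pm d X M = Pm d (X.erase w) M := by
  funext x y
  simp only [Pm]
  by_cases hxyw : x w = y w
  · have hcond : (∀ v, v ∉ X → x v = y v) ↔ (∀ v, v ∉ X.erase w → x v = y v) := by
      constructor
      · intro h v hv
        by_cases hvw : v = w
        · subst hvw; exact hxyw
        · exact h v (fun hvX => hv (Finset.mem_erase.mpr ⟨hvw, hvX⟩))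
      · intro h v hv; exact h v (fun h' => hv (Finset.erase_subset _ _ h'))
    by_cases hc : ∀ v, v ∉ X → x v = y v
    · rw [if_pos hc, if_pos (hcond.mp hc)]
      congr 1
      by_cases hoffS : ∀ v, v ∉ S → x v = y v
      · apply Finset.sum_congr rfl; intro z _
        apply hM.2
        · intro v hv
          have hvw : v ≠ w := fun h => hwS (h ▸ hv)
          by_cases hvX : v ∈ X
          · rw [ovr_not_mem (Finset.notMem_compl.mpr hvX),
              ovr_not_mem (Finset.notMem_compl.mpr (Finset.mem_erase.mpr ⟨hvw, hvX⟩))]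
          · have h1 : v ∈ Xᶜ := Finset.mem_compl.mpr hvX
            have h2 : v ∈ (X.erase w)ᶜ := Finset.mem_compl.mpr
              (fun h => hvX (Finset.erase_subset _ _ h))
            rw [ovr_mem h1, ovr_mem h2]
        · intro v hv
          have hvw : v ≠ w := fun h => hwS (h ▸ hv)
          by_cases hvX : v ∈ X
          · rw [ovr_not_mem (Finset.notMem_compl.mpr hvX),
              ovr_not_mem (Finset.notMem_compl.mpr (Finset.mem_erase.mpr ⟨hvw, hvX⟩))]
          · have h1 : v ∈ Xᶜ := Finset.mem_compl.mpr hvX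
            have h2 : v ∈ (X.erase w)ᶜ := Finset.mem_compl.mpr
              (fun h => hvX (Finset.erase_subset _ _ h))
            rw [ovr_mem h1, ovr_mem h2]
        · intro v hv
          by_cases hvX : v ∈ X
          · rw [ovr_not_mem (Finset.notMem_compl.mpr hvX), ovr_not_mem (Finset.notMem_compl.mpr hvX)]
            exact hoffS v hv
          · have h1 : v ∈ Xᶜ := Finset.mem_compl.mpr hvX
            rw [ovr_mem h1, ovr_mem h1]
        · intro v hv
          by_cases hvX : v ∈ X.erase w
          · rw [ovr_not_mem (Finset.notMem_compl.mpr hvX), ovr_not_mem (Finset.notMem_compl.mpr hvX)]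
            exact hoffS v hv
          · have h1 : v ∈ (X.erase w)ᶜ := Finset.mem_compl.mpr hvX
            rw [ovr_mem h1, ovr_mem h1]
      · push_neg at hoffS; obtain ⟨v₀, hv₀S, hne⟩ := hoffS
        have hv₀X : v₀ ∈ X := by by_contra h; exact hne (hc v₀ h)
        have hv₀w : v₀ ≠ w := fun h => hne (h ▸ hxyw)
        have hv₀X' : v₀ ∈ X.erase w := Finset.mem_erase.mpr ⟨hv₀w, hv₀X⟩
        rw [Finset.sum_eq_zero, Finset.sum_eq_zero]
        · intro z _; apply hM.1
          refine ⟨v₀, hv₀S, ?_⟩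
          rw [ovr_not_mem (Finset.notMem_compl.mpr hv₀X'), ovr_not_mem (Finset.notMem_compl.mpr hv₀X')]
          exact hne
        · intro z _; apply hM.1
          refine ⟨v₀, hv₀S, ?_⟩
          rw [ovr_not_mem (Finset.notMem_compl.mpr hv₀X), ovr_not_mem (Finset.notMem_compl.mpr hv₀X)]
          exact hne
    · rw [if_neg hc, if_neg (fun h => hc (hcond.mpr h))]
  · have hc2 : ¬ ∀ v, v ∉ X.erase w → x v = y v :=
      fun h => hxyw (h w (Finset.notMem_erase w X))
    rw [if_neg hc2]
    by_cases hc : ∀ v, v ∉ X → x v = y v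
    · rw [if_pos hc, Finset.sum_eq_zero, mul_zero]
      intro z _; apply hM.1
      refine ⟨w, hwS, ?_⟩
      rw [ovr_not_mem (Finset.notMem_compl.mpr hwX), ovr_not_mem (Finset.notMem_compl.mpr hwX)]
      exact hxyw
    · rw [if_neg hc]

lemma ptrace_zero_of_sum {d : V → ℕ} (hd : ∀ v, 1 ≤ d v) (T : Finset V) (M : Op V d)
    (h : ∀ x y, ∑ z, M (ovr d T x z) (ovr d T y z) = 0) : ptrace d T M = 0 := by
  haveI : ∀ v : V, Nonempty (Fin (d v)) := fun v => ⟨⟨0, hd v⟩⟩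
  funext a b
  set xa : (v : V) → Fin (d v) :=
    fun v => if hv : v ∉ T then a ⟨v, hv⟩ else ⟨0, hd v⟩ with hxa
  set xb : (v : V) → Fin (d v) :=
    fun v => if hv : v ∉ T then b ⟨v, hv⟩ else ⟨0, hd v⟩ with hxb
  have h2 := h xa xb
  rw [sum_split d T] at h2
  have key : ∀ p : (v : {v : V // v ∉ T}) → Fin (d v.1),
      ∀ u, M (ovr d T xa (mergeConfig d T p u)) (ovr d T xb (mergeConfig d T p u))
        = M (mergeConfig d T a u) (mergeConfig d T b u) := by
    intro p u
    congr 1 <;> funext v <;> by_cases hv : v ∈ T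
    · rw [ovr_mem hv, mergeConfig_mem hv, mergeConfig_mem hv]
    · rw [ovr_not_mem hv, mergeConfig_not_mem hv]; simp [hxa, hv]
    · rw [ovr_mem hv, mergeConfig_mem hv, mergeConfig_mem hv]
    · rw [ovr_not_mem hv, mergeConfig_not_mem hv]; simp [hxb, hv]
  have h3 : ∀ p : (v : {v : V // v ∉ T}) → Fin (d v.1),
      (∑ u, M (ovr d T xa (mergeConfig d T p u)) (ovr d T xb (mergeConfig d T p u)))
        = ptrace d T M a b :=
    fun p => Finset.sum_congr rfl (fun u _ => key p u)
  rw [Finset.sum_congr rfl (fun p _ => h3 p), Finset.sum_const, Finset.card_univ] at h2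
  have hcard : Fintype.card ((v : {v : V // v ∉ T}) → Fin (d v.1)) ≠ 0 :=
    Fintype.card_ne_zero
  have := smul_eq_zero.mp h2
  rcases this with h' | h'
  · exact absurd (by exact_mod_cast h') hcard
  · exact h'

lemma core1 {d : V → ℕ} {P Q T : Finset V} {F G : Op V d}
    (hF : Genuine d P F) (hG : SupportedOn d Q G)
    {a : V} (haP : a ∈ P) (haQ : a ∉ Q) (haT : a ∈ T) (x y : (v : V) → Fin (d v)) :
    ∑ z, (F * G) (ovr d T x z) (ovr d T y z) = 0 := by
  have hrw : ∀ z, (F * G) (ovr d T x z) (ovr d T y z)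
      = ∑ b : (v : {v : V // v ∈ P ∩ Q}) → Fin (d v.1),
        F (ovr d T x z) (midE d P (P ∩ Q) (ovr d T x z) (ovr d T y z) b)
          * G (midE d P (P ∩ Q) (ovr d T x z) (ovr d T y z) b) (ovr d T y z) :=
    fun z => mul_apply_supported hF.1 hG rfl _ _
  rw [Finset.sum_congr rfl (fun z _ => hrw z), Finset.sum_comm]
  apply Finset.sum_eq_zero
  intro b _
  set Y := (P \ Q) ∩ T with hYdef
  have haY : a ∈ Y := by simp [hYdef, haP, haQ, haT]
  have hYP : Y ⊆ P := fun v hv => (Finset.mem_sdiff.mp (Finset.mem_inter.mp hv).1).1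
  have hYQ : ∀ v ∈ Y, v ∉ Q := fun v hv => (Finset.mem_sdiff.mp (Finset.mem_inter.mp hv).1).2
  have hYT : ∀ v ∈ Y, v ∈ T := fun v hv => (Finset.mem_inter.mp hv).2
  have hYmem : ∀ v ∈ Y, v ∉ P ∩ Q := fun v hv h => hYQ v hv (Finset.mem_inter.mp h).2
  -- abbreviations
  have h1 : ∀ z : (v : V) → Fin (d v), ∀ v ∈ Y, ovr d T x z v = z v :=
    fun z v hv => ovr_mem (hYT v hv)
  have h2 : ∀ z : (v : V) → Fin (d v), ∀ v ∈ Y,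
      midE d P (P ∩ Q) (ovr d T x z) (ovr d T y z) b v = z v := by
    intro z v hv
    rw [midE_not_mem_mem (hYmem v hv) (hYP hv), ovr_mem (hYT v hv)]
  have hoffA2 : ∀ z z' : (v : V) → Fin (d v), (∀ w, w ∉ Y → z w = z' w) → ∀ v, v ∉ Y →
      midE d P (P ∩ Q) (ovr d T x z) (ovr d T y z) b v
        = midE d P (P ∩ Q) (ovr d T x z') (ovr d T y z') b v := by
    intro z z' hzz' v hv
    by_cases hvE : v ∈ P ∩ Q
    · rw [midE_mem hvE, midE_mem hvE]
    · by_cases hvP : v ∈ P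
      · rw [midE_not_mem_mem hvE hvP, midE_not_mem_mem hvE hvP]
        by_cases hvT : v ∈ T
        · exfalso
          apply hv
          have hvQ : v ∉ Q := fun h => hvE (Finset.mem_inter.mpr ⟨hvP, h⟩)
          simp [hYdef, hvP, hvQ, hvT]
        · rw [ovr_not_mem hvT, ovr_not_mem hvT]
      · rw [midE_not_mem_not_mem hvE hvP, midE_not_mem_not_mem hvE hvP]
        by_cases hvT : v ∈ T
        · rw [ovr_mem hvT, ovr_mem hvT, hzz' v hv]
        · rw [ovr_not_mem hvT, ovr_not_mem hvT]
  have hoffB : ∀ z z' : (v : V) → Fin (d v), (∀ w, w ∉ Y → z w = z' w) → ∀ v, v ∉ Y →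
      ovr d T y z v = ovr d T y z' v := by
    intro z z' hzz' v hv
    by_cases hvT : v ∈ T
    · rw [ovr_mem hvT, ovr_mem hvT, hzz' v hv]
    · rw [ovr_not_mem hvT, ovr_not_mem hvT]
  have hcomm : ∑ z, F (ovr d T x z) (midE d P (P ∩ Q) (ovr d T x z) (ovr d T y z) b)
        * G (midE d P (P ∩ Q) (ovr d T x z) (ovr d T y z) b) (ovr d T y z)
      = ∑ z, G (midE d P (P ∩ Q) (ovr d T x z) (ovr d T y z) b) (ovr d T y z)
        * F (ovr d T x z) (midE d P (P ∩ Q) (ovr d T x z) (ovr d T y z) b) :=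
    Finset.sum_congr rfl (fun z _ => mul_comm _ _)
  rw [hcomm]
  apply sum_fiber_zero Y F (hF.2 Y ⟨a, haY⟩ hYP)
    (fun z => ovr d T x z)
    (fun z => midE d P (P ∩ Q) (ovr d T x z) (ovr d T y z) b)
    (fun z => G (midE d P (P ∩ Q) (ovr d T x z) (ovr d T y z) b) (ovr d T y z))
    h1 h2
  intro z z' hzz'
  refine ⟨?_, hoffA2 z z' hzz', ?_⟩
  · intro v hv
    by_cases hvT : v ∈ T
    · rw [ovr_mem hvT, ovr_mem hvT, hzz' v hv]
    · rw [ovr_not_mem hvT, ovr_not_mem hvT]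
  · have hYeq : ∀ zz : (v : V) → Fin (d v), ∀ v ∈ Y,
        midE d P (P ∩ Q) (ovr d T x zz) (ovr d T y zz) b v = ovr d T y zz v := by
      intro zz v hv
      rw [h2 zz v hv, ovr_mem (hYT v hv)]
    by_cases hdis : ∀ v, v ∉ Q →
        midE d P (P ∩ Q) (ovr d T x z) (ovr d T y z) b v = ovr d T y z v
    · apply hG.2
      · intro v hv
        exact hoffA2 z z' hzz' v (fun h => hYQ v h hv)
      · intro v hv
        exact hoffB z z' hzz' v (fun h => hYQ v h hv)
      · exact hdis
      · intro v hv
        by_cases hvY : v ∈ Y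
        · exact hYeq z' v hvY
        · rw [← hoffA2 z z' hzz' v hvY, ← hoffB z z' hzz' v hvY]
          exact hdis v hv
    · push_neg at hdis
      obtain ⟨v₁, hv₁Q, hne⟩ := hdis
      have hv₁Y : v₁ ∉ Y := fun h => hne (hYeq z v₁ h)
      have hne' : midE d P (P ∩ Q) (ovr d T x z') (ovr d T y z') b v₁ ≠ ovr d T y z' v₁ := by
        rw [← hoffA2 z z' hzz' v₁ hv₁Y, ← hoffB z z' hzz' v₁ hv₁Y]
        exact hne
      rw [hG.1 _ _ ⟨v₁, hv₁Q, hne⟩, hG.1 _ _ ⟨v₁, hv₁Q, hne'⟩]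

lemma core1R {d : V → ℕ} {P Q T : Finset V} {F G : Op V d}
    (hF : SupportedOn d P F) (hG : Genuine d Q G)
    {a : V} (haQ : a ∈ Q) (haP : a ∉ P) (haT : a ∈ T) (x y : (v : V) → Fin (d v)) :
    ∑ z, (F * G) (ovr d T x z) (ovr d T y z) = 0 := by
  have hrw : ∀ z, (F * G) (ovr d T x z) (ovr d T y z)
      = ∑ b : (v : {v : V // v ∈ P ∩ Q}) → Fin (d v.1),
        F (ovr d T x z) (midE d P (P ∩ Q) (ovr d T x z) (ovr d T y z) b)
          * G (midE d P (P ∩ Q) (ovr d T x z) (ovr d T y z) b) (ovr d T y z) :=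
    fun z => mul_apply_supported hF hG.1 rfl _ _
  rw [Finset.sum_congr rfl (fun z _ => hrw z), Finset.sum_comm]
  apply Finset.sum_eq_zero
  intro b _
  set Y := (Q \ P) ∩ T with hYdef
  have haY : a ∈ Y := by simp [hYdef, haP, haQ, haT]
  have hYQ : Y ⊆ Q := fun v hv => (Finset.mem_sdiff.mp (Finset.mem_inter.mp hv).1).1
  have hYP : ∀ v ∈ Y, v ∉ P := fun v hv => (Finset.mem_sdiff.mp (Finset.mem_inter.mp hv).1).2
  have hYT : ∀ v ∈ Y, v ∈ T := fun v hv => (Finset.mem_inter.mp hv).2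
  have hYmem : ∀ v ∈ Y, v ∉ P ∩ Q := fun v hv h => hYP v hv (Finset.mem_inter.mp h).1
  have h1 : ∀ z : (v : V) → Fin (d v), ∀ v ∈ Y,
      midE d P (P ∩ Q) (ovr d T x z) (ovr d T y z) b v = z v := by
    intro z v hv
    rw [midE_not_mem_not_mem (hYmem v hv) (hYP v hv), ovr_mem (hYT v hv)]
  have h2 : ∀ z : (v : V) → Fin (d v), ∀ v ∈ Y, ovr d T y z v = z v :=
    fun z v hv => ovr_mem (hYT v hv)
  have hoffA1 : ∀ z z' : (v : V) → Fin (d v), (∀ w, w ∉ Y → z w = z' w) → ∀ v, v ∉ Y →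
      midE d P (P ∩ Q) (ovr d T x z) (ovr d T y z) b v
        = midE d P (P ∩ Q) (ovr d T x z') (ovr d T y z') b v := by
    intro z z' hzz' v hv
    by_cases hvE : v ∈ P ∩ Q
    · rw [midE_mem hvE, midE_mem hvE]
    · by_cases hvP : v ∈ P
      · rw [midE_not_mem_mem hvE hvP, midE_not_mem_mem hvE hvP]
        by_cases hvT : v ∈ T
        · rw [ovr_mem hvT, ovr_mem hvT, hzz' v hv]
        · rw [ovr_not_mem hvT, ovr_not_mem hvT]
      · rw [midE_not_mem_not_mem hvE hvP, midE_not_mem_not_mem hvE hvP]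
        by_cases hvT : v ∈ T
        · by_cases hvQ : v ∈ Q
          · exfalso; exact hv (by simp [hYdef, hvP, hvQ, hvT])
          · rw [ovr_mem hvT, ovr_mem hvT, hzz' v hv]
        · rw [ovr_not_mem hvT, ovr_not_mem hvT]
  have hoffX : ∀ z z' : (v : V) → Fin (d v), (∀ w, w ∉ Y → z w = z' w) → ∀ v, v ∉ Y →
      ovr d T x z v = ovr d T x z' v := by
    intro z z' hzz' v hv
    by_cases hvT : v ∈ T
    · rw [ovr_mem hvT, ovr_mem hvT, hzz' v hv]
    · rw [ovr_not_mem hvT, ovr_not_mem hvT]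
  have hoffY : ∀ z z' : (v : V) → Fin (d v), (∀ w, w ∉ Y → z w = z' w) → ∀ v, v ∉ Y →
      ovr d T y z v = ovr d T y z' v := by
    intro z z' hzz' v hv
    by_cases hvT : v ∈ T
    · rw [ovr_mem hvT, ovr_mem hvT, hzz' v hv]
    · rw [ovr_not_mem hvT, ovr_not_mem hvT]
  apply sum_fiber_zero Y G (hG.2 Y ⟨a, haY⟩ hYQ)
    (fun z => midE d P (P ∩ Q) (ovr d T x z) (ovr d T y z) b)
    (fun z => ovr d T y z)
    (fun z => F (ovr d T x z) (midE d P (P ∩ Q) (ovr d T x z) (ovr d T y z) b))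
    h1 h2
  intro z z' hzz'
  refine ⟨hoffA1 z z' hzz', hoffY z z' hzz', ?_⟩
  have hYeq : ∀ zz : (v : V) → Fin (d v), ∀ v ∈ Y,
      ovr d T x zz v = midE d P (P ∩ Q) (ovr d T x zz) (ovr d T y zz) b v := by
    intro zz v hv
    rw [h1 zz v hv, ovr_mem (hYT v hv)]
  by_cases hdis : ∀ v, v ∉ P →
      ovr d T x z v = midE d P (P ∩ Q) (ovr d T x z) (ovr d T y z) b v
  · apply hF.2
    · intro v hv
      exact hoffX z z' hzz' v (fun h => hYP v h hv)
    · intro v hv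
      exact hoffA1 z z' hzz' v (fun h => hYP v h hv)
    · exact hdis
    · intro v hv
      by_cases hvY : v ∈ Y
      · exact hYeq z' v hvY
      · rw [← hoffX z z' hzz' v hvY, ← hoffA1 z z' hzz' v hvY]
        exact hdis v hv
  · push_neg at hdis
    obtain ⟨v₁, hv₁P, hne⟩ := hdis
    have hv₁Y : v₁ ∉ Y := fun h => hne (hYeq z v₁ h)
    have hne' : ovr d T x z' v₁
        ≠ midE d P (P ∩ Q) (ovr d T x z') (ovr d T y z') b v₁ := by
      rw [← hoffX z z' hzz' v₁ hv₁Y, ← hoffA1 z z' hzz' v₁ hv₁Y]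
      exact hne
    rw [hF.1 _ _ ⟨v₁, hv₁P, hne⟩, hF.1 _ _ ⟨v₁, hv₁P, hne'⟩]

/-- Insert a partial configuration on `T` into `x`. -/
def put (d : V → ℕ) (T : Finset V) (x : (v : V) → Fin (d v))
    (q : (v : {v : V // v ∈ T}) → Fin (d v.1)) : (v : V) → Fin (d v) :=
  fun v => if h : v ∈ T then q ⟨v, h⟩ else x v

lemma put_mem {d : V → ℕ} {T : Finset V} {x : (v : V) → Fin (d v)}
    {q : (v : {v : V // v ∈ T}) → Fin (d v.1)} {v : V} (h : v ∈ T) :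
    put d T x q v = q ⟨v, h⟩ := by simp [put, h]

lemma put_not_mem {d : V → ℕ} {T : Finset V} {x : (v : V) → Fin (d v)}
    {q : (v : {v : V // v ∈ T}) → Fin (d v.1)} {v : V} (h : v ∉ T) :
    put d T x q v = x v := by simp [put, h]

lemma ovr_merge {d : V → ℕ} {T : Finset V} {x : (v : V) → Fin (d v)}
    (p : (v : {v : V // v ∉ T}) → Fin (d v.1)) (q : (v : {v : V // v ∈ T}) → Fin (d v.1)) :
    ovr d T x (mergeConfig d T p q) = put d T x q := by
  funext v
  by_cases h : v ∈ T
  · rw [ovr_mem h, mergeConfig_mem h, put_mem h]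
  · rw [ovr_not_mem h, put_not_mem h]

lemma core2 {d : V → ℕ} {A B C T : Finset V} {F G : Op V d}
    (hDAB : Disjoint A B) (hDAC : Disjoint A C) (hDBC : Disjoint B C)
    (hF : SupportedOn d (A ∪ B) F) (hG : SupportedOn d (B ∪ C) G)
    (hBT : B ⊆ T) (hTA : Disjoint T A) (hTC : Disjoint T C)
    (x y : (v : V) → Fin (d v)) :
    ∑ z, (F * G) (ovr d T x z) (ovr d T y z)
      = ∑ z, (G * F) (ovr d T x z) (ovr d T y z) := by
  have hAnB : ∀ v, v ∈ A → v ∉ B := fun v h => Finset.disjoint_left.mp hDAB h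
  have hAnC : ∀ v, v ∈ A → v ∉ C := fun v h => Finset.disjoint_left.mp hDAC h
  have hBnC : ∀ v, v ∈ B → v ∉ C := fun v h => Finset.disjoint_left.mp hDBC h
  have hAnT : ∀ v, v ∈ A → v ∉ T := fun v h => Finset.disjoint_right.mp hTA h
  have hCnT : ∀ v, v ∈ C → v ∉ T := fun v h => Finset.disjoint_right.mp hTC h
  have hIFG : (A ∪ B) ∩ (B ∪ C) = B := by
    ext v
    simp only [Finset.mem_inter, Finset.mem_union]
    constructor
    · rintro ⟨h1 | h1, h2 | h2⟩
      · exact absurd h2 (hAnB v h1)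
      · exact absurd h2 (hAnC v h1)
      · exact h1
      · exact h1
    · intro h; exact ⟨Or.inr h, Or.inl h⟩
  have hIGF : (B ∪ C) ∩ (A ∪ B) = B := by
    ext v
    simp only [Finset.mem_inter, Finset.mem_union]
    constructor
    · rintro ⟨h1 | h1, h2 | h2⟩
      · exact h1
      · exact h1
      · exact absurd h1 (fun hh => hAnC v h2 hh)
      · exact h2
    · intro h; exact ⟨Or.inl h, Or.inr h⟩
  have hLrw : ∀ z, (F * G) (ovr d T x z) (ovr d T y z)
      = ∑ b : (v : {v : V // v ∈ B}) → Fin (d v.1),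
        F (ovr d T x z) (midE d (A ∪ B) B (ovr d T x z) (ovr d T y z) b)
          * G (midE d (A ∪ B) B (ovr d T x z) (ovr d T y z) b) (ovr d T y z) :=
    fun z => mul_apply_supported hF hG hIFG _ _
  have hRrw : ∀ z, (G * F) (ovr d T x z) (ovr d T y z)
      = ∑ b : (v : {v : V // v ∈ B}) → Fin (d v.1),
        G (ovr d T x z) (midE d (B ∪ C) B (ovr d T x z) (ovr d T y z) b)
          * F (midE d (B ∪ C) B (ovr d T x z) (ovr d T y z) b) (ovr d T y z) :=
    fun z => mul_apply_supported hG hF hIGF _ _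
  rw [Finset.sum_congr rfl (fun z _ => hLrw z), Finset.sum_congr rfl (fun z _ => hRrw z)]
  by_cases hcond : ∀ v, v ∉ A ∪ B ∪ C → v ∉ T → x v = y v
  · -- main case: swap by a bijection
    rw [sum_split d T, sum_split d T]
    apply Finset.sum_congr rfl
    intro p _
    have hputx : ∀ q, ovr d T x (mergeConfig d T p q) = put d T x q := fun q => ovr_merge p q
    have hputy : ∀ q, ovr d T y (mergeConfig d T p q) = put d T y q := fun q => ovr_merge p q
    simp only [hputx, hputy]
    have hL := Fintype.sum_prod_type (f := fun qb :
        (((v : {v : V // v ∈ T}) → Fin (d v.1)) × ((v : {v : V // v ∈ B}) → Fin (d v.1))) =>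
      F (put d T x qb.1) (midE d (A ∪ B) B (put d T x qb.1) (put d T y qb.1) qb.2)
        * G (midE d (A ∪ B) B (put d T x qb.1) (put d T y qb.1) qb.2) (put d T y qb.1))
    have hR := Fintype.sum_prod_type (f := fun qb :
        (((v : {v : V // v ∈ T}) → Fin (d v.1)) × ((v : {v : V // v ∈ B}) → Fin (d v.1))) =>
      G (put d T x qb.1) (midE d (B ∪ C) B (put d T x qb.1) (put d T y qb.1) qb.2)
        * F (midE d (B ∪ C) B (put d T x qb.1) (put d T y qb.1) qb.2) (put d T y qb.1))
    rw [← hL, ← hR]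
    set ψ : (((v : {v : V // v ∈ T}) → Fin (d v.1)) × ((v : {v : V // v ∈ B}) → Fin (d v.1)))
        → (((v : {v : V // v ∈ T}) → Fin (d v.1)) × ((v : {v : V // v ∈ B}) → Fin (d v.1))) :=
      fun qb => (fun u => if h : u.1 ∈ B then qb.2 ⟨u.1, h⟩ else qb.1 u,
        fun v => qb.1 ⟨v.1, hBT v.2⟩) with hψdef
    have hψinv : Function.Involutive ψ := by
      rintro ⟨q, b⟩
      simp only [hψdef, Prod.mk.injEq]
      constructor
      · funext u
        by_cases h : u.1 ∈ B
        · simp only [h, dif_pos]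
        · simp only [h, dif_neg, not_false_iff]
      · funext v
        simp only [v.2, dif_pos]
    apply Fintype.sum_bijective ψ hψinv.bijective
    rintro ⟨q, b⟩
    dsimp only
    set q' : (v : {v : V // v ∈ T}) → Fin (d v.1) :=
      fun u => if h : u.1 ∈ B then b ⟨u.1, h⟩ else q u with hq'def
    set b' : (v : {v : V // v ∈ B}) → Fin (d v.1) := fun v => q ⟨v.1, hBT v.2⟩ with hb'def
    have hq'B : ∀ (v : V) (hv : v ∈ B), q' ⟨v, hBT hv⟩ = b ⟨v, hv⟩ := by
      intro v hv; simp [hq'def, hv]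
    have hq'nB : ∀ (v : V) (hv : v ∈ T), v ∉ B → q' ⟨v, hv⟩ = q ⟨v, hv⟩ := by
      intro v hv hvB; simp [hq'def, hvB]
    have hb'B : ∀ (v : V) (hv : v ∈ B), b' ⟨v, hv⟩ = q ⟨v, hBT hv⟩ := fun v hv => rfl
    have hFeq : F (put d T x q) (midE d (A ∪ B) B (put d T x q) (put d T y q) b)
        = F (midE d (B ∪ C) B (put d T x q') (put d T y q') b') (put d T y q') := by
      apply hF.2
      · intro v hv
        rcases Finset.mem_union.mp hv with hvA | hvB
        · have hvT : v ∉ T := hAnT v hvA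
          rw [put_not_mem hvT,
            midE_not_mem_not_mem (hAnB v hvA)
              (fun h => (Finset.mem_union.mp h).elim (hAnB v hvA) (hAnC v hvA)),
            put_not_mem hvT]
        · rw [put_mem (hBT hvB), midE_mem hvB, hb'B v hvB]
      · intro v hv
        rcases Finset.mem_union.mp hv with hvA | hvB
        · have hvT : v ∉ T := hAnT v hvA
          rw [midE_not_mem_mem (hAnB v hvA) hv, put_not_mem hvT, put_not_mem hvT]
        · rw [midE_mem hvB, put_mem (hBT hvB), hq'B v hvB]
      · intro v hv
        have hvA : v ∉ A := fun h => hv (Finset.mem_union_left _ h)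
        have hvB : v ∉ B := fun h => hv (Finset.mem_union_right _ h)
        rw [midE_not_mem_not_mem hvB hv]
      · intro v hv
        have hvA : v ∉ A := fun h => hv (Finset.mem_union_left _ h)
        have hvB : v ∉ B := fun h => hv (Finset.mem_union_right _ h)
        by_cases hvC : v ∈ C
        · rw [midE_not_mem_mem hvB (Finset.mem_union_right _ hvC)]
        · have hvBC : v ∉ B ∪ C := fun h => (Finset.mem_union.mp h).elim hvB hvC
          rw [midE_not_mem_not_mem hvB hvBC]
          by_cases hvT : v ∈ T
          · rw [put_mem hvT, put_mem hvT]
          · rw [put_not_mem hvT, put_not_mem hvT]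
            exact hcond v (by
              intro h
              rcases Finset.mem_union.mp h with h1 | h1
              · exact (Finset.mem_union.mp h1).elim hvA hvB
              · exact hvC h1) hvT
    have hGeq : G (midE d (A ∪ B) B (put d T x q) (put d T y q) b) (put d T y q)
        = G (put d T x q') (midE d (B ∪ C) B (put d T x q') (put d T y q') b') := by
      apply hG.2
      · intro v hv
        rcases Finset.mem_union.mp hv with hvB | hvC
        · rw [midE_mem hvB, put_mem (hBT hvB), hq'B v hvB]
        · have hvB : v ∉ B := fun h => hBnC v h hvC
          have hvT : v ∉ T := hCnT v hvC
          rw [midE_not_mem_not_mem hvB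
              (fun h => (Finset.mem_union.mp h).elim (fun hh => hAnC v hh hvC) hvB),
            put_not_mem hvT, put_not_mem hvT]
      · intro v hv
        rcases Finset.mem_union.mp hv with hvB | hvC
        · rw [put_mem (hBT hvB), midE_mem hvB, hb'B v hvB]
        · have hvB : v ∉ B := fun h => hBnC v h hvC
          have hvT : v ∉ T := hCnT v hvC
          rw [put_not_mem hvT, midE_not_mem_mem hvB hv, put_not_mem hvT]
      · intro v hv
        have hvB : v ∉ B := fun h => hv (Finset.mem_union_left _ h)
        have hvC : v ∉ C := fun h => hv (Finset.mem_union_right _ h)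
        by_cases hvA : v ∈ A
        · rw [midE_not_mem_mem hvB (Finset.mem_union_left _ hvA)]
        · have hvAB : v ∉ A ∪ B := fun h => (Finset.mem_union.mp h).elim hvA hvB
          rw [midE_not_mem_not_mem hvB hvAB]
          by_cases hvT : v ∈ T
          · rw [put_mem hvT, put_mem hvT]
          · rw [put_not_mem hvT, put_not_mem hvT]
            exact hcond v (by
              intro h
              rcases Finset.mem_union.mp h with h1 | h1
              · exact (Finset.mem_union.mp h1).elim hvA hvB
              · exact hvC h1) hvT
      · intro v hv
        have hvB : v ∉ B := fun h => hv (Finset.mem_union_left _ h)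
        rw [midE_not_mem_not_mem hvB hv]
    rw [hFeq, hGeq, mul_comm]
  · -- degenerate case: both sides vanish termwise
    push_neg at hcond
    obtain ⟨v₀, hv₀S, hv₀T, hne⟩ := hcond
    have hv₀A : v₀ ∉ A := fun h => hv₀S (Finset.mem_union_left _ (Finset.mem_union_left _ h))
    have hv₀B : v₀ ∉ B := fun h => hv₀S (Finset.mem_union_left _ (Finset.mem_union_right _ h))
    have hv₀C : v₀ ∉ C := fun h => hv₀S (Finset.mem_union_right _ h)
    have hv₀AB : v₀ ∉ A ∪ B := fun h => (Finset.mem_union.mp h).elim hv₀A hv₀B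
    have hv₀BC : v₀ ∉ B ∪ C := fun h => (Finset.mem_union.mp h).elim hv₀B hv₀C
    rw [Finset.sum_eq_zero, Finset.sum_eq_zero]
    · intro z _
      apply Finset.sum_eq_zero
      intro b _
      have : F (midE d (B ∪ C) B (ovr d T x z) (ovr d T y z) b) (ovr d T y z) = 0 := by
        apply hF.1
        refine ⟨v₀, hv₀AB, ?_⟩
        rw [midE_not_mem_not_mem hv₀B hv₀BC, ovr_not_mem hv₀T, ovr_not_mem hv₀T]
        exact hne
      rw [this, mul_zero]
    · intro z _
      apply Finset.sum_eq_zero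
      intro b _
      have : G (midE d (A ∪ B) B (ovr d T x z) (ovr d T y z) b) (ovr d T y z) = 0 := by
        apply hG.1
        refine ⟨v₀, hv₀BC, ?_⟩
        rw [midE_not_mem_not_mem hv₀B hv₀AB, ovr_not_mem hv₀T, ovr_not_mem hv₀T]
        exact hne
      rw [this, mul_zero]

end Aux4

/-- Lemma on genuine operators: the commutator of a genuine operator on
`A ∪ B` with a genuine operator on `B ∪ C` is a sum of operators genuine on sets
`A ∪ B' ∪ C` with `∅ ≠ B' ⊆ B`; in particular its partial traces over nonempty subsets of
`A ∪ C` and over `B` vanish when it is nonzero. -/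
theorem commutator_of_genuine {V : Type} [Fintype V] [DecidableEq V]
    (d : V → ℕ) (hd : ∀ v, 1 ≤ d v) (A B C : Finset V)
    (hAB : Disjoint A B) (hAC : Disjoint A C) (hBC : Disjoint B C)
    (H_AB H_BC : Op V d) (hHAB : Genuine d (A ∪ B) H_AB) (hHBC : Genuine d (B ∪ C) H_BC)
    (K : Finset V → Op V d)
    (hK : IsCumulantDecomp d (H_AB * H_BC - H_BC * H_AB) K) :
    (∀ X : Finset V, (¬ ∃ B' : Finset V, B'.Nonempty ∧ B' ⊆ B ∧ X = A ∪ B' ∪ C) →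
      K X = 0) ∧
    (H_AB * H_BC - H_BC * H_AB ≠ 0 →
      (∀ Y : Finset V, Y.Nonempty → Y ⊆ A ∪ C →
        ptrace d Y (H_AB * H_BC - H_BC * H_AB) = 0) ∧
      ptrace d B (H_AB * H_BC - H_BC * H_AB) = 0) := by
  classical
  set M : Op V d := H_AB * H_BC - H_BC * H_AB with hM
  obtain ⟨hKgen, hKsum⟩ := hK
  have hAnB : ∀ v ∈ A, v ∉ B := fun v hv => Finset.disjoint_left.mp hAB hv
  have hAnC : ∀ v ∈ A, v ∉ C := fun v hv => Finset.disjoint_left.mp hAC hv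
  have hBnC : ∀ v ∈ B, v ∉ C := fun v hv => Finset.disjoint_left.mp hBC hv
  have hCnB : ∀ v ∈ C, v ∉ B := fun v hv => Finset.disjoint_right.mp hBC hv
  -- trace-sum vanishing lemmas
  have tzA : ∀ (T : Finset V) (a : V), a ∈ T → a ∈ A →
      ∀ x y, ∑ z, M (ovr d T x z) (ovr d T y z) = 0 := by
    intro T a haT haA x y
    have haAB : a ∈ A ∪ B := Finset.mem_union_left _ haA
    have haBC : a ∉ B ∪ C := fun h =>
      (Finset.mem_union.mp h).elim (hAnB a haA) (hAnC a haA)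
    have h1 := core1 hHAB hHBC.1 haAB haBC haT x y
    have h2 := core1R hHBC.1 hHAB haAB haBC haT x y
    simp only [hM, Matrix.sub_apply]
    rw [Finset.sum_sub_distrib, h1, h2, sub_zero]
  have tzC : ∀ (T : Finset V) (a : V), a ∈ T → a ∈ C →
      ∀ x y, ∑ z, M (ovr d T x z) (ovr d T y z) = 0 := by
    intro T a haT haC x y
    have haBC : a ∈ B ∪ C := Finset.mem_union_right _ haC
    have haAB : a ∉ A ∪ B := fun h =>
      (Finset.mem_union.mp h).elim (fun hh => hAnC a hh haC) (hCnB a haC)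
    have h1 := core1R hHAB.1 hHBC haBC haAB haT x y
    have h2 := core1 hHBC hHAB.1 haBC haAB haT x y
    simp only [hM, Matrix.sub_apply]
    rw [Finset.sum_sub_distrib, h1, h2, sub_zero]
  have tzB : ∀ (T : Finset V), B ⊆ T → Disjoint T A → Disjoint T C →
      ∀ x y, ∑ z, M (ovr d T x z) (ovr d T y z) = 0 := by
    intro T h1 h2 h3 x y
    simp only [hM, Matrix.sub_apply]
    rw [Finset.sum_sub_distrib, core2 hAB hAC hBC hHAB.1 hHBC.1 h1 h2 h3 x y, sub_self]
  -- M is supported on A ∪ B ∪ C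
  have hMsupp : SupportedOn d (A ∪ B ∪ C) M := by
    rw [hM]
    have h1 := supportedOn_mul hHAB.1 hHBC.1
    have h2 := supportedOn_mul hHBC.1 hHAB.1
    exact supportedOn_sub
      (supportedOn_mono h1 (by intro v hv; simp only [Finset.mem_union] at hv ⊢; tauto))
      (supportedOn_mono h2 (by intro v hv; simp only [Finset.mem_union] at hv ⊢; tauto))
  -- the compression of M onto X recovers the partial sums of the cumulants
  have stepA : ∀ X : Finset V, Pm d X M = ∑ Z ∈ X.powerset, K Z := by
    intro X
    calc Pm d X M = ∑ Z : Finset V, Pm d X (K Z) := by rw [hKsum, Pm_sum]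
      _ = ∑ Z ∈ X.powerset, Pm d X (K Z) :=
          (Finset.sum_subset (Finset.subset_univ _) (fun Z _ hZ =>
            Pm_eq_zero_of_genuine (hKgen Z)
              (fun h => hZ (Finset.mem_powerset.mpr h)))).symm
      _ = ∑ Z ∈ X.powerset, K Z := Finset.sum_congr rfl (fun Z hZ =>
          Pm_eq_self hd (supportedOn_mono (hKgen Z).1 (Finset.mem_powerset.mp hZ)))
  have PM1 : ∀ X : Finset V, ¬ (A ∪ C ⊆ X) → Pm d X M = 0 := by
    intro X hX
    obtain ⟨a, haAC, haX⟩ := Finset.not_subset.mp hX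
    apply Pm_eq_zero_of_sum
    intro x y
    have haT : a ∈ Xᶜ := Finset.mem_compl.mpr haX
    rcases Finset.mem_union.mp haAC with haA | haC
    · exact tzA Xᶜ a haT haA x y
    · exact tzC Xᶜ a haT haC x y
  have PM2 : Pm d (A ∪ C) M = 0 := by
    apply Pm_eq_zero_of_sum
    intro x y
    apply tzB (A ∪ C)ᶜ
    · intro v hv
      exact Finset.mem_compl.mpr (fun h =>
        (Finset.mem_union.mp h).elim (fun hh => hAnB v hh hv) (fun hh => hCnB v hh hv))
    · exact Finset.disjoint_left.mpr (fun v hv hva =>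
        (Finset.mem_compl.mp hv) (Finset.mem_union_left _ hva))
    · exact Finset.disjoint_left.mpr (fun v hv hvc =>
        (Finset.mem_compl.mp hv) (Finset.mem_union_right _ hvc))
  -- the main induction: bad cumulants vanish
  have main : ∀ X : Finset V,
      (¬ ∃ B' : Finset V, B'.Nonempty ∧ B' ⊆ B ∧ X = A ∪ B' ∪ C) → K X = 0 := by
    intro X
    induction X using Finset.strongInduction with
    | _ X IH =>
      intro hbad
      have h1 : ∑ Z ∈ X.powerset, K Z = K X + ∑ Z ∈ X.powerset.erase X, K Z :=
        (Finset.add_sum_erase _ K (Finset.mem_powerset_self X)).symm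
      have hsum : K X = Pm d X M - ∑ Z ∈ X.powerset.erase X, K Z := by
        rw [stepA X, h1]
        exact (add_sub_cancel_right _ _).symm
      have hss : ∀ Z ∈ X.powerset.erase X, Z ⊂ X := by
        intro Z hZ
        exact Finset.ssubset_iff_subset_ne.mpr
          ⟨Finset.mem_powerset.mp (Finset.mem_of_mem_erase hZ), Finset.ne_of_mem_erase hZ⟩
      by_cases hACX : A ∪ C ⊆ X
      · by_cases hXS : X ⊆ A ∪ B ∪ C
        · rcases Finset.eq_empty_or_nonempty (X ∩ B) with hXB | hXB
          · -- X = A ∪ C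
            have hXeq : X = A ∪ C := by
              apply Finset.Subset.antisymm
              · intro v hv
                rcases Finset.mem_union.mp (hXS hv) with h | h
                · rcases Finset.mem_union.mp h with h' | h'
                  · exact Finset.mem_union_left _ h'
                  · exfalso
                    have := Finset.mem_inter.mpr ⟨hv, h'⟩
                    rw [hXB] at this
                    exact Finset.notMem_empty v this
                · exact Finset.mem_union_right _ h
              · exact hACX
            have hz : ∑ Z ∈ X.powerset.erase X, K Z = 0 := by
              apply Finset.sum_eq_zero
              intro Z hZ
              apply IH Z (hss Z hZ)
              rintro ⟨B', hB1, hB2, rfl⟩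
              have : A ∪ C ⊆ A ∪ B' ∪ C := by
                intro v hv
                rcases Finset.mem_union.mp hv with h | h
                · exact Finset.mem_union_left _ (Finset.mem_union_left _ h)
                · exact Finset.mem_union_right _ h
              obtain ⟨hsub, hneq⟩ := Finset.ssubset_iff_subset_ne.mp (hss _ hZ)
              apply hneq
              apply Finset.Subset.antisymm hsub
              rw [hXeq]
              exact this
            rw [hsum, hz, sub_zero, hXeq, PM2]
          · exfalso
            apply hbad
            refine ⟨X ∩ B, hXB, Finset.inter_subset_right, ?_⟩
            apply Finset.Subset.antisymm
            · intro v hv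
              rcases Finset.mem_union.mp (hXS hv) with h | h
              · rcases Finset.mem_union.mp h with h' | h'
                · exact Finset.mem_union_left _ (Finset.mem_union_left _ h')
                · exact Finset.mem_union_left _
                    (Finset.mem_union_right _ (Finset.mem_inter.mpr ⟨hv, h'⟩))
              · exact Finset.mem_union_right _ h
            · intro v hv
              rcases Finset.mem_union.mp hv with h | h
              · rcases Finset.mem_union.mp h with h' | h'
                · exact hACX (Finset.mem_union_left _ h')
                · exact (Finset.mem_inter.mp h').1
              · exact hACX (Finset.mem_union_right _ h)
        · -- there is a site of X outside A ∪ B ∪ C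
          obtain ⟨w, hwX, hwS⟩ := Finset.not_subset.mp hXS
          have hsplit : ∑ Z ∈ X.powerset.erase X, K Z
              = ∑ Z ∈ (X.powerset.erase X).filter (fun Z => w ∈ Z), K Z
                + ∑ Z ∈ (X.powerset.erase X).filter (fun Z => w ∉ Z), K Z :=
            (Finset.sum_filter_add_sum_filter_not _ _ _).symm
          have hz1 : ∑ Z ∈ (X.powerset.erase X).filter (fun Z => w ∈ Z), K Z = 0 := by
            apply Finset.sum_eq_zero
            intro Z hZ
            obtain ⟨hZs, hwZ⟩ := Finset.mem_filter.mp hZ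
            apply IH Z (hss Z hZs)
            rintro ⟨B', hB1, hB2, rfl⟩
            rcases Finset.mem_union.mp hwZ with h | h
            · rcases Finset.mem_union.mp h with h' | h'
              · exact hwS (Finset.mem_union_left _ (Finset.mem_union_left _ h'))
              · exact hwS (Finset.mem_union_left _ (Finset.mem_union_right _ (hB2 h')))
            · exact hwS (Finset.mem_union_right _ h)
          have hset : (X.powerset.erase X).filter (fun Z => w ∉ Z)
              = (X.erase w).powerset := by
            ext Z
            simp only [Finset.mem_filter, Finset.mem_erase, Finset.mem_powerset]
            constructor
            · rintro ⟨⟨hne, hZX⟩, hwZ⟩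
              intro v hv
              exact Finset.mem_erase.mpr ⟨fun h => hwZ (h ▸ hv), hZX hv⟩
            · intro h
              have hwZ : w ∉ Z := fun hw => (Finset.mem_erase.mp (h hw)).1 rfl
              refine ⟨⟨?_, fun v hv => Finset.erase_subset _ _ (h hv)⟩, hwZ⟩
              rintro rfl
              exact hwZ hwX
          rw [hsum, hsplit, hz1, zero_add, hset, ← stepA (X.erase w),
            Pm_erase hMsupp hwX hwS, sub_self]
      · -- A ∪ C ⊄ X : everything below X is bad too
        have hz : ∑ Z ∈ X.powerset.erase X, K Z = 0 := by
          apply Finset.sum_eq_zero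
          intro Z hZ
          apply IH Z (hss Z hZ)
          rintro ⟨B', hB1, hB2, rfl⟩
          apply hACX
          intro v hv
          apply (hss _ hZ).1
          rcases Finset.mem_union.mp hv with h | h
          · exact Finset.mem_union_left _ (Finset.mem_union_left _ h)
          · exact Finset.mem_union_right _ h
        rw [hsum, hz, sub_zero, PM1 X hACX]
  refine ⟨main, fun _ => ⟨?_, ?_⟩⟩
  · intro Y hYne hYAC
    obtain ⟨a, haY⟩ := hYne
    apply ptrace_zero_of_sum hd
    intro x y
    rcases Finset.mem_union.mp (hYAC haY) with h | h
    · exact tzA Y a haY h x y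
    · exact tzC Y a haY h x y
  · apply ptrace_zero_of_sum hd
    intro x y
    exact tzB B (subset_refl B) hAB.symm hBC x y

end
end

section
/- Every operator H on the multipartite system admits a decomposition H = Σ_{X ⊆ V} K_X in which each K_X is genuine on X (the X = ∅ term being a scalar multiple of the identity), and this decomposition is unique: if H = Σ_{X ⊆ V} K_X = Σ_{X ⊆ V} K'_X with all K_X and K'_X genuine on X, then K_X = K'_X for every X ⊆ V. -/
open Matrix
open scoped ComplexOrder

noncomputable section

namespace CumulantProof

open Finset

set_option linter.unusedSectionVars false

variable {V : Type} [Fintype V] [DecidableEq V] (d : V → ℕ)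

/-- Configurations on the sites in `T`. -/
abbrev Cfg (T : Finset V) : Type := (v : {v : V // v ∈ T}) → Fin (d v.1)

lemma cfg_nonempty (hd : ∀ v, 1 ≤ d v) (T : Finset V) : Nonempty (Cfg d T) :=
  ⟨fun v => ⟨0, hd v.1⟩⟩

/-- Number of configurations on `T`, as a complex number. -/
def Nc (T : Finset V) : ℂ := (Fintype.card (Cfg d T) : ℂ)

lemma Nc_ne_zero (hd : ∀ v, 1 ≤ d v) (T : Finset V) : Nc d T ≠ 0 := by
  have h : 0 < Fintype.card (Cfg d T) := @Fintype.card_pos _ _ (cfg_nonempty d hd T)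
  exact Nat.cast_ne_zero.mpr h.ne'

/-- Overwrite the full configuration `x` on `T` by `z`. -/
def embc (T : Finset V) (x : (v : V) → Fin (d v)) (z : Cfg d T) : (v : V) → Fin (d v) :=
  fun v => if h : v ∈ T then z ⟨v, h⟩ else x v

/-- Conditional expectation: trace out `T` and act as identity there. -/
def Ec (T : Finset V) (M : Op V d) : Op V d :=
  Matrix.of fun x y =>
    if ∀ v ∈ T, x v = y v then
      (Nc d T)⁻¹ * ∑ z : Cfg d T, M (embc d T x z) (embc d T y z)
    else 0

/-- Glue configurations on disjoint `A`, `B` into one on `U = A ∪ B`. -/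
def glue' {A B U : Finset V} (hU : ∀ v, v ∈ U ↔ v ∈ A ∨ v ∈ B)
    (a : Cfg d A) (b : Cfg d B) : Cfg d U :=
  fun v => if h : v.1 ∈ A then a ⟨v.1, h⟩ else b ⟨v.1, ((hU v.1).mp v.2).resolve_left h⟩

lemma glue'_bijective {A B U : Finset V} (hU : ∀ v, v ∈ U ↔ v ∈ A ∨ v ∈ B)
    (hAB : Disjoint A B) :
    Function.Bijective (fun p : Cfg d A × Cfg d B => glue' d hU p.1 p.2) := by
  rw [Function.bijective_iff_has_inverse]
  refine ⟨fun c => ⟨fun v => c ⟨v.1, (hU v.1).mpr (Or.inl v.2)⟩,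
                   fun v => c ⟨v.1, (hU v.1).mpr (Or.inr v.2)⟩⟩, ?_, ?_⟩
  · rintro ⟨a, b⟩
    refine Prod.ext ?_ ?_ <;> funext v
    · simp [glue', v.2]
    · have hvA : v.1 ∉ A := Finset.disjoint_right.mp hAB v.2
      simp [glue', hvA]
  · intro c
    funext v
    by_cases h : v.1 ∈ A
    · simp [glue', h]
    · simp [glue', h]

lemma sum_glue' {A B U : Finset V} (hU : ∀ v, v ∈ U ↔ v ∈ A ∨ v ∈ B)
    (hAB : Disjoint A B) (f : Cfg d U → ℂ) :
    ∑ c : Cfg d U, f c = ∑ a : Cfg d A, ∑ b : Cfg d B, f (glue' d hU a b) := by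
  have h2 : ∑ p : Cfg d A × Cfg d B, f (glue' d hU p.1 p.2) = ∑ c : Cfg d U, f c :=
    Fintype.sum_bijective _ (glue'_bijective d hU hAB) _ _ (fun p => rfl)
  rw [← h2]
  exact Fintype.sum_prod_type _

lemma Nc_mul {A B U : Finset V} (hU : ∀ v, v ∈ U ↔ v ∈ A ∨ v ∈ B)
    (hAB : Disjoint A B) : Nc d U = Nc d A * Nc d B := by
  unfold Nc
  rw [← Nat.cast_mul, ← Fintype.card_prod]
  exact congrArg _ (Fintype.card_of_bijective (glue'_bijective d hU hAB)).symm

lemma sum_restr {A U : Finset V} (hAU : A ⊆ U) (g : Cfg d A → ℂ) :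
    ∑ c : Cfg d U, g (fun v => c ⟨v.1, hAU v.2⟩) =
      Nc d (U \ A) * ∑ a : Cfg d A, g a := by
  have hU : ∀ v, v ∈ U ↔ v ∈ A ∨ v ∈ U \ A := by
    intro v
    constructor
    · intro h
      by_cases hA : v ∈ A
      · exact Or.inl hA
      · exact Or.inr (Finset.mem_sdiff.mpr ⟨h, hA⟩)
    · rintro (h | h)
      · exact hAU h
      · exact (Finset.mem_sdiff.mp h).1
  have hAB : Disjoint A (U \ A) := Finset.disjoint_sdiff
  rw [sum_glue' d hU hAB]
  have key : ∀ (a : Cfg d A) (b : Cfg d (U \ A)),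
      (fun v : {v : V // v ∈ A} => glue' d hU a b ⟨v.1, hAU v.2⟩) = a := by
    intro a b; funext v; unfold glue'; rw [dif_pos v.2]
  calc ∑ a : Cfg d A, ∑ _b : Cfg d (U \ A), g (fun v => glue' d hU a _b ⟨v.1, hAU v.2⟩)
      = ∑ a : Cfg d A, ∑ _b : Cfg d (U \ A), g a := by
        apply Finset.sum_congr rfl; intro a _
        apply Finset.sum_congr rfl; intro b _
        rw [key a b]
    _ = ∑ _b : Cfg d (U \ A), ∑ a : Cfg d A, g a := Finset.sum_comm
    _ = Nc d (U \ A) * ∑ a : Cfg d A, g a := by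
        rw [Finset.sum_const, Finset.card_univ, nsmul_eq_mul]; rfl

/- ### Supported-on lemmas -/

lemma supportedOn_mono {S X : Finset V} (hSX : S ⊆ X) {M : Op V d}
    (h : SupportedOn d S M) : SupportedOn d X M := by
  constructor
  · rintro x y ⟨v, hv, hne⟩
    exact h.1 x y ⟨v, fun hS => hv (hSX hS), hne⟩
  · intro x y x' y' hx hy hxy hxy'
    by_cases hdiff : ∃ v, v ∉ S ∧ x v ≠ y v
    · obtain ⟨v, hvS, hne⟩ := hdiff
      rw [h.1 x y ⟨v, hvS, hne⟩]
      by_cases hvX : v ∈ X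
      · refine (h.1 x' y' ⟨v, hvS, ?_⟩).symm
        rw [← hx v hvX, ← hy v hvX]; exact hne
      · exact absurd (hxy v hvX) hne
    · push_neg at hdiff
      have hdiff' : ∀ v, v ∉ S → x' v = y' v := by
        intro v hvS
        by_cases hvX : v ∈ X
        · rw [← hx v hvX, ← hy v hvX]; exact hdiff v hvS
        · exact hxy' v hvX
      exact h.2 x y x' y' (fun v hv => hx v (hSX hv)) (fun v hv => hy v (hSX hv))
        hdiff hdiff'

lemma supportedOn_zero (X : Finset V) : SupportedOn d X (0 : Op V d) :=
  ⟨fun _ _ _ => rfl, fun _ _ _ _ _ _ _ _ => rfl⟩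

lemma supportedOn_add {X : Finset V} {M N : Op V d} (hM : SupportedOn d X M)
    (hN : SupportedOn d X N) : SupportedOn d X (M + N) := by
  constructor
  · intro x y h
    show M x y + N x y = 0
    rw [hM.1 x y h, hN.1 x y h, add_zero]
  · intro x y x' y' hx hy hxy hxy'
    show M x y + N x y = M x' y' + N x' y'
    rw [hM.2 x y x' y' hx hy hxy hxy', hN.2 x y x' y' hx hy hxy hxy']

lemma supportedOn_smul {X : Finset V} (c : ℂ) {M : Op V d} (hM : SupportedOn d X M) :
    SupportedOn d X (c • M) := by
  constructor
  · intro x y h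
    show c * M x y = 0
    rw [hM.1 x y h, mul_zero]
  · intro x y x' y' hx hy hxy hxy'
    show c * M x y = c * M x' y'
    rw [hM.2 x y x' y' hx hy hxy hxy']

lemma supportedOn_sum {ι : Type*} {X : Finset V} (s : Finset ι) (f : ι → Op V d)
    (h : ∀ i ∈ s, SupportedOn d X (f i)) : SupportedOn d X (∑ i ∈ s, f i) := by
  classical
  induction s using Finset.induction_on with
  | empty => simpa using supportedOn_zero d X
  | insert _ _ hni ih =>
    rw [Finset.sum_insert hni]
    exact supportedOn_add d (h _ (Finset.mem_insert_self _ _))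
      (ih fun i hi => h i (Finset.mem_insert_of_mem hi))

/- ### Basic properties of `Ec` -/

lemma supportedOn_Ec (S : Finset V) (M : Op V d) : SupportedOn d S (Ec d Sᶜ M) := by
  constructor
  · rintro x y ⟨v, hv, hne⟩
    show (if ∀ w ∈ Sᶜ, x w = y w then _ else 0) = 0
    rw [if_neg]
    push_neg
    exact ⟨v, Finset.mem_compl.mpr hv, hne⟩
  · intro x y x' y' hx hy hxy hxy'
    have hx2 : ∀ z, embc d Sᶜ x z = embc d Sᶜ x' z := by
      intro z; funext v
      unfold embc
      by_cases h : v ∈ Sᶜ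
      · rw [dif_pos h, dif_pos h]
      · rw [dif_neg h, dif_neg h]
        exact hx v (by simpa using h)
    have hy2 : ∀ z, embc d Sᶜ y z = embc d Sᶜ y' z := by
      intro z; funext v
      unfold embc
      by_cases h : v ∈ Sᶜ
      · rw [dif_pos h, dif_pos h]
      · rw [dif_neg h, dif_neg h]
        exact hy v (by simpa using h)
    have c1 : ∀ w ∈ Sᶜ, x w = y w := fun w hw => hxy w (Finset.mem_compl.mp hw)
    have c2 : ∀ w ∈ Sᶜ, x' w = y' w := fun w hw => hxy' w (Finset.mem_compl.mp hw)
    show (if ∀ w ∈ Sᶜ, x w = y w then _ else 0) = (if ∀ w ∈ Sᶜ, x' w = y' w then _ else 0)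
    rw [if_pos c1, if_pos c2]
    congr 1
    apply Finset.sum_congr rfl
    intro z _
    rw [hx2 z, hy2 z]

lemma Ec_of_supportedOn (hd : ∀ v, 1 ≤ d v) {S : Finset V} {M : Op V d}
    (h : SupportedOn d S M) : Ec d Sᶜ M = M := by
  ext x y
  show (if ∀ v ∈ Sᶜ, x v = y v then
      (Nc d Sᶜ)⁻¹ * ∑ z : Cfg d Sᶜ, M (embc d Sᶜ x z) (embc d Sᶜ y z) else 0) = M x y
  by_cases hc : ∀ v ∈ Sᶜ, x v = y v
  · rw [if_pos hc]
    have key : ∀ z : Cfg d Sᶜ, M (embc d Sᶜ x z) (embc d Sᶜ y z) = M x y := by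
      intro z
      apply h.2
      · intro v hv
        unfold embc
        rw [dif_neg (by simp [Finset.mem_compl, hv])]
      · intro v hv
        unfold embc
        rw [dif_neg (by simp [Finset.mem_compl, hv])]
      · intro v hv
        unfold embc
        rw [dif_pos (Finset.mem_compl.mpr hv), dif_pos (Finset.mem_compl.mpr hv)]
      · intro v hv
        exact hc v (Finset.mem_compl.mpr hv)
    rw [Finset.sum_congr rfl fun z _ => key z, Finset.sum_const, Finset.card_univ,
      nsmul_eq_mul]
    rw [show ((Fintype.card (Cfg d Sᶜ) : ℂ)) = Nc d Sᶜ from rfl, ← mul_assoc,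
      inv_mul_cancel₀ (Nc_ne_zero d hd Sᶜ), one_mul]
  · rw [if_neg hc]
    push_neg at hc
    obtain ⟨v, hv, hne⟩ := hc
    exact (h.1 x y ⟨v, Finset.mem_compl.mp hv, hne⟩).symm

lemma supportedOn_univ (M : Op V d) : SupportedOn d Finset.univ M := by
  constructor
  · rintro x y ⟨v, hv, -⟩
    exact absurd (Finset.mem_univ v) hv
  · intro x y x' y' hx hy _ _
    have h1 : x = x' := funext fun v => hx v (Finset.mem_univ v)
    have h2 : y = y' := funext fun v => hy v (Finset.mem_univ v)
    rw [h1, h2]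

lemma Ec_empty (hd : ∀ v, 1 ≤ d v) (M : Op V d) : Ec d ∅ M = M := by
  have h := Ec_of_supportedOn d hd (supportedOn_univ d M)
  rwa [Finset.compl_univ] at h

lemma Ec_zero (T : Finset V) : Ec d T (0 : Op V d) = 0 := by
  ext x y
  show (if ∀ v ∈ T, x v = y v then
      (Nc d T)⁻¹ * ∑ _z : Cfg d T, (0:ℂ) else 0) = 0
  simp

lemma Ec_add (T : Finset V) (M N : Op V d) : Ec d T (M + N) = Ec d T M + Ec d T N := by
  ext x y
  simp only [Ec, Matrix.of_apply, Matrix.add_apply]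
  split_ifs with h
  · rw [Finset.sum_add_distrib, mul_add]
  · rw [add_zero]

lemma Ec_smul (T : Finset V) (c : ℂ) (M : Op V d) : Ec d T (c • M) = c • Ec d T M := by
  ext x y
  simp only [Ec, Matrix.of_apply, Matrix.smul_apply, smul_eq_mul]
  split_ifs with h
  · rw [← Finset.mul_sum]; ring
  · rw [mul_zero]

lemma Ec_sum {ι : Type*} (s : Finset ι) (T : Finset V) (f : ι → Op V d) :
    Ec d T (∑ i ∈ s, f i) = ∑ i ∈ s, Ec d T (f i) := by
  classical
  induction s using Finset.induction_on with
  | empty => simpa using Ec_zero d T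
  | insert _ _ hni ih =>
    rw [Finset.sum_insert hni, Finset.sum_insert hni, Ec_add, ih]

lemma Ec_entry (T : Finset V) (M : Op V d) (x y : (v : V) → Fin (d v)) :
    Ec d T M x y = if ∀ v ∈ T, x v = y v then
      (Nc d T)⁻¹ * ∑ z : Cfg d T, M (embc d T x z) (embc d T y z)
    else 0 := rfl

lemma Ec_comp (hd : ∀ v, 1 ≤ d v) (T T' : Finset V) (M : Op V d) :
    Ec d T' (Ec d T M) = Ec d (T ∪ T') M := by
  have hU : ∀ v, v ∈ T ∪ T' ↔ v ∈ T ∨ v ∈ T' \ T := by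
    intro v
    simp only [Finset.mem_union, Finset.mem_sdiff]
    tauto
  have hAB : Disjoint T (T' \ T) := Finset.disjoint_sdiff
  have hU2 : ∀ v, v ∈ T' ↔ v ∈ T' \ T ∨ v ∈ T' ∩ T := by
    intro v
    simp only [Finset.mem_sdiff, Finset.mem_inter]
    tauto
  have hAB2 : Disjoint (T' \ T) (T' ∩ T) := by
    refine Finset.disjoint_left.mpr fun v hv hv2 => ?_
    exact (Finset.mem_sdiff.mp hv).2 (Finset.mem_inter.mp hv2).2
  ext x y
  rw [Ec_entry d T' (Ec d T M) x y, Ec_entry d (T ∪ T') M x y]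
  by_cases hC' : ∀ v ∈ T', x v = y v
  · by_cases hCU : ∀ v ∈ T ∪ T', x v = y v
    · rw [if_pos hC', if_pos hCU]
      have hinner : ∀ z : Cfg d T', ∀ v ∈ T, embc d T' x z v = embc d T' y z v := by
        intro z v hv
        unfold embc
        by_cases h : v ∈ T'
        · rw [dif_pos h, dif_pos h]
        · rw [dif_neg h, dif_neg h]
          exact hCU v (Finset.mem_union_left _ hv)
      have key : ∀ (u : (v : V) → Fin (d v)) (z : Cfg d T') (w : Cfg d T),
          embc d T (embc d T' u z) w
            = embc d (T ∪ T') u (glue' d hU w (fun v => z ⟨v.1, Finset.sdiff_subset v.2⟩)) := by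
        intro u z w
        funext v
        by_cases h1 : v ∈ T <;> by_cases h2 : v ∈ T' <;>
          simp [embc, glue', h1, h2, Finset.mem_union]
      calc (Nc d T')⁻¹ * ∑ z : Cfg d T', Ec d T M (embc d T' x z) (embc d T' y z)
          = (Nc d T')⁻¹ * ∑ z : Cfg d T', ((Nc d T)⁻¹ * ∑ w : Cfg d T,
              M (embc d T (embc d T' x z) w) (embc d T (embc d T' y z) w)) := by
            congr 1
            apply Finset.sum_congr rfl
            intro z _
            rw [Ec_entry, if_pos (hinner z)]
        _ = (Nc d T')⁻¹ * ((Nc d T)⁻¹ * ∑ z : Cfg d T', ∑ w : Cfg d T,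
              M (embc d (T ∪ T') x (glue' d hU w (fun v => z ⟨v.1, Finset.sdiff_subset v.2⟩)))
                (embc d (T ∪ T') y (glue' d hU w (fun v => z ⟨v.1, Finset.sdiff_subset v.2⟩)))) := by
            conv_rhs => rw [Finset.mul_sum]
            congr 1
            apply Finset.sum_congr rfl
            intro z _
            congr 1
            apply Finset.sum_congr rfl
            intro w _
            rw [key x z w, key y z w]
        _ = (Nc d T')⁻¹ * ((Nc d T)⁻¹ * ∑ w : Cfg d T, ∑ z : Cfg d T',
              M (embc d (T ∪ T') x (glue' d hU w (fun v => z ⟨v.1, Finset.sdiff_subset v.2⟩)))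
                (embc d (T ∪ T') y (glue' d hU w (fun v => z ⟨v.1, Finset.sdiff_subset v.2⟩)))) := by
            rw [Finset.sum_comm]
        _ = (Nc d T')⁻¹ * ((Nc d T)⁻¹ * ∑ w : Cfg d T, (Nc d (T' \ (T' \ T)) *
              ∑ u : Cfg d (T' \ T),
              M (embc d (T ∪ T') x (glue' d hU w u)) (embc d (T ∪ T') y (glue' d hU w u)))) := by
            congr 1
            congr 1
            apply Finset.sum_congr rfl
            intro w _
            exact sum_restr d Finset.sdiff_subset
              (fun u => M (embc d (T ∪ T') x (glue' d hU w u)) (embc d (T ∪ T') y (glue' d hU w u)))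
        _ = ((Nc d T')⁻¹ * (Nc d T)⁻¹ * Nc d (T' ∩ T)) * ∑ w : Cfg d T, ∑ u : Cfg d (T' \ T),
              M (embc d (T ∪ T') x (glue' d hU w u)) (embc d (T ∪ T') y (glue' d hU w u)) := by
            rw [Finset.sdiff_sdiff_self_left, ← Finset.mul_sum]
            ring
        _ = (Nc d (T ∪ T'))⁻¹ * ∑ c : Cfg d (T ∪ T'),
              M (embc d (T ∪ T') x c) (embc d (T ∪ T') y c) := by
            rw [sum_glue' d hU hAB
              (fun c => M (embc d (T ∪ T') x c) (embc d (T ∪ T') y c))]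
            congr 1
            have e1 : Nc d (T ∪ T') = Nc d T * Nc d (T' \ T) := Nc_mul d hU hAB
            have e2 : Nc d T' = Nc d (T' \ T) * Nc d (T' ∩ T) := Nc_mul d hU2 hAB2
            have n1 := Nc_ne_zero d hd T
            have n2 := Nc_ne_zero d hd (T' \ T)
            have n3 := Nc_ne_zero d hd (T' ∩ T)
            rw [e1, e2]
            field_simp
    · rw [if_pos hC', if_neg hCU]
      push_neg at hCU
      obtain ⟨v, hv, hne⟩ := hCU
      have hvT' : v ∉ T' := fun h => hne (hC' v h)
      have hvT : v ∈ T := by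
        rcases Finset.mem_union.mp hv with h | h
        · exact h
        · exact absurd h hvT'
      have hzero : ∀ z : Cfg d T', Ec d T M (embc d T' x z) (embc d T' y z) = 0 := by
        intro z
        rw [Ec_entry, if_neg]
        push_neg
        refine ⟨v, hvT, ?_⟩
        unfold embc
        rw [dif_neg hvT', dif_neg hvT']
        exact hne
      rw [Finset.sum_congr rfl fun z _ => hzero z, Finset.sum_const, smul_zero, mul_zero]
  · rw [if_neg hC', if_neg fun hCU => hC' fun v hv => hCU v (Finset.mem_union_right _ hv)]

/- ### Relation between `Ec` and `ptrace` -/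

lemma embc_mergeConfig {Y : Finset V} (x : (v : {v : V // v ∉ Y}) → Fin (d v.1))
    (z₀ z : Cfg d Y) : embc d Y (mergeConfig d Y x z₀) z = mergeConfig d Y x z := by
  funext v
  unfold embc mergeConfig
  by_cases h : v ∈ Y
  · rw [dif_pos h, dif_pos h]
  · rw [dif_neg h, dif_neg h, dif_neg h]

lemma ptrace_zero_of_Ec (hd : ∀ v, 1 ≤ d v) {Y : Finset V} {K : Op V d}
    (h : Ec d Y K = 0) : ptrace d Y K = 0 := by
  obtain ⟨z₀⟩ := cfg_nonempty d hd Y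
  ext x y
  have h0 : Ec d Y K (mergeConfig d Y x z₀) (mergeConfig d Y y z₀) = 0 := by
    rw [h]
    rfl
  have hcond : ∀ v ∈ Y, mergeConfig d Y x z₀ v = mergeConfig d Y y z₀ v := by
    intro v hv
    unfold mergeConfig
    rw [dif_pos hv, dif_pos hv]
  rw [Ec_entry, if_pos hcond] at h0
  have hsum : ∑ z : Cfg d Y, K (embc d Y (mergeConfig d Y x z₀) z)
      (embc d Y (mergeConfig d Y y z₀) z) = 0 := by
    rcases mul_eq_zero.mp h0 with h1 | h1
    · exact absurd h1 (inv_ne_zero (Nc_ne_zero d hd Y))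
    · exact h1
  show ptrace d Y K x y = 0
  unfold ptrace
  rw [← hsum]
  apply Finset.sum_congr rfl
  intro z _
  rw [embc_mergeConfig d x z₀ z, embc_mergeConfig d y z₀ z]

lemma Ec_zero_of_ptrace {Y : Finset V} {K : Op V d}
    (h : ptrace d Y K = 0) : Ec d Y K = 0 := by
  ext x y
  rw [Ec_entry]
  split_ifs with hc
  · have hs : ∑ z : Cfg d Y, K (embc d Y x z) (embc d Y y z)
        = ptrace d Y K (fun v => x v.1) (fun v => y v.1) := rfl
    rw [hs, h]
    show (Nc d Y)⁻¹ * 0 = (0 : Op V d) x y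
    rw [mul_zero]
    rfl
  · rfl

/- ### Combinatorial lemmas -/

lemma neg_one_pow_sub {k m : ℕ} (h : k ≤ m) : (-1:ℂ)^(m-k) = (-1)^m * (-1)^k := by
  have h1 : (-1:ℂ)^(m-k) * (-1)^k = (-1)^m := by
    rw [← pow_add, Nat.sub_add_cancel h]
  rw [← h1, mul_assoc, ← pow_add, Even.neg_one_pow ⟨k, rfl⟩, mul_one]

lemma sum_powerset_neg_one (s : Finset V) :
    ∑ t ∈ s.powerset, (-1:ℂ)^t.card = if s = ∅ then 1 else 0 := by
  have h := Finset.sum_powerset_neg_one_pow_card (x := s)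
  have h2 : ((∑ t ∈ s.powerset, (-1:ℤ)^t.card : ℤ) : ℂ) = ∑ t ∈ s.powerset, (-1:ℂ)^t.card := by
    push_cast
    rfl
  rw [← h2, h]
  split_ifs <;> simp

lemma sum_filter_superset (S : Finset V) :
    ∑ X ∈ Finset.univ.filter (fun X : Finset V => S ⊆ X), (-1:ℂ)^((X \ S).card)
      = if S = Finset.univ then 1 else 0 := by
  have step : ∑ X ∈ Finset.univ.filter (fun X : Finset V => S ⊆ X), (-1:ℂ)^((X \ S).card)
      = ∑ U ∈ Sᶜ.powerset, (-1:ℂ)^U.card := by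
    refine Finset.sum_nbij' (fun X => X \ S) (fun U => U ∪ S) ?_ ?_ ?_ ?_ ?_
    · intro X hX
      rw [Finset.mem_powerset]
      intro v hv
      exact Finset.mem_compl.mpr (Finset.mem_sdiff.mp hv).2
    · intro U hU
      rw [Finset.mem_filter]
      exact ⟨Finset.mem_univ _, Finset.subset_union_right⟩
    · intro X hX
      exact Finset.sdiff_union_of_subset (Finset.mem_filter.mp hX).2
    · intro U hU
      have hdisj : Disjoint U S := Finset.disjoint_left.mpr
        (fun v hv => Finset.mem_compl.mp (Finset.mem_powerset.mp hU hv))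
      show (U ∪ S) \ S = U
      rw [Finset.union_sdiff_right, Finset.sdiff_eq_self_of_disjoint hdisj]
    · intro X hX
      rfl
  rw [step, sum_powerset_neg_one]
  simp [Finset.compl_eq_empty_iff]

lemma sum_powerset_between (X T : Finset V) (hXT : X ⊆ T) :
    ∑ S ∈ T.powerset.filter (fun S => X ⊆ S), (-1:ℂ)^((T \ S).card)
      = if X = T then 1 else 0 := by
  have step : ∑ S ∈ T.powerset.filter (fun S => X ⊆ S), (-1:ℂ)^((T \ S).card)
      = ∑ U ∈ (T \ X).powerset, (-1:ℂ)^((T \ X).card - U.card) := by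
    refine Finset.sum_nbij' (fun S => S \ X) (fun U => U ∪ X) ?_ ?_ ?_ ?_ ?_
    · intro S hS
      rw [Finset.mem_powerset]
      intro v hv
      rw [Finset.mem_sdiff] at hv ⊢
      exact ⟨(Finset.mem_powerset.mp (Finset.mem_filter.mp hS).1) hv.1, hv.2⟩
    · intro U hU
      rw [Finset.mem_filter, Finset.mem_powerset]
      refine ⟨Finset.union_subset ?_ hXT, Finset.subset_union_right⟩
      exact (Finset.mem_powerset.mp hU).trans Finset.sdiff_subset
    · intro S hS
      exact Finset.sdiff_union_of_subset (Finset.mem_filter.mp hS).2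
    · intro U hU
      have hdisj : Disjoint U X := Finset.disjoint_left.mpr
        (fun v hv => (Finset.mem_sdiff.mp (Finset.mem_powerset.mp hU hv)).2)
      show (U ∪ X) \ X = U
      rw [Finset.union_sdiff_right, Finset.sdiff_eq_self_of_disjoint hdisj]
    · intro S hS
      have h1 : X ⊆ S := (Finset.mem_filter.mp hS).2
      have h2 : S ⊆ T := Finset.mem_powerset.mp (Finset.mem_filter.mp hS).1
      have hset : T \ S = (T \ X) \ (S \ X) := by
        ext v
        simp only [Finset.mem_sdiff]
        constructor
        · intro ⟨hvT, hvS⟩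
          exact ⟨⟨hvT, fun hvX => hvS (h1 hvX)⟩, fun hv => hvS hv.1⟩
        · intro ⟨⟨hvT, hvX⟩, hv⟩
          refine ⟨hvT, fun hvS => hv ⟨hvS, hvX⟩⟩
      rw [hset, Finset.card_sdiff_of_subset (Finset.sdiff_subset_sdiff h2 (Finset.Subset.refl X))]
  rw [step]
  have step2 : ∑ U ∈ (T \ X).powerset, (-1:ℂ)^((T \ X).card - U.card)
      = (-1:ℂ)^((T \ X).card) * ∑ U ∈ (T \ X).powerset, (-1:ℂ)^U.card := by
    rw [Finset.mul_sum]
    apply Finset.sum_congr rfl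
    intro U hU
    exact neg_one_pow_sub (Finset.card_le_card (Finset.mem_powerset.mp hU))
  rw [step2, sum_powerset_neg_one]
  by_cases h : X = T
  · subst h
    simp
  · have hne : T \ X ≠ ∅ :=
      fun he => h (Finset.Subset.antisymm hXT (Finset.sdiff_eq_empty_iff_subset.mp he))
    rw [if_neg hne, if_neg h, mul_zero]

lemma sum_powerset_union_prod {M : Type*} [AddCommMonoid M] {A B W : Finset V}
    (hW : W = A ∪ B) (hAB : Disjoint A B) (f : Finset V → M) :
    ∑ S ∈ W.powerset, f S = ∑ P ∈ A.powerset ×ˢ B.powerset, f (P.1 ∪ P.2) := by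
  subst hW
  refine Finset.sum_nbij' (fun S => (S ∩ A, S ∩ B)) (fun P => P.1 ∪ P.2) ?_ ?_ ?_ ?_ ?_
  · intro S hS
    rw [Finset.mem_product]
    exact ⟨Finset.mem_powerset.mpr Finset.inter_subset_right,
      Finset.mem_powerset.mpr Finset.inter_subset_right⟩
  · intro P hP
    rw [Finset.mem_product] at hP
    exact Finset.mem_powerset.mpr (Finset.union_subset_union
      (Finset.mem_powerset.mp hP.1) (Finset.mem_powerset.mp hP.2))
  · intro S hS
    show S ∩ A ∪ S ∩ B = S
    rw [← Finset.inter_union_distrib_left]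
    exact Finset.inter_eq_left.mpr (Finset.mem_powerset.mp hS)
  · intro P hP
    rw [Finset.mem_product] at hP
    have h1 : P.1 ⊆ A := Finset.mem_powerset.mp hP.1
    have h2 : P.2 ⊆ B := Finset.mem_powerset.mp hP.2
    have e1 : (P.1 ∪ P.2) ∩ A = P.1 := by
      rw [Finset.union_inter_distrib_right, Finset.inter_eq_left.mpr h1,
        Finset.disjoint_iff_inter_eq_empty.mp (Finset.disjoint_left.mpr fun v hv hvA =>
          Finset.disjoint_right.mp hAB (h2 hv) hvA), Finset.union_empty]
    have e2 : (P.1 ∪ P.2) ∩ B = P.2 := by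
      rw [Finset.union_inter_distrib_right, Finset.inter_eq_left.mpr h2,
        Finset.disjoint_iff_inter_eq_empty.mp (Finset.disjoint_left.mpr fun v hv hvB =>
          Finset.disjoint_left.mp hAB (h1 hv) hvB), Finset.empty_union]
    show ((P.1 ∪ P.2) ∩ A, (P.1 ∪ P.2) ∩ B) = P
    rw [e1, e2]
  · intro S hS
    have h : S ∩ A ∪ S ∩ B = S := by
      rw [← Finset.inter_union_distrib_left]
      exact Finset.inter_eq_left.mpr (Finset.mem_powerset.mp hS)
    show f S = f (S ∩ A ∪ S ∩ B)
    rw [h]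

/- ### The cumulant decomposition -/

def Kdef (H : Op V d) (X : Finset V) : Op V d :=
  ∑ S ∈ X.powerset, (-1:ℂ)^((X \ S).card) • Ec d Sᶜ H

lemma genuine_Kdef (hd : ∀ v, 1 ≤ d v) (H : Op V d) (X : Finset V) :
    Genuine d X (Kdef d H X) := by
  constructor
  · apply supportedOn_sum
    intro S hS
    exact supportedOn_smul d _ (supportedOn_mono d (Finset.mem_powerset.mp hS)
      (supportedOn_Ec d S H))
  · intro Y hY hYX
    apply ptrace_zero_of_Ec d hd
    have hX : X = (X \ Y) ∪ Y := (Finset.sdiff_union_of_subset hYX).symm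
    calc Ec d Y (Kdef d H X)
        = ∑ S ∈ X.powerset, Ec d Y ((-1:ℂ)^((X \ S).card) • Ec d Sᶜ H) := by
          rw [Kdef, Ec_sum]
      _ = ∑ S ∈ X.powerset, (-1:ℂ)^((X \ S).card) • Ec d (Sᶜ ∪ Y) H := by
          apply Finset.sum_congr rfl
          intro S _
          rw [Ec_smul, Ec_comp d hd]
      _ = ∑ P ∈ (X \ Y).powerset ×ˢ Y.powerset,
            (-1:ℂ)^((X \ (P.1 ∪ P.2)).card) • Ec d ((P.1 ∪ P.2)ᶜ ∪ Y) H :=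
          sum_powerset_union_prod hX Finset.sdiff_disjoint _
      _ = ∑ A ∈ (X \ Y).powerset, ∑ B ∈ Y.powerset,
            (-1:ℂ)^((X \ (A ∪ B)).card) • Ec d ((A ∪ B)ᶜ ∪ Y) H :=
          Finset.sum_product _ _ _
      _ = 0 := by
          apply Finset.sum_eq_zero
          intro A hA
          have hAX : A ⊆ X \ Y := Finset.mem_powerset.mp hA
          have hBsub : ∀ B ∈ Y.powerset, B ⊆ X \ A := by
            intro B hB v hv
            have hvY : v ∈ Y := Finset.mem_powerset.mp hB hv
            refine Finset.mem_sdiff.mpr ⟨hYX hvY, fun hvA => ?_⟩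
            exact (Finset.mem_sdiff.mp (hAX hvA)).2 hvY
          have hset : ∀ B ∈ Y.powerset, (A ∪ B)ᶜ ∪ Y = Aᶜ ∪ Y := by
            intro B hB
            have hBY : B ⊆ Y := Finset.mem_powerset.mp hB
            have hBu : Bᶜ ∪ Y = Finset.univ := by
              apply Finset.eq_univ_of_forall
              intro v
              by_cases hv : v ∈ Y
              · exact Finset.mem_union_right _ hv
              · exact Finset.mem_union_left _ (Finset.mem_compl.mpr fun hvB => hv (hBY hvB))
            rw [Finset.compl_union, Finset.inter_union_distrib_right, hBu, Finset.inter_univ]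
          have hcard : ∀ B ∈ Y.powerset, (X \ (A ∪ B)).card = (X \ A).card - B.card := by
            intro B hB
            have hsd : X \ (A ∪ B) = (X \ A) \ B := by
              ext v
              simp only [Finset.mem_sdiff, Finset.mem_union]
              tauto
            rw [hsd, Finset.card_sdiff_of_subset (hBsub B hB)]
          calc ∑ B ∈ Y.powerset, (-1:ℂ)^((X \ (A ∪ B)).card) • Ec d ((A ∪ B)ᶜ ∪ Y) H
              = ∑ B ∈ Y.powerset,
                  (-1:ℂ)^(B.card) • ((-1:ℂ)^((X \ A).card) • Ec d (Aᶜ ∪ Y) H) := by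
                apply Finset.sum_congr rfl
                intro B hB
                rw [hset B hB, hcard B hB,
                  neg_one_pow_sub (Finset.card_le_card (hBsub B hB)), mul_comm, ← smul_smul]
            _ = (∑ B ∈ Y.powerset, (-1:ℂ)^(B.card)) •
                  ((-1:ℂ)^((X \ A).card) • Ec d (Aᶜ ∪ Y) H) :=
                Finset.sum_smul.symm
            _ = 0 := by
                rw [sum_powerset_neg_one, if_neg (Finset.nonempty_iff_ne_empty.mp hY),
                  zero_smul]

lemma sum_Kdef (hd : ∀ v, 1 ≤ d v) (H : Op V d) :
    ∑ X : Finset V, Kdef d H X = H := by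
  have hpow : ∀ X : Finset V, X.powerset = Finset.univ.filter (fun S => S ⊆ X) := by
    intro X
    ext S
    simp [Finset.mem_powerset]
  calc ∑ X : Finset V, Kdef d H X
      = ∑ X : Finset V, ∑ S : Finset V,
          (if S ⊆ X then (-1:ℂ)^((X \ S).card) • Ec d Sᶜ H else 0) := by
        apply Finset.sum_congr rfl
        intro X _
        rw [Kdef, hpow X, Finset.sum_filter]
    _ = ∑ S : Finset V, ∑ X : Finset V,
          (if S ⊆ X then (-1:ℂ)^((X \ S).card) • Ec d Sᶜ H else 0) := Finset.sum_comm
    _ = ∑ S : Finset V, (∑ X ∈ Finset.univ.filter (fun X : Finset V => S ⊆ X),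
          (-1:ℂ)^((X \ S).card)) • Ec d Sᶜ H := by
        apply Finset.sum_congr rfl
        intro S _
        conv_rhs => rw [Finset.sum_smul, Finset.sum_filter]
    _ = ∑ S : Finset V, (if S = Finset.univ then (1:ℂ) else 0) • Ec d Sᶜ H := by
        apply Finset.sum_congr rfl
        intro S _
        rw [sum_filter_superset S]
    _ = ∑ S : Finset V, (if S = Finset.univ then Ec d Sᶜ H else 0) := by
        apply Finset.sum_congr rfl
        intro S _
        split_ifs with h
        · rw [one_smul]
        · rw [zero_smul]
    _ = H := by
        rw [Finset.sum_ite_eq' Finset.univ Finset.univ (fun S : Finset V => Ec d Sᶜ H),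
          if_pos (Finset.mem_univ _), Finset.compl_univ, Ec_empty d hd]

lemma Kdef_empty (H : Op V d) : ∃ c : ℂ, Kdef d H ∅ = c • (1 : Op V d) := by
  refine ⟨(Nc d Finset.univ)⁻¹ * ∑ z : Cfg d Finset.univ,
    H (fun v => z ⟨v, Finset.mem_univ v⟩) (fun v => z ⟨v, Finset.mem_univ v⟩), ?_⟩
  rw [Kdef, Finset.powerset_empty, Finset.sum_singleton, Finset.sdiff_empty,
    Finset.card_empty, pow_zero, one_smul, Finset.compl_empty]
  have hemb : ∀ (u : (v : V) → Fin (d v)) (z : Cfg d Finset.univ),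
      embc d Finset.univ u z = fun v => z ⟨v, Finset.mem_univ v⟩ := by
    intro u z
    funext v
    unfold embc
    rw [dif_pos (Finset.mem_univ v)]
  ext x y
  rw [Ec_entry, Matrix.smul_apply, Matrix.one_apply, smul_eq_mul]
  by_cases hxy : x = y
  · rw [if_pos (fun v _ => by rw [hxy]), if_pos hxy, mul_one]
    congr 1
    apply Finset.sum_congr rfl
    intro z _
    rw [hemb x z, hemb y z]
  · rw [if_neg (fun hall => hxy (funext fun v => hall v (Finset.mem_univ v))),
      if_neg hxy, mul_zero]

lemma Ec_K_of_decomp (hd : ∀ v, 1 ≤ d v) {H : Op V d} {K : Finset V → Op V d}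
    (hK : ∀ X, Genuine d X (K X)) (hH : H = ∑ X : Finset V, K X) (S : Finset V) :
    Ec d Sᶜ H = ∑ X : Finset V, (if X ⊆ S then K X else 0) := by
  rw [hH, Ec_sum]
  apply Finset.sum_congr rfl
  intro X _
  by_cases hXS : X ⊆ S
  · rw [if_pos hXS]
    exact Ec_of_supportedOn d hd (supportedOn_mono d hXS (hK X).1)
  · rw [if_neg hXS]
    have hne : (X \ S).Nonempty := by
      rw [Finset.sdiff_nonempty]
      exact hXS
    have h0 : Ec d (X \ S) (K X) = 0 :=
      Ec_zero_of_ptrace d ((hK X).2 _ hne Finset.sdiff_subset)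
    have hcomp := Ec_comp d hd (X \ S) Sᶜ (K X)
    rw [h0, Ec_zero, Finset.union_eq_right.mpr
      (fun v hv => Finset.mem_compl.mpr (Finset.mem_sdiff.mp hv).2)] at hcomp
    exact hcomp.symm

lemma moebius (hd : ∀ v, 1 ≤ d v) {H : Op V d} {K : Finset V → Op V d}
    (hK : ∀ X, Genuine d X (K X)) (hH : H = ∑ X : Finset V, K X) (T : Finset V) :
    K T = Kdef d H T := by
  have hpow : T.powerset = Finset.univ.filter (fun S : Finset V => S ⊆ T) := by
    ext S
    simp [Finset.mem_powerset]
  have hps : ∀ X : Finset V, T.powerset.filter (fun S => X ⊆ S)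
      = Finset.univ.filter (fun S : Finset V => S ⊆ T ∧ X ⊆ S) := by
    intro X
    ext S
    simp [Finset.mem_powerset]
  calc K T
      = ∑ X : Finset V, (if X = T then K X else 0) := by
        rw [Finset.sum_ite_eq' Finset.univ T K, if_pos (Finset.mem_univ T)]
    _ = ∑ X : Finset V, (if X ⊆ T then (if X = T then (1:ℂ) else 0) • K X else 0) := by
        apply Finset.sum_congr rfl
        intro X _
        by_cases h : X = T
        · subst h
          rw [if_pos rfl, if_pos (Finset.Subset.refl X), if_pos rfl, one_smul]
        · rw [if_neg h]
          by_cases h2 : X ⊆ T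
          · rw [if_pos h2, if_neg h, zero_smul]
          · rw [if_neg h2]
    _ = ∑ X : Finset V, (if X ⊆ T then
          (∑ S ∈ T.powerset.filter (fun S => X ⊆ S), (-1:ℂ)^((T \ S).card)) • K X
          else 0) := by
        apply Finset.sum_congr rfl
        intro X _
        by_cases h2 : X ⊆ T
        · rw [if_pos h2, if_pos h2, sum_powerset_between X T h2]
        · rw [if_neg h2, if_neg h2]
    _ = ∑ X : Finset V, ∑ S : Finset V,
          (if S ⊆ T then (if X ⊆ S then (-1:ℂ)^((T \ S).card) • K X else 0) else 0) := by
        apply Finset.sum_congr rfl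
        intro X _
        have e1 : (∑ S ∈ T.powerset.filter (fun S => X ⊆ S), (-1:ℂ)^((T \ S).card)) • K X
            = ∑ S : Finset V,
              (if S ⊆ T then (if X ⊆ S then (-1:ℂ)^((T \ S).card) • K X else 0) else 0) := by
          rw [Finset.sum_smul, hps X, Finset.sum_filter]
          apply Finset.sum_congr rfl
          intro S _
          by_cases hST : S ⊆ T <;> by_cases hXS : X ⊆ S <;> simp [hST, hXS]
        by_cases h2 : X ⊆ T
        · rw [if_pos h2, e1]
        · rw [if_neg h2]
          symm
          apply Finset.sum_eq_zero
          intro S _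
          by_cases hST : S ⊆ T
          · rw [if_pos hST, if_neg (fun hXS => h2 (hXS.trans hST))]
          · rw [if_neg hST]
    _ = ∑ S : Finset V, ∑ X : Finset V,
          (if S ⊆ T then (if X ⊆ S then (-1:ℂ)^((T \ S).card) • K X else 0) else 0) :=
        Finset.sum_comm
    _ = ∑ S ∈ T.powerset, (-1:ℂ)^((T \ S).card) • Ec d Sᶜ H := by
        rw [hpow, Finset.sum_filter]
        apply Finset.sum_congr rfl
        intro S _
        by_cases hST : S ⊆ T
        · simp only [if_pos hST]
          rw [Ec_K_of_decomp d hd hK hH S, Finset.smul_sum]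
          apply Finset.sum_congr rfl
          intro X _
          by_cases hXS : X ⊆ S <;> simp [hXS]
        · simp only [if_neg hST]
          exact Finset.sum_const_zero
    _ = Kdef d H T := rfl

end CumulantProof


/-- existence and uniqueness of the cumulant decomposition of an operator
into a sum of genuine operators, the `∅` term being a scalar multiple of the identity. -/
theorem cumulant_decomposition_exists_unique {V : Type} [Fintype V] [DecidableEq V]
    (d : V → ℕ) (hd : ∀ v, 1 ≤ d v) (H : Op V d) :
    (∃ K : Finset V → Op V d, (∀ X : Finset V, Genuine d X (K X)) ∧
      (∃ c : ℂ, K ∅ = c • (1 : Op V d)) ∧ H = ∑ X : Finset V, K X) ∧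
    (∀ K K' : Finset V → Op V d,
      (∀ X : Finset V, Genuine d X (K X)) → (∀ X : Finset V, Genuine d X (K' X)) →
      H = ∑ X : Finset V, K X → H = ∑ X : Finset V, K' X →
      ∀ X : Finset V, K X = K' X) := by
  constructor
  · exact ⟨CumulantProof.Kdef d H, fun X => CumulantProof.genuine_Kdef d hd H X,
      CumulantProof.Kdef_empty d H, (CumulantProof.sum_Kdef d hd H).symm⟩
  · intro K K' hK hK' hHK hHK' X
    rw [CumulantProof.moebius d hd hK hHK X, CumulantProof.moebius d hd hK' hHK' X]

end
end
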